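/- arXiv:1811.11134 — 9 statements merged into one kernel-verified Lean document; each statement's English description precedes it below -/
import Mathlib

section
/- Let F_X be the free group on a finite set X with |X| = d > 1 and α = 2d−1. Then there exist positive constants c and C such that for all n, c·(n+1)·α^n ≤ |B_n(F_X²)| ≤ C·(n+1)·α^n, where B_n(F_X²) = {(ω₁,ω₂) ∈ F_X × F_X : |ω₁| + |ω₂| ≤ n}. -/
open Filter Pointwise

/-- The ball of radius `n` in the free group on `X`, with respect to word length. -/
def ball (X : Type) [DecidableEq X] (n : ℕ) : Set (FreeGroup X) :=
  {w | FreeGroup.norm w ≤ n}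

/-- The sphere of radius `n` in the free group on `X`. -/
def sphere (X : Type) [DecidableEq X] (n : ℕ) : Set (FreeGroup X) :=
  {w | FreeGroup.norm w = n}

/-- The ball of radius `n` in `F_X × F_X` for the length `|(w₁,w₂)| = |w₁| + |w₂|`. -/
def ball2 (X : Type) [DecidableEq X] (n : ℕ) : Set (FreeGroup X × FreeGroup X) :=
  {p | FreeGroup.norm p.1 + FreeGroup.norm p.2 ≤ n}

/-- `(max_{ω} |S ∩ ωB_n|) / |B_n|`. -/
noncomputable def ubSeq (X : Type) [DecidableEq X] (S : Set (FreeGroup X)) (n : ℕ) : ℝ :=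
  ((⨆ ω : FreeGroup X, (S ∩ ω • ball X n).ncard : ℕ) : ℝ) / ((ball X n).ncard : ℝ)

/-- `(min_{ω} |S ∩ ωB_n|) / |B_n|`. -/
noncomputable def lbSeq (X : Type) [DecidableEq X] (S : Set (FreeGroup X)) (n : ℕ) : ℝ :=
  ((⨅ ω : FreeGroup X, (S ∩ ω • ball X n).ncard : ℕ) : ℝ) / ((ball X n).ncard : ℝ)

/-- Upper Banach density. -/
noncomputable def ubDensity (X : Type) [DecidableEq X] (S : Set (FreeGroup X)) : ℝ :=
  limsup (ubSeq X S) atTop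

/-- Lower Banach density. -/
noncomputable def lbDensity (X : Type) [DecidableEq X] (S : Set (FreeGroup X)) : ℝ :=
  liminf (lbSeq X S) atTop

/-- A set is Upper Banach generic if its upper Banach density is 1. -/
def UBGeneric (X : Type) [DecidableEq X] (S : Set (FreeGroup X)) : Prop :=
  ubDensity X S = 1

/-- A set is Lower Banach generic if its lower Banach density is 1. -/
def LBGeneric (X : Type) [DecidableEq X] (S : Set (FreeGroup X)) : Prop :=
  lbDensity X S = 1

set_option linter.unusedSectionVars false
set_option maxHeartbeats 800000

namespace BallAux
variable {X : Type} [Fintype X] [DecidableEq X]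

def Cond : (X × Bool) → (X × Bool) → Prop := fun a b => ¬(a.1 = b.1 ∧ a.2 = !b.2)

lemma reduce_eq_self {l : List (X × Bool)} (h : l.Chain' Cond) :
    FreeGroup.reduce l = l := by
  induction l with
  | nil => rfl
  | cons x l ih =>
    rw [FreeGroup.reduce.cons, ih h.tail]
    cases l with
    | nil => rfl
    | cons y t =>
      have hc : Cond x y := (List.isChain_cons_cons.mp h).1
      simp only [List.casesOn]
      rw [if_neg hc]

lemma chain'_reduce (l : List (X × Bool)) : (FreeGroup.reduce l).Chain' Cond := by
  induction l with
  | nil => simp [List.Chain']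
  | cons x l ih =>
    rw [FreeGroup.reduce.cons]
    cases h : FreeGroup.reduce l with
    | nil => simp [List.Chain']
    | cons y t =>
      rw [h] at ih
      by_cases hc : x.1 = y.1 ∧ x.2 = !y.2
      · simpa [hc, List.Chain'] using ih.tail
      · simpa [hc, List.Chain'] using List.isChain_cons_cons.mpr ⟨hc, ih⟩

lemma chain'_toWord (w : FreeGroup X) : w.toWord.Chain' Cond := by
  rw [← FreeGroup.reduce_toWord]; exact chain'_reduce _

lemma toWord_mk_eq {l : List (X × Bool)} (h : l.Chain' Cond) :
    (FreeGroup.mk l).toWord = l := by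
  rw [FreeGroup.toWord_mk, reduce_eq_self h]

lemma norm_mk_eq {l : List (X × Bool)} (h : l.Chain' Cond) :
    (FreeGroup.mk l).norm = l.length := by
  rw [FreeGroup.norm, toWord_mk_eq h]

/-- Allowed extensions of a reduced word. -/
def ext (l : List (X × Bool)) : Finset (X × Bool) :=
  match l.getLast? with
  | none => Finset.univ
  | some b => Finset.univ.erase (b.1, !b.2)

lemma mem_ext {l : List (X × Bool)} {a : X × Bool} :
    a ∈ ext l ↔ ∀ b ∈ l.getLast?, Cond b a := by
  unfold ext
  cases h : l.getLast? with
  | none => simp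
  | some b =>
    simp only [Finset.mem_erase, Finset.mem_univ, and_true, Option.mem_some_iff,
      forall_eq', Option.mem_def, Option.some.injEq, forall_eq]
    constructor
    · rintro hne ⟨h1, h2⟩
      exact hne (by cases a; cases b; simp_all)
    · intro hc hne
      subst hne; exact hc ⟨rfl, by simp⟩

lemma card_ext_nil : (ext ([] : List (X × Bool))).card = Fintype.card X * 2 := by
  simp [ext]

lemma card_ext_ne {l : List (X × Bool)} (h : l ≠ []) :
    (ext l).card = Fintype.card X * 2 - 1 := by
  obtain ⟨b, hb⟩ := Option.isSome_iff_exists.mp (List.getLast?_isSome.mpr h)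
  simp only [ext, hb]
  rw [Finset.card_erase_of_mem (Finset.mem_univ _)]
  simp

/-- Finset of reduced words of length `n`. -/
def LW (X : Type) [Fintype X] [DecidableEq X] : ℕ → Finset (List (X × Bool))
  | 0 => {[]}
  | n + 1 => (LW X n).biUnion fun l => (ext l).image fun a => l ++ [a]

lemma mem_LW {n : ℕ} {l : List (X × Bool)} :
    l ∈ LW X n ↔ l.length = n ∧ l.Chain' Cond := by
  induction n generalizing l with
  | zero =>
    simp only [LW, Finset.mem_singleton, List.length_eq_zero_iff]
    exact ⟨fun h => ⟨h, h ▸ List.isChain_nil⟩, fun h => h.1⟩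
  | succ n ih =>
    simp only [LW, Finset.mem_biUnion, Finset.mem_image]
    constructor
    · rintro ⟨l', hl', a, ha, rfl⟩
      obtain ⟨hlen, hch⟩ := ih.mp hl'
      refine ⟨by simp [hlen], List.isChain_append.mpr ⟨hch, List.isChain_singleton a, ?_⟩⟩
      intro x hx y hy
      simp only [List.head?_cons, Option.mem_some_iff] at hy
      subst hy
      exact mem_ext.mp ha x hx
    · rintro ⟨hlen, hch⟩
      have hne : l ≠ [] := by rintro rfl; simp at hlen
      refine ⟨l.dropLast, ih.mpr ⟨by simp [hlen], ?_⟩, l.getLast hne, ?_,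
        List.dropLast_append_getLast hne⟩
      · have := List.isChain_append.mp ((List.dropLast_append_getLast hne) ▸ hch)
        exact this.1
      · rw [mem_ext]
        have := (List.isChain_append.mp ((List.dropLast_append_getLast hne) ▸ hch)).2.2
        intro b hb
        exact this b hb _ rfl

lemma card_LW_zero : (LW X 0).card = 1 := rfl

lemma card_LW_succ (n : ℕ) :
    (LW X (n + 1)).card = ∑ l ∈ LW X n, (ext l).card := by
  rw [LW, Finset.card_biUnion]
  · exact Finset.sum_congr rfl fun l _ =>
      Finset.card_image_of_injective _ (fun a b h => by simpa using h)
  · intro x hx y hy hxy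
    rw [Function.onFun, Finset.disjoint_left]
    rintro z hz hz'
    simp only [Finset.mem_image] at hz hz'
    obtain ⟨a, _, rfl⟩ := hz
    obtain ⟨b, _, hz'⟩ := hz'
    have hxl : x.length = n := (mem_LW.mp hx).1
    have hyl : y.length = n := (mem_LW.mp hy).1
    exact hxy (List.append_inj_left hz'.symm (by rw [hxl, hyl]))

lemma card_LW (n : ℕ) :
    (LW X (n + 1)).card = (Fintype.card X * 2) * (Fintype.card X * 2 - 1) ^ n := by
  induction n with
  | zero =>
    rw [card_LW_succ]
    simp [LW, card_ext_nil]
  | succ n ih =>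
    rw [card_LW_succ, Finset.sum_congr rfl (fun l hl => card_ext_ne (X := X) ?_),
      Finset.sum_const, smul_eq_mul, ih]
    · ring
    · intro h
      subst h
      simpa using (mem_LW.mp hl).1

/-- The sphere of radius `n` as a finset. -/
def SF (X : Type) [Fintype X] [DecidableEq X] (n : ℕ) : Finset (FreeGroup X) :=
  (LW X n).image FreeGroup.mk

lemma mem_SF {n : ℕ} {w : FreeGroup X} : w ∈ SF X n ↔ FreeGroup.norm w = n := by
  simp only [SF, Finset.mem_image]
  constructor
  · rintro ⟨l, hl, rfl⟩
    obtain ⟨hlen, hch⟩ := mem_LW.mp hl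
    rw [norm_mk_eq hch, hlen]
  · intro h
    exact ⟨w.toWord, mem_LW.mpr ⟨h, chain'_toWord w⟩, FreeGroup.mk_toWord⟩

lemma card_SF (n : ℕ) : (SF X n).card = (LW X n).card := by
  refine Finset.card_image_of_injOn fun l₁ h₁ l₂ h₂ h => ?_
  have := FreeGroup.reduce.sound h
  rwa [reduce_eq_self (mem_LW.mp h₁).2, reduce_eq_self (mem_LW.mp h₂).2] at this

section Bounds
variable (hd1 : 1 < Fintype.card X)

lemma card_SF_lower (n : ℕ) : (2 * Fintype.card X - 1) ^ n ≤ (SF X n).card := by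
  rw [card_SF]
  have e : 2 * Fintype.card X - 1 = Fintype.card X * 2 - 1 := by omega
  cases n with
  | zero => rw [card_LW_zero]; exact le_of_eq (pow_zero _)
  | succ n =>
    rw [card_LW, e]
    calc (Fintype.card X * 2 - 1) ^ (n + 1)
        = (Fintype.card X * 2 - 1) * (Fintype.card X * 2 - 1) ^ n := by rw [pow_succ']
      _ ≤ (Fintype.card X * 2) * (Fintype.card X * 2 - 1) ^ n :=
          Nat.mul_le_mul_right _ (by omega)

lemma card_SF_upper (n : ℕ) : (SF X n).card ≤ 2 * (2 * Fintype.card X - 1) ^ n := by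
  rw [card_SF]
  have e : 2 * Fintype.card X - 1 = Fintype.card X * 2 - 1 := by omega
  cases n with
  | zero => rw [card_LW_zero]; simp
  | succ n =>
    rw [card_LW, e]
    calc Fintype.card X * 2 * (Fintype.card X * 2 - 1) ^ n
        ≤ (2 * (Fintype.card X * 2 - 1)) * (Fintype.card X * 2 - 1) ^ n :=
          Nat.mul_le_mul_right _ (by omega)
      _ = 2 * (Fintype.card X * 2 - 1) ^ (n + 1) := by rw [pow_succ']; ring

end Bounds

lemma geom_bound {α : ℕ} (h3 : 3 ≤ α) :
    ∀ n, 2 * ∑ j ∈ Finset.range (n + 1), α ^ j ≤ 3 * α ^ n := by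
  intro n
  induction n with
  | zero => simp
  | succ n ih =>
    rw [Finset.sum_range_succ, mul_add]
    have h1 : 3 * α ^ n ≤ α ^ (n + 1) := by
      calc 3 * α ^ n ≤ α * α ^ n := Nat.mul_le_mul_right _ h3
        _ = α ^ (n + 1) := by rw [pow_succ']
    calc 2 * ∑ j ∈ Finset.range (n + 1), α ^ j + 2 * α ^ (n + 1)
        ≤ 3 * α ^ n + 2 * α ^ (n + 1) := by omega
      _ ≤ α ^ (n + 1) + 2 * α ^ (n + 1) := by omega
      _ = 3 * α ^ (n + 1) := by ring

/-- ball2 as a finset. -/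
def BF2 (X : Type) [Fintype X] [DecidableEq X] (n : ℕ) :
    Finset (FreeGroup X × FreeGroup X) :=
  (Finset.range (n + 1)).biUnion fun i =>
    (Finset.range (n + 1 - i)).biUnion fun j => SF X i ×ˢ SF X j

lemma coe_BF2 (n : ℕ) : (BF2 X n : Set (FreeGroup X × FreeGroup X)) = ball2 X n := by
  ext p
  simp only [BF2, Finset.coe_biUnion, Set.mem_iUnion, Finset.mem_coe, Finset.mem_biUnion,
    Finset.mem_range, Finset.mem_product, mem_SF, ball2, Set.mem_setOf_eq]
  constructor
  · rintro ⟨i, hi, j, hj, h1, h2⟩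
    omega
  · intro h
    exact ⟨FreeGroup.norm p.1, by omega, FreeGroup.norm p.2, by omega, rfl, rfl⟩

lemma card_BF2_upper (hd1 : 1 < Fintype.card X) (n : ℕ) :
    (BF2 X n).card ≤ 6 * (n + 1) * (2 * Fintype.card X - 1) ^ n := by
  set α := 2 * Fintype.card X - 1 with hα
  have h3 : 3 ≤ α := by omega
  have h1 : (BF2 X n).card ≤
      ∑ i ∈ Finset.range (n + 1), ∑ j ∈ Finset.range (n + 1 - i),
        (SF X i).card * (SF X j).card := by
    refine le_trans Finset.card_biUnion_le (Finset.sum_le_sum fun i _ => ?_)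
    refine le_trans Finset.card_biUnion_le (Finset.sum_le_sum fun j _ => ?_)
    exact le_of_eq (Finset.card_product _ _)
  have h2 : ∀ i ∈ Finset.range (n + 1),
      2 * ∑ j ∈ Finset.range (n + 1 - i), (SF X i).card * (SF X j).card
        ≤ 12 * α ^ n := by
    intro i hi
    rw [Finset.mem_range] at hi
    have key : ∑ j ∈ Finset.range (n + 1 - i), (SF X i).card * (SF X j).card
        ≤ (2 * α ^ i) * ∑ j ∈ Finset.range (n + 1 - i), 2 * α ^ j := by
      rw [Finset.mul_sum]
      exact Finset.sum_le_sum fun j _ => Nat.mul_le_mul (card_SF_upper i) (card_SF_upper j)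
    have hn : n + 1 - i = (n - i) + 1 := by omega
    have hg := geom_bound h3 (n - i)
    calc 2 * ∑ j ∈ Finset.range (n + 1 - i), (SF X i).card * (SF X j).card
        ≤ 2 * ((2 * α ^ i) * ∑ j ∈ Finset.range (n + 1 - i), 2 * α ^ j) := by omega
      _ = (2 * α ^ i) * (2 * (2 * ∑ j ∈ Finset.range ((n - i) + 1), α ^ j)) := by
          rw [hn, ← Finset.mul_sum]; ring
      _ ≤ (2 * α ^ i) * (2 * (3 * α ^ (n - i))) := by
          exact Nat.mul_le_mul_left _ (Nat.mul_le_mul_left _ hg)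
      _ = 12 * (α ^ i * α ^ (n - i)) := by ring
      _ = 12 * α ^ n := by rw [← pow_add]; congr 2; omega
  have h4 : 2 * (BF2 X n).card ≤ (n + 1) * (12 * α ^ n) := by
    calc 2 * (BF2 X n).card
        ≤ 2 * ∑ i ∈ Finset.range (n + 1), ∑ j ∈ Finset.range (n + 1 - i),
            (SF X i).card * (SF X j).card := by omega
      _ = ∑ i ∈ Finset.range (n + 1), 2 * ∑ j ∈ Finset.range (n + 1 - i),
            (SF X i).card * (SF X j).card := by rw [Finset.mul_sum]
      _ ≤ ∑ i ∈ Finset.range (n + 1), 12 * α ^ n := Finset.sum_le_sum h2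
      _ = (n + 1) * (12 * α ^ n) := by rw [Finset.sum_const, Finset.card_range, smul_eq_mul]
  have : (n + 1) * (12 * α ^ n) = 2 * (6 * (n + 1) * α ^ n) := by ring
  omega

lemma card_BF2_lower (hd1 : 1 < Fintype.card X) (n : ℕ) :
    (n + 1) * (2 * Fintype.card X - 1) ^ n ≤ (BF2 X n).card := by
  set α := 2 * Fintype.card X - 1 with hα
  set T : Finset (FreeGroup X × FreeGroup X) :=
    (Finset.range (n + 1)).biUnion fun k => SF X k ×ˢ SF X (n - k) with hT
  have hsub : T ⊆ BF2 X n := by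
    intro p hp
    simp only [hT, Finset.mem_biUnion, Finset.mem_range, Finset.mem_product] at hp
    obtain ⟨k, hk, h1, h2⟩ := hp
    simp only [BF2, Finset.mem_biUnion, Finset.mem_range, Finset.mem_product]
    exact ⟨k, hk, n - k, by omega, h1, h2⟩
  have hcard : T.card = ∑ k ∈ Finset.range (n + 1), (SF X k).card * (SF X (n - k)).card := by
    rw [hT, Finset.card_biUnion]
    · exact Finset.sum_congr rfl fun k _ => Finset.card_product _ _
    · intro x hx y hy hxy
      rw [Function.onFun, Finset.disjoint_left]
      rintro p hp hp'
      simp only [Finset.mem_product, mem_SF] at hp hp'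
      exact hxy (hp.1 ▸ hp'.1)
  have hterm : ∀ k ∈ Finset.range (n + 1),
      α ^ n ≤ (SF X k).card * (SF X (n - k)).card := by
    intro k hk
    rw [Finset.mem_range] at hk
    calc α ^ n = α ^ k * α ^ (n - k) := by rw [← pow_add]; congr 1; omega
      _ ≤ (SF X k).card * (SF X (n - k)).card :=
          Nat.mul_le_mul (card_SF_lower _) (card_SF_lower _)
  calc (n + 1) * α ^ n = ∑ _k ∈ Finset.range (n + 1), α ^ n := by
        rw [Finset.sum_const, Finset.card_range, smul_eq_mul]
    _ ≤ ∑ k ∈ Finset.range (n + 1), (SF X k).card * (SF X (n - k)).card :=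
        Finset.sum_le_sum hterm
    _ = T.card := hcard.symm
    _ ≤ (BF2 X n).card := Finset.card_le_card hsub

end BallAux


/-- For `|X| = d > 1` and `α = 2d − 1`, there exist positive constants `c, C` with
`c·(n+1)·α^n ≤ |B_n(F_X²)| ≤ C·(n+1)·α^n` for all `n`. -/
theorem stmt_2 (X : Type) [Fintype X] [DecidableEq X] (d α : ℕ)
    (hd : Fintype.card X = d) (hd1 : 1 < d) (hα : α = 2 * d - 1) :
    ∃ c C : ℝ, 0 < c ∧ 0 < C ∧ ∀ n : ℕ,
      c * (n + 1) * (α : ℝ) ^ n ≤ ((ball2 X n).ncard : ℝ) ∧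
        ((ball2 X n).ncard : ℝ) ≤ C * (n + 1) * (α : ℝ) ^ n := by
  subst hd hα
  refine ⟨1, 6, one_pos, by norm_num, fun n => ?_⟩
  have hball : (ball2 X n).ncard = (BallAux.BF2 X n).card := by
    rw [← BallAux.coe_BF2, Set.ncard_coe_finset]
  have hlo := BallAux.card_BF2_lower hd1 n
  have hhi := BallAux.card_BF2_upper hd1 n
  constructor
  · rw [hball, one_mul]
    exact_mod_cast hlo
  · rw [hball]
    exact_mod_cast hhi
end

section
/- A subset S ⊆ F_X of a finitely generated free group (with |X| ≥ 1) is Upper Banach generic if and only if for every n ∈ ℕ there exists ω_n ∈ F_X such that ω_n·B_n ⊆ S. -/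
open Filter Pointwise

section Aux
set_option linter.unusedSectionVars false
variable {X : Type} [Fintype X] [DecidableEq X]

lemma ball_finite (n : ℕ) : (ball X n).Finite := by
  have : ball X n ⊆ FreeGroup.mk '' {l : List (X × Bool) | l.length ≤ n} := by
    intro w hw
    exact ⟨w.toWord, hw, FreeGroup.mk_toWord⟩
  exact (Set.Finite.image _ (List.finite_length_le _ n)).subset this

lemma one_mem_ball (n : ℕ) : (1 : FreeGroup X) ∈ ball X n := by
  simp [ball]

lemma ball_nonempty (n : ℕ) : (ball X n).Nonempty := ⟨1, one_mem_ball n⟩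

lemma ball_ncard_pos (n : ℕ) : 0 < (ball X n).ncard :=
  (ball_nonempty (X:=X) n).ncard_pos (ball_finite n)

lemma inter_ncard_le (S : Set (FreeGroup X)) (ω : FreeGroup X) (n : ℕ) :
    (S ∩ ω • ball X n).ncard ≤ (ball X n).ncard := by
  rw [← Set.ncard_smul_set ω (ball X n)]
  exact Set.ncard_le_ncard Set.inter_subset_right ((ball_finite n).smul_set)

lemma bdd (S : Set (FreeGroup X)) (n : ℕ) :
    BddAbove (Set.range fun ω : FreeGroup X => (S ∩ ω • ball X n).ncard) := by
  refine ⟨(ball X n).ncard, ?_⟩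
  rintro x ⟨ω, rfl⟩
  exact inter_ncard_le S ω n

lemma ball_ncard_mul (j k : ℕ) :
    (ball X (j + k)).ncard ≤ (ball X j).ncard * (ball X k).ncard := by
  classical
  have hjk := ball_finite (X := X) (j + k)
  have hj := ball_finite (X := X) j
  have hk := ball_finite (X := X) k
  rw [Set.ncard_eq_toFinset_card _ hjk, Set.ncard_eq_toFinset_card _ hj,
    Set.ncard_eq_toFinset_card _ hk, ← Finset.card_product]
  apply Finset.card_le_card_of_injOn
    (fun w => (FreeGroup.mk (w.toWord.take j), FreeGroup.mk (w.toWord.drop j)))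
  · intro w hw
    rw [Finset.mem_coe, Set.Finite.mem_toFinset] at hw
    rw [Finset.mem_coe, Finset.mem_product, Set.Finite.mem_toFinset, Set.Finite.mem_toFinset]
    constructor
    · exact le_trans FreeGroup.norm_mk_le (by simp)
    · refine le_trans FreeGroup.norm_mk_le ?_
      have : w.toWord.length ≤ j + k := hw
      simp only [List.length_drop]
      omega
  · intro w _ w' _ h
    have hw : ∀ v : FreeGroup X, FreeGroup.mk (v.toWord.take j) * FreeGroup.mk (v.toWord.drop j) = v := by
      intro v
      rw [FreeGroup.mul_mk, List.take_append_drop, FreeGroup.mk_toWord]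
    have := congrArg (fun p : FreeGroup X × FreeGroup X => p.1 * p.2) h
    simpa [hw] using this

lemma supLe (S : Set (FreeGroup X)) (n : ℕ) :
    (⨆ ω : FreeGroup X, (S ∩ ω • ball X n).ncard) ≤ (ball X n).ncard :=
  ciSup_le fun ω => inter_ncard_le S ω n

lemma ubSeq_le_one (S : Set (FreeGroup X)) (n : ℕ) : ubSeq X S n ≤ 1 := by
  rw [ubSeq, div_le_one (by exact_mod_cast ball_ncard_pos (X := X) n)]
  exact_mod_cast supLe S n

lemma ubSeq_nonneg (S : Set (FreeGroup X)) (n : ℕ) : 0 ≤ ubSeq X S n := by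
  apply div_nonneg <;> positivity

lemma ubSeq_eq_one (S : Set (FreeGroup X)) (n : ℕ) (ω : FreeGroup X)
    (h : ω • ball X n ⊆ S) : ubSeq X S n = 1 := by
  have h1 : S ∩ ω • ball X n = ω • ball X n := Set.inter_eq_self_of_subset_right h
  have h2 : (⨆ ω : FreeGroup X, (S ∩ ω • ball X n).ncard) = (ball X n).ncard := by
    refine le_antisymm (supLe S n) ?_
    have := le_ciSup (bdd S n) ω
    rwa [h1, Set.ncard_smul_set] at this
  rw [ubSeq, h2, div_self (by exact_mod_cast (ball_ncard_pos (X := X) n).ne')]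

lemma mem_smul_ball_iff {n : ℕ} {γ t : FreeGroup X} :
    t ∈ γ • ball X n ↔ FreeGroup.norm (γ⁻¹ * t) ≤ n := by
  rw [Set.mem_smul_set_iff_inv_smul_mem]
  rfl

lemma disjoint_translates {n : ℕ} {γ δ : FreeGroup X}
    (h : 2 * n < FreeGroup.norm (γ⁻¹ * δ)) :
    Disjoint (γ • ball X n) (δ • ball X n) := by
  rw [Set.disjoint_left]
  intro x hγ hδ
  rw [mem_smul_ball_iff] at hγ hδ
  have : γ⁻¹ * δ = (γ⁻¹ * x) * (δ⁻¹ * x)⁻¹ := by group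
  have hle : FreeGroup.norm (γ⁻¹ * δ) ≤ 2 * n := by
    rw [this]
    calc FreeGroup.norm ((γ⁻¹ * x) * (δ⁻¹ * x)⁻¹)
        ≤ FreeGroup.norm (γ⁻¹ * x) + FreeGroup.norm (δ⁻¹ * x)⁻¹ :=
          FreeGroup.norm_mul_le _ _
      _ = FreeGroup.norm (γ⁻¹ * x) + FreeGroup.norm (δ⁻¹ * x) := by
          rw [FreeGroup.norm_inv_eq]
      _ ≤ 2 * n := by omega
  omega

lemma packing (n m : ℕ) :
    ∃ Γ : Finset (FreeGroup X), (↑Γ : Set (FreeGroup X)) ⊆ ball X m ∧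
      (Γ : Set (FreeGroup X)).Pairwise
        (fun γ δ => Disjoint (γ • ball X n) (δ • ball X n)) ∧
      (ball X m).ncard ≤ Γ.card * (ball X (2 * n)).ncard := by
  classical
  set T := (ball_finite (X := X) m).toFinset with hT
  set P : Finset (Finset (FreeGroup X)) := T.powerset.filter
    (fun Γ => (Γ : Set (FreeGroup X)).Pairwise
      (fun γ δ => Disjoint (γ • ball X n) (δ • ball X n))) with hP
  have hmemP : ∀ Γ : Finset (FreeGroup X), Γ ∈ P ↔
      Γ ⊆ T ∧ (Γ : Set (FreeGroup X)).Pairwise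
        (fun γ δ => Disjoint (γ • ball X n) (δ • ball X n)) := by
    intro Γ
    simp [hP, Finset.mem_filter, Finset.mem_powerset]
  have hne : (∅ : Finset (FreeGroup X)) ∈ P := by
    rw [hmemP]; exact ⟨Finset.empty_subset _, by simp⟩
  obtain ⟨Γ, hΓP, hmax⟩ := P.exists_max_image Finset.card ⟨∅, hne⟩
  rw [hmemP] at hΓP
  obtain ⟨hΓT, hΓdisj⟩ := hΓP
  refine ⟨Γ, ?_, hΓdisj, ?_⟩
  · intro x hx
    have := hΓT hx
    rwa [Set.Finite.mem_toFinset] at this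
  -- covering property
  have hcov : ∀ t ∈ T, ∃ γ ∈ Γ, t ∈ γ • ball X (2 * n) := by
    intro t ht
    by_contra hcon
    push_neg at hcon
    have hfar : ∀ γ ∈ Γ, 2 * n < FreeGroup.norm (γ⁻¹ * t) := by
      intro γ hγ
      have := hcon γ hγ
      rw [mem_smul_ball_iff] at this
      omega
    have htΓ : t ∉ Γ := by
      intro htΓ
      have := hfar t htΓ
      simp at this
    have hins : insert t Γ ∈ P := by
      rw [hmemP]
      refine ⟨Finset.insert_subset ht hΓT, ?_⟩
      rw [Finset.coe_insert]
      refine hΓdisj.insert ?_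
      intro γ hγ _
      have h1 : 2 * n < FreeGroup.norm (t⁻¹ * γ) := by
        have := hfar γ hγ
        have : FreeGroup.norm (t⁻¹ * γ) = FreeGroup.norm (γ⁻¹ * t) := by
          rw [← FreeGroup.norm_inv_eq]; congr 1; group
        omega
      exact ⟨disjoint_translates h1, (disjoint_translates h1).symm⟩
    have := hmax _ hins
    rw [Finset.card_insert_of_notMem htΓ] at this
    omega
  -- counting
  have hsub : T ⊆ Γ.biUnion
      (fun γ => ((ball_finite (X := X) (2 * n)).toFinset).image (γ * ·)) := by
    intro t ht
    obtain ⟨γ, hγ, htmem⟩ := hcov t ht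
    rw [Finset.mem_biUnion]
    refine ⟨γ, hγ, ?_⟩
    obtain ⟨b, hb, rfl⟩ := htmem
    exact Finset.mem_image.2 ⟨b, (Set.Finite.mem_toFinset _).2 hb, rfl⟩
  calc (ball X m).ncard = T.card := Set.ncard_eq_toFinset_card _ _
    _ ≤ (Γ.biUnion (fun γ => ((ball_finite (X := X) (2 * n)).toFinset).image (γ * ·))).card :=
        Finset.card_le_card hsub
    _ ≤ ∑ γ ∈ Γ, (((ball_finite (X := X) (2 * n)).toFinset).image (γ * ·)).card :=
        Finset.card_biUnion_le
    _ ≤ ∑ _γ ∈ Γ, (ball X (2 * n)).ncard := by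
        refine Finset.sum_le_sum fun γ _ => ?_
        rw [Set.ncard_eq_toFinset_card _ (ball_finite (X := X) (2 * n))]
        exact Finset.card_image_le
    _ = Γ.card * (ball X (2 * n)).ncard := by rw [Finset.sum_const, smul_eq_mul]

lemma key (S : Set (FreeGroup X)) (n m : ℕ) (h : ∀ ω : FreeGroup X, ¬ ω • ball X n ⊆ S) :
    ubSeq X S (n + m) ≤
      1 - 1 / (((ball X n).ncard : ℝ) * ((ball X (2 * n)).ncard : ℝ)) := by
  classical
  obtain ⟨Γ, hΓball, hΓdisj, hΓcount⟩ := packing (X := X) n m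
  have hΓpos : 0 < Γ.card := by
    by_contra hc
    have : Γ.card = 0 := by omega
    rw [this, zero_mul] at hΓcount
    exact absurd hΓcount (by have := ball_ncard_pos (X := X) m; omega)
  have hbound : ∀ ω : FreeGroup X,
      (S ∩ ω • ball X (n + m)).ncard + Γ.card ≤ (ball X (n + m)).ncard := by
    intro ω
    have hch : ∀ γ : FreeGroup X, ∃ x : FreeGroup X,
        γ ∈ Γ → x ∈ (ω * γ) • ball X n ∧ x ∉ S := by
      intro γ
      by_cases hγ : γ ∈ Γ
      · obtain ⟨x, hx, hxS⟩ := Set.not_subset.1 (h (ω * γ))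
        exact ⟨x, fun _ => ⟨hx, hxS⟩⟩
      · exact ⟨1, fun hc => absurd hc hγ⟩
    choose x hx using hch
    have hmem : ∀ γ ∈ Γ, ω⁻¹ * x γ ∈ γ • ball X n := by
      intro γ hγ
      rw [mem_smul_ball_iff]
      have := (hx γ hγ).1
      rw [mem_smul_ball_iff] at this
      rw [show γ⁻¹ * (ω⁻¹ * x γ) = (ω * γ)⁻¹ * x γ by group]
      exact this
    have hinj : Set.InjOn x ↑Γ := by
      intro γ hγ δ hδ heq
      by_contra hne
      have hdisj := hΓdisj hγ hδ hne
      simp only [Set.disjoint_left] at hdisj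
      exact hdisj (hmem γ hγ) (heq ▸ hmem δ hδ)
    set D : Set (FreeGroup X) := ω • ball X (n + m) \ S with hD
    have hDfin : D.Finite := ((ball_finite (X := X) (n + m)).smul_set).diff (t := S)
    have himg : Γ.image x ⊆ hDfin.toFinset := by
      intro y hy
      obtain ⟨γ, hγ, rfl⟩ := Finset.mem_image.1 hy
      rw [Set.Finite.mem_toFinset]
      refine ⟨?_, (hx γ hγ).2⟩
      rw [mem_smul_ball_iff]
      have h1 := hmem γ hγ
      rw [mem_smul_ball_iff] at h1
      have h2 : FreeGroup.norm γ ≤ m := hΓball hγ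
      calc FreeGroup.norm (ω⁻¹ * x γ) = FreeGroup.norm (γ * (γ⁻¹ * (ω⁻¹ * x γ))) := by
            congr 1; group
        _ ≤ FreeGroup.norm γ + FreeGroup.norm (γ⁻¹ * (ω⁻¹ * x γ)) := FreeGroup.norm_mul_le _ _
        _ ≤ n + m := by omega
    have hcard1 : Γ.card ≤ D.ncard := by
      rw [Set.ncard_eq_toFinset_card _ hDfin, ← Finset.card_image_of_injOn hinj]
      exact Finset.card_le_card himg
    have hsplit : (ω • ball X (n + m) ∩ S).ncard + D.ncard = (ball X (n + m)).ncard := by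
      rw [← Set.ncard_smul_set ω (ball X (n + m))]
      exact Set.ncard_inter_add_ncard_diff_eq_ncard _ _ ((ball_finite (X := X) (n + m)).smul_set)
    rw [Set.inter_comm]
    omega
  have hsup : (⨆ ω : FreeGroup X, (S ∩ ω • ball X (n + m)).ncard) + Γ.card ≤
      (ball X (n + m)).ncard := by
    have : (⨆ ω : FreeGroup X, (S ∩ ω • ball X (n + m)).ncard) ≤
        (ball X (n + m)).ncard - Γ.card := by
      refine ciSup_le fun ω => ?_
      have := hbound ω
      omega
    have hΓle : Γ.card ≤ (ball X (n + m)).ncard := by have := hbound 1; omega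
    omega
  -- numeric bound
  have hN : (ball X (n + m)).ncard ≤ Γ.card * ((ball X n).ncard * (ball X (2 * n)).ncard) := by
    calc (ball X (n + m)).ncard ≤ (ball X n).ncard * (ball X m).ncard := ball_ncard_mul n m
      _ ≤ (ball X n).ncard * (Γ.card * (ball X (2 * n)).ncard) :=
          Nat.mul_le_mul_left _ hΓcount
      _ = Γ.card * ((ball X n).ncard * (ball X (2 * n)).ncard) := by ring
  set B : ℝ := ((ball X (n + m)).ncard : ℝ) with hB
  have hBpos : (0 : ℝ) < B := by rw [hB]; exact_mod_cast ball_ncard_pos (X := X) (n + m)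
  have hcpos : (0 : ℝ) < ((ball X n).ncard : ℝ) * ((ball X (2 * n)).ncard : ℝ) := by
    have h1 := ball_ncard_pos (X := X) n
    have h2 := ball_ncard_pos (X := X) (2 * n)
    positivity
  have hsupR : ((⨆ ω : FreeGroup X, (S ∩ ω • ball X (n + m)).ncard : ℕ) : ℝ) ≤ B - Γ.card := by
    have h1 : (((⨆ ω : FreeGroup X, (S ∩ ω • ball X (n + m)).ncard) + Γ.card : ℕ) : ℝ) ≤ B := by
      rw [hB]; exact_mod_cast hsup
    push_cast at h1
    linarith
  have hstep1 : ubSeq X S (n + m) ≤ (B - Γ.card) / B := by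
    rw [ubSeq, ← hB]
    exact (div_le_div_iff_of_pos_right hBpos).2 hsupR
  have hstep2 : (B - Γ.card) / B = 1 - (Γ.card : ℝ) / B := by
    field_simp
  have hstep3 : 1 / (((ball X n).ncard : ℝ) * ((ball X (2 * n)).ncard : ℝ)) ≤ (Γ.card : ℝ) / B := by
    rw [div_le_div_iff₀ hcpos hBpos, one_mul, hB]
    exact_mod_cast hN
  linarith

end Aux

/-- A subset `S ⊆ F_X` (`|X| ≥ 1`) is Upper Banach generic iff for every `n` there is
`ω_n ∈ F_X` with `ω_n·B_n ⊆ S`. -/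
theorem stmt_3 (X : Type) [Fintype X] [DecidableEq X] (hX : 1 ≤ Fintype.card X)
    (S : Set (FreeGroup X)) :
    UBGeneric X S ↔ ∀ n : ℕ, ∃ ω : FreeGroup X, ω • ball X n ⊆ S := by
  constructor
  · intro hUB
    by_contra hc
    push_neg at hc
    obtain ⟨n, hn⟩ := hc
    have hcpos : 0 < 1 / (((ball X n).ncard : ℝ) * ((ball X (2 * n)).ncard : ℝ)) := by
      have h1 := ball_ncard_pos (X := X) n
      have h2 := ball_ncard_pos (X := X) (2 * n)
      have h1' : (0 : ℝ) < ((ball X n).ncard : ℝ) := by exact_mod_cast h1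
      have h2' : (0 : ℝ) < ((ball X (2 * n)).ncard : ℝ) := by exact_mod_cast h2
      positivity
    have hev : ∀ᶠ k in atTop, ubSeq X S k ≤
        1 - 1 / (((ball X n).ncard : ℝ) * ((ball X (2 * n)).ncard : ℝ)) := by
      filter_upwards [eventually_ge_atTop n] with k hk
      obtain ⟨m, rfl⟩ : ∃ m, k = n + m := ⟨k - n, by omega⟩
      exact key S n m hn
    have hcob : IsCoboundedUnder (· ≤ ·) atTop (ubSeq X S) :=
      isCoboundedUnder_le_of_le atTop (x := 0) fun k => ubSeq_nonneg S k
    have hle : ubDensity X S ≤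
        1 - 1 / (((ball X n).ncard : ℝ) * ((ball X (2 * n)).ncard : ℝ)) :=
      limsup_le_of_le hcob hev
    rw [UBGeneric] at hUB
    rw [hUB] at hle
    linarith
  · intro h
    have heq : ubSeq X S = fun _ => (1 : ℝ) := by
      funext n
      obtain ⟨ω, hω⟩ := h n
      exact ubSeq_eq_one S n ω hω
    rw [UBGeneric, ubDensity, heq, limsup_const]
end

section
/- Let F_X be the free group on a finite set X with |X| = d > 1, and let k ∈ ℕ. Then for all sufficiently large n, the ball B_n contains |S_{n−2k}| pairwise disjoint left-translates of the ball B_k; that is, there exist elements ω_1, …, ω_{|S_{n−2k}|} ∈ F_X such that the sets ω_i B_k are pairwise disjoint and all contained in B_n. -/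
open Filter Pointwise

section Aux
open FreeGroup List
variable {α : Type} [DecidableEq α]
set_option linter.unusedSectionVars false


theorem drop_suffix_drop (L : List α) {a b : ℕ} (h : a ≤ b) : L.drop b <:+ L.drop a := by
  have : L.drop b = (L.drop a).drop (b - a) := by rw [List.drop_drop]; congr 1; omega
  rw [this]; exact drop_suffix _ _

theorem suffix_drop_one {L₁ L₂ : List α} (h : L₁ <:+ L₂) : L₁.drop 1 <:+ L₂.drop 1 := by
  obtain ⟨C, rfl⟩ := h
  cases C with
  | nil => simp
  | cons c C => simpa using ((drop_suffix 1 L₁).trans (suffix_append C L₁))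

-- single letter left mult
theorem letter_mul (a : α × Bool) (w : FreeGroup α) :
    w.toWord.drop 1 <:+ (FreeGroup.mk [a] * w).toWord := by
  have h1 : FreeGroup.mk [a] * w = FreeGroup.mk (a :: w.toWord) := by
    conv_lhs => rw [← mk_toWord (x := w)]
    rw [mul_mk]; rfl
  rw [h1, toWord_mk, reduce.cons, reduce_toWord]
  cases h : w.toWord with
  | nil => simp
  | cons hd tl =>
    dsimp only
    split_ifs
    · exact suffix_rfl
    · exact ((drop_suffix 1 (hd::tl)).trans (suffix_cons _ _))

theorem suffix_drop_mul (v w : FreeGroup α) :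
    w.toWord.drop (FreeGroup.norm v) <:+ (v * w).toWord := by
  suffices H : ∀ n v w, FreeGroup.norm v = n → w.toWord.drop (FreeGroup.norm v) <:+ ((v : FreeGroup α) * w).toWord by
    exact H _ v w rfl
  intro n
  induction n using Nat.strong_induction_on with
  | _ n ih =>
  intro v w hn
  rw [hn]
  cases n with
  | zero =>
    have : v = 1 := norm_eq_zero.mp hn
    subst this; simpa using suffix_rfl
  | succ n =>
    have hne : v.toWord ≠ [] := by
      intro h
      rw [FreeGroup.norm, h] at hn; simp at hn
    obtain ⟨a, t, ht⟩ : ∃ a t, v.toWord = a :: t := by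
      cases h : v.toWord with
      | nil => exact absurd h hne
      | cons a t => exact ⟨a, t, rfl⟩
    have hv : v = FreeGroup.mk [a] * FreeGroup.mk t := by
      rw [mul_mk]
      conv_lhs => rw [← mk_toWord (x := v), ht]
      rfl
    have hlen : t.length = n := by
      have := congrArg List.length ht
      rw [show v.toWord.length = FreeGroup.norm v from rfl, hn] at this
      simpa using this.symm
    have hnt : FreeGroup.norm (FreeGroup.mk t) ≤ n := hlen ▸ norm_mk_le
    have IH := ih (FreeGroup.norm (FreeGroup.mk t)) (by omega) (FreeGroup.mk t) w rfl
    have step := letter_mul a (FreeGroup.mk t * w)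
    rw [← mul_assoc, ← hv] at step
    calc w.toWord.drop (n+1) <:+ w.toWord.drop (FreeGroup.norm (FreeGroup.mk t) + 1) :=
          drop_suffix_drop _ (by omega)
      _ = (w.toWord.drop (FreeGroup.norm (FreeGroup.mk t))).drop 1 := by
          rw [List.drop_drop]
      _ <:+ ((FreeGroup.mk t * w).toWord).drop 1 := suffix_drop_one IH
      _ <:+ (v * w).toWord := step

theorem invRev_prefix_of_suffix {L₁ L₂ : List (α × Bool)} (h : L₁ <:+ L₂) :
    invRev L₁ <+: invRev L₂ := by
  unfold invRev
  exact List.reverse_prefix.mpr (h.map _)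

theorem invRev_drop (L : List (α × Bool)) (j : ℕ) :
    invRev (L.drop j) = (invRev L).take (L.length - j) := by
  unfold invRev
  rw [List.map_drop, List.reverse_drop]
  congr 1
  simp

theorem prefix_take_mul (w u : FreeGroup α) :
    w.toWord.take (FreeGroup.norm w - FreeGroup.norm u) <+: (w * u).toWord := by
  have h := suffix_drop_mul u⁻¹ w⁻¹
  rw [norm_inv_eq] at h
  have h2 := invRev_prefix_of_suffix h
  rw [invRev_drop, toWord_inv, invRev_invRev] at h2
  have h3 : u⁻¹ * w⁻¹ = (w * u)⁻¹ := by group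
  rw [h3, toWord_inv, invRev_invRev] at h2
  rw [invRev_length] at h2
  exact h2

theorem reduced_cons_aux {x : α × Bool} {L : List (α × Bool)}
    (hred : FreeGroup.reduce (x :: L) = x :: L) :
    FreeGroup.reduce L = L ∧ ∀ h t, L = h :: t → ¬(x.1 = h.1 ∧ x.2 = !h.2) := by
  rw [reduce.cons] at hred
  cases hr : FreeGroup.reduce L with
  | nil =>
    rw [hr] at hred
    dsimp at hred
    have : L = [] := by
      have h2 := congrArg List.length hred
      simp at h2
      exact h2
    subst this
    exact ⟨rfl, fun h t ht => by simp at ht⟩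
  | cons h2 t2 =>
    rw [hr] at hred
    dsimp at hred
    split_ifs at hred with hp
    · exfalso
      have hle : (FreeGroup.reduce L).length ≤ L.length := Red.length_le reduce.red
      rw [hr] at hle
      have := congrArg List.length hred
      simp at this hle
      omega
    · have hL : L = h2 :: t2 := by
        injection hred with _ h
        exact h.symm
      constructor
      · rw [hL, ← hr, hL]
      · intro h t ht hpair
        rw [hL] at ht
        injection ht with hh _
        exact hp (hh ▸ hpair)

theorem reduce_append_replicate (k : ℕ) (c : α × Bool) :
    ∀ L : List (α × Bool), FreeGroup.reduce L = L → (∀ d, L.getLast? = some d → d = c) →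
      FreeGroup.reduce (L ++ List.replicate k c) = L ++ List.replicate k c := by
  intro L
  induction L with
  | nil => intro _ _; simpa using reduce_replicate k c
  | cons x L' ih =>
    intro hred hlast
    obtain ⟨hL', hnp⟩ := reduced_cons_aux hred
    have hlast' : ∀ d, L'.getLast? = some d → d = c := by
      intro d hd
      apply hlast
      rw [List.getLast?_cons, hd]
      cases L' with
      | nil => simp at hd
      | cons a b => simpa using hd
    have IH := ih hL' hlast'
    show FreeGroup.reduce (x :: (L' ++ List.replicate k c)) = _
    rw [reduce.cons, IH]
    cases hc : L' ++ List.replicate k c with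
    | nil => simp [hc]
    | cons h t =>
      dsimp only
      have hnpair : ¬(x.1 = h.1 ∧ x.2 = !h.2) := by
        cases L' with
        | cons a b =>
          have : a = h := by simpa using congrArg (List.head?) hc
          exact this.symm ▸ hnp a b rfl
        | nil =>
          have hxc : x = c := hlast x (by simp)
          have hhc : h = c := by
            simp only [List.nil_append] at hc
            cases k with
            | zero => simp at hc
            | succ k =>
              rw [List.replicate_succ] at hc
              exact (List.cons.injEq _ _ _ _ ▸ hc).1.symm ▸ rfl
          subst hxc hhc
          rintro ⟨-, h2⟩
          simp at h2
      rw [if_neg hnpair, ← hc]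
      simp

end Aux

/-- For `|X| = d > 1` and any `k`, for all sufficiently large `n` the ball `B_n` contains
`|S_{n−2k}|` pairwise disjoint left-translates of `B_k`. -/
theorem stmt_5 (X : Type) [Fintype X] [DecidableEq X] (hX : 1 < Fintype.card X) (k : ℕ) :
    ∃ N : ℕ, ∀ n ≥ N, ∃ f : Fin ((sphere X (n - 2 * k)).ncard) → FreeGroup X,
      (∀ i, f i • ball X k ⊆ ball X n) ∧
        ∀ i j, i ≠ j → Disjoint (f i • ball X k) (f j • ball X k) := by
  classical
  refine ⟨2 * k + 1, fun n hn => ?_⟩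
  set m := n - 2 * k with hm
  have hm1 : 1 ≤ m := by omega
  have hn2 : n = m + 2 * k := by omega
  have hfin : (sphere X m).Finite := by
    apply Set.Finite.of_finite_image (f := FreeGroup.toWord) ?_ FreeGroup.toWord_injective.injOn
    exact (List.finite_length_eq _ m).subset (by rintro _ ⟨w, hw, rfl⟩; exact hw)
  have hcard : hfin.toFinset.card = (sphere X m).ncard :=
    (Set.ncard_eq_toFinset_card _ hfin).symm
  set ω : Fin ((sphere X m).ncard) → FreeGroup X :=
    fun i => (hfin.toFinset.equivFin.symm (Fin.cast hcard.symm i) : FreeGroup X) with hω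
  have hωmem : ∀ i, ω i ∈ sphere X m := fun i => by
    have := (hfin.toFinset.equivFin.symm (Fin.cast hcard.symm i)).2
    rwa [Set.Finite.mem_toFinset] at this
  have hωinj : Function.Injective ω := by
    intro i j hij
    have := hfin.toFinset.equivFin.symm.injective (Subtype.ext hij)
    exact Fin.cast_injective _ this
  have hWlen : ∀ i, (ω i).toWord.length = m := fun i => hωmem i
  have hWne : ∀ i, (ω i).toWord ≠ [] := fun i => by
    intro h; have := hWlen i; rw [h] at this; simp at this; omega
  set c : Fin ((sphere X m).ncard) → X × Bool :=
    fun i => (ω i).toWord.getLast (hWne i) with hc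
  set f : Fin ((sphere X m).ncard) → FreeGroup X :=
    fun i => FreeGroup.mk ((ω i).toWord ++ List.replicate k (c i)) with hf
  have htoWord : ∀ i, (f i).toWord = (ω i).toWord ++ List.replicate k (c i) := by
    intro i
    rw [hf]
    show FreeGroup.reduce _ = _
    refine reduce_append_replicate k (c i) _ (FreeGroup.reduce_toWord _) ?_
    intro d hd
    rw [List.getLast?_eq_getLast (hWne i)] at hd
    exact (Option.some_injective _ hd).symm
  have hnormf : ∀ i, FreeGroup.norm (f i) = m + k := by
    intro i
    rw [FreeGroup.norm, htoWord i]
    simp [hWlen i]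
  have key : ∀ i (u : FreeGroup X), FreeGroup.norm u ≤ k →
      ((f i) * u).toWord.take m = (ω i).toWord := by
    intro i u hu
    have hpre := prefix_take_mul (f i) u
    have h1 : (f i).toWord.take m <+: (f i).toWord.take (FreeGroup.norm (f i) - FreeGroup.norm u) :=
      List.take_prefix_take_left (by rw [hnormf i]; omega)
    have h2 : (f i).toWord.take m = (ω i).toWord := by
      rw [htoWord i, ← hWlen i, List.take_left]
    rw [h2] at h1
    have h3 : (ω i).toWord <+: ((f i) * u).toWord := h1.trans hpre
    obtain ⟨t, ht⟩ := h3
    rw [← ht]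
    exact List.take_left' (hWlen i)
  have hmem : ∀ i (x : FreeGroup X), x ∈ f i • ball X k →
      ∃ u : FreeGroup X, FreeGroup.norm u ≤ k ∧ x = f i * u := by
    intro i x hx
    rw [Set.mem_smul_set] at hx
    obtain ⟨u, hu, hux⟩ := hx
    exact ⟨u, hu, by rw [← hux]; rfl⟩
  refine ⟨f, ?_, ?_⟩
  · intro i x hx
    obtain ⟨u, hu, rfl⟩ := hmem i x hx
    have := FreeGroup.norm_mul_le (f i) u
    rw [hnormf i] at this
    show FreeGroup.norm _ ≤ n
    omega
  · intro i j hij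
    rw [Set.disjoint_left]
    intro x hxi hxj
    obtain ⟨u, hu, hxu⟩ := hmem i x hxi
    obtain ⟨v, hv, hxv⟩ := hmem j x hxj
    have h1 : (ω i).toWord = (ω j).toWord := by
      rw [← key i u hu, ← key j v hv, ← hxu, ← hxv]
    exact hij (hωinj (FreeGroup.toWord_injective h1))
end

section
/- In the free group F_X on a finite set X with |X| > 1, fix a nontrivial word ω ∈ F_X. Then there exists a function f : ℕ → ℕ such that the set T_f := ⋃_{n≥1} ω^{f(n)} B_n is both Upper Banach generic and negligible (i.e., |T_f ∩ B_n|/|B_n| → 0). -/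
open Filter Pointwise

namespace StmtAux

set_option linter.unusedSectionVars false

variable {X : Type} [DecidableEq X]

def P : (X × Bool) → (X × Bool) → Prop := fun a b => ¬(a.1 = b.1 ∧ a.2 = !b.2)

lemma reduce_eq_self_of_chain' : ∀ (L : List (X × Bool)), List.Chain' P L →
    FreeGroup.reduce L = L
  | [], _ => rfl
  | [a], _ => rfl
  | a :: b :: t, h => by
    have htail : FreeGroup.reduce (b :: t) = b :: t :=
      reduce_eq_self_of_chain' (b :: t) (List.isChain_cons_cons.mp h).2
    have hPab : P a b := (List.isChain_cons_cons.mp h).1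
    rw [FreeGroup.reduce.cons, htail]
    simp only [if_neg hPab]

lemma chain'_of_noRedex : ∀ (M : List (X × Bool)),
    (∀ (L₂ : List (X × Bool)) (x : X) (b : Bool) (L₃ : List (X × Bool)),
      M = L₂ ++ (x, b) :: (x, !b) :: L₃ → False) → List.Chain' P M
  | [], _ => List.isChain_nil
  | [a], _ => List.isChain_singleton a
  | a :: b :: t, h => by
    refine List.isChain_cons_cons.mpr ⟨?_, chain'_of_noRedex (b :: t) ?_⟩
    · rintro ⟨h1, h2⟩
      exact h [] a.1 a.2 t (by
        obtain ⟨a1, a2⟩ := a; obtain ⟨b1, b2⟩ := b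
        simp only at h1 h2
        subst h1; rw [h2]; simp)
    · intro L₂ x b' L₃ he
      exact h (a :: L₂) x b' L₃ (by rw [he]; rfl)

lemma chain'_toWord (w : FreeGroup X) : List.Chain' P w.toWord := by
  rw [← FreeGroup.reduce_toWord]
  exact chain'_of_noRedex _ (fun L₂ x b L₃ he => FreeGroup.reduce.not he)

lemma chain'_flatten_replicate {L : List (X × Bool)} (hne : L ≠ [])
    (hc : List.Chain' P L)
    (hj : ∀ a ∈ L.getLast?, ∀ b ∈ L.head?, P a b) :
    ∀ k, List.Chain' P (List.flatten (List.replicate k L))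
  | 0 => List.isChain_nil
  | (k+1) => by
    rw [List.replicate_succ, List.flatten_cons]
    rw [List.Chain', List.isChain_append]
    refine ⟨hc, chain'_flatten_replicate hne hc hj k, ?_⟩
    intro a ha b hb
    cases k with
    | zero => simp at hb
    | succ k =>
      rw [List.replicate_succ, List.flatten_cons, List.head?_append_of_ne_nil _ hne] at hb
      exact hj a ha b hb

lemma norm_pow_of_cyc {L : List (X × Bool)} (hne : L ≠ [])
    (hc : List.Chain' P L)
    (hj : ∀ a ∈ L.getLast?, ∀ b ∈ L.head?, P a b) (k : ℕ) :
    FreeGroup.norm (FreeGroup.mk L ^ k) = k * L.length := by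
  rw [FreeGroup.pow_mk, FreeGroup.norm, FreeGroup.toWord_mk,
    reduce_eq_self_of_chain' _ (chain'_flatten_replicate hne hc hj k)]
  simp [List.length_flatten, Function.comp]

/-- Free groups are torsion-free. -/
lemma pow_ne_one_aux : ∀ (N : ℕ) (w : FreeGroup X), FreeGroup.norm w ≤ N → w ≠ 1 →
    ∀ k, 0 < k → w ^ k ≠ 1 := by
  intro N
  induction N with
  | zero =>
    intro w hN hw k hk
    exact absurd (FreeGroup.norm_eq_zero.mp (Nat.le_zero.mp hN)) hw
  | succ N ih =>
    intro w hN hw k hk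
    set L := w.toWord with hL
    have hwL : w = FreeGroup.mk L := (FreeGroup.mk_toWord).symm
    have hne : L ≠ [] := fun h => hw (FreeGroup.toWord_eq_nil_iff.mp h)
    obtain ⟨a, haa⟩ : ∃ a, L.head? = some a := ⟨L.head hne, List.head?_eq_head hne⟩
    obtain ⟨g, hg⟩ : ∃ g, L.getLast? = some g :=
      ⟨L.getLast hne, List.getLast?_eq_getLast hne⟩
    have hLT : a :: L.tail = L := List.cons_head?_tail haa
    by_cases hcyc : P g a
    · -- cyclically reduced
      have hj : ∀ a' ∈ L.getLast?, ∀ b ∈ L.head?, P a' b := by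
        intro a' ha' b hb
        rw [hg, Option.mem_def, Option.some_inj] at ha'
        rw [haa, Option.mem_def, Option.some_inj] at hb
        rw [← ha', ← hb]; exact hcyc
      have hnorm : FreeGroup.norm (w ^ k) = k * L.length := by
        have := norm_pow_of_cyc (L := L) hne (chain'_toWord w) hj k
        rwa [← hwL] at this
      intro h1
      rw [h1, FreeGroup.norm_one] at hnorm
      have : 0 < k * L.length := Nat.mul_pos hk (List.length_pos_iff.mpr hne)
      omega
    · -- not cyclically reduced: conjugate by first letter
      have hga : g = (a.1, !a.2) := by
        have h2 := not_not.mp hcyc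
        exact Prod.ext h2.1 h2.2
      rcases (L.tail).eq_nil_or_concat' with h | ⟨M, t, hMt⟩
      · -- L = [a]: impossible since then g = a
        have hLa : L = [a] := by rw [← hLT, h]
        rw [hLa] at hg
        have hag : a = g := by simpa using hg
        rw [hga] at hag
        have := congrArg Prod.snd hag
        simp at this
      · have hLfull : L = [a] ++ M ++ [(a.1, !a.2)] := by
          have h1 : L = a :: (M ++ [t]) := by rw [← hLT, hMt]
          have ht : t = g := by
            rw [h1] at hg
            have : (a :: (M ++ [t])).getLast? = some t := by
              have hconcat : a :: (M ++ [t]) = (a :: M) ++ [t] := by simp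
              rw [hconcat, List.getLast?_concat]
            rw [this] at hg; exact (Option.some_inj.mp hg)
          rw [h1, ht, hga]; simp
        set c := FreeGroup.mk [a] with hc
        set v := FreeGroup.mk M with hv
        have hinv : c⁻¹ = FreeGroup.mk [(a.1, !a.2)] := by
          rw [hc, FreeGroup.inv_mk]
          congr 1
        have hcv : w = c * v * c⁻¹ := by
          rw [hc, hv, hinv, FreeGroup.mul_mk, FreeGroup.mul_mk, hwL, hLfull]
        have hv1 : v ≠ 1 := by
          intro h1
          apply hw
          rw [hcv, h1, mul_one, mul_inv_cancel]
        have hnv : FreeGroup.norm v ≤ N := by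
          have h1 : FreeGroup.norm v ≤ M.length := FreeGroup.norm_mk_le
          have h2 : L.length = M.length + 2 := by rw [hLfull]; simp
          have h3 : L.length ≤ N + 1 := hN
          omega
        have hpow : w ^ k = c * v ^ k * c⁻¹ := by
          rw [hcv, ← MulAut.conj_apply, ← map_pow, MulAut.conj_apply]
        intro h1
        apply ih v hnv hv1 k hk
        have h3 : c * v ^ k * c⁻¹ = 1 := by rw [← hpow]; exact h1
        have h4 := congrArg (fun z => c⁻¹ * z * c) h3
        simpa [mul_assoc] using h4

lemma pow_ne_one {w : FreeGroup X} (hw : w ≠ 1) {k : ℕ} (hk : 0 < k) : w ^ k ≠ 1 :=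
  pow_ne_one_aux (FreeGroup.norm w) w le_rfl hw k hk

lemma ball_finite [Fintype X] (n : ℕ) : (ball X n).Finite := by
  have hsub : ball X n ⊆ FreeGroup.toWord ⁻¹' {l : List (X × Bool) | l.length ≤ n} :=
    fun v hv => hv
  exact (Set.Finite.preimage (Function.Injective.injOn FreeGroup.toWord_injective)
    (List.finite_length_le _ n)).subset hsub

lemma exists_pow_norm_gt [Fintype X] (w : FreeGroup X) (hw : w ≠ 1) (N : ℕ) :
    ∃ k, N < FreeGroup.norm (w ^ k) := by
  by_contra hcon
  push_neg at hcon
  have hfin : (Set.range fun k : ℕ => w ^ k).Finite :=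
    (ball_finite N).subset (by rintro x ⟨k, rfl⟩; exact hcon k)
  have hinj : Function.Injective fun k : ℕ => w ^ k := by
    rw [injective_pow_iff_not_isOfFinOrder]
    intro hord
    obtain ⟨m, hm, hm1⟩ := isOfFinOrder_iff_pow_eq_one.mp hord
    exact pow_ne_one hw hm hm1
  exact (Set.infinite_range_of_injective hinj) hfin

lemma chain'_of_all_true : ∀ (l : List (X × Bool)), (∀ p ∈ l, p.2 = true) → List.Chain' P l
  | [], _ => List.isChain_nil
  | [a], _ => List.isChain_singleton a
  | a :: b :: l, h => by
    refine List.isChain_cons_cons.mpr ⟨?_, chain'_of_all_true (b :: l) ?_⟩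
    · rintro ⟨_, h2⟩
      have ha := h a (by simp)
      have hb := h b (by simp)
      rw [ha, hb] at h2
      simp at h2
    · intro p hp; exact h p (by simp [hp])

lemma ncard_ball_lower [Fintype X] (hX : 1 < Fintype.card X) (n : ℕ) :
    2 ^ n ≤ (ball X n).ncard := by
  obtain ⟨x, y, hxy⟩ := Fintype.exists_pair_of_one_lt_card hX
  set c : Bool → X := fun t => if t then x else y with hcdef
  have hcinj : Function.Injective c := by
    intro s t hst
    cases s <;> cases t <;> simp [hcdef] at hst ⊢ <;> first | rfl | exact absurd hst.symm hxy | exact absurd hst hxy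
  set g : (Fin n → Bool) → FreeGroup X :=
    fun s => FreeGroup.mk ((List.ofFn s).map fun t => (c t, true)) with hgdef
  have htw : ∀ s, (g s).toWord = (List.ofFn s).map fun t => (c t, true) := by
    intro s
    rw [hgdef]
    simp only
    rw [FreeGroup.toWord_mk, reduce_eq_self_of_chain']
    apply chain'_of_all_true
    intro p hp
    simp only [List.mem_map] at hp
    obtain ⟨t, _, rfl⟩ := hp
    rfl
  have hmem : Set.range g ⊆ ball X n := by
    rintro _ ⟨s, rfl⟩
    show FreeGroup.norm (g s) ≤ n
    rw [FreeGroup.norm, htw s]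
    simp
  have hginj : Function.Injective g := by
    intro s s' hss
    have h1 : (g s).toWord = (g s').toWord := by rw [hss]
    rw [htw, htw] at h1
    have h2 := List.map_injective_iff.mpr
      (fun t t' (h : ((c t : X), true) = (c t', true)) => hcinj (congrArg Prod.fst h)) h1
    exact List.ofFn_injective h2
  calc 2 ^ n = Nat.card (Fin n → Bool) := by simp
    _ = (Set.univ : Set (Fin n → Bool)).ncard := (Set.ncard_univ _).symm
    _ = (g '' Set.univ).ncard := (Set.ncard_image_of_injective _ hginj).symm
    _ = (Set.range g).ncard := by rw [Set.image_univ]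
    _ ≤ (ball X n).ncard := Set.ncard_le_ncard hmem (ball_finite n)

lemma ncard_biUnion_le {α ι : Type*} (s : Finset ι) (g : ι → Set α) :
    (⋃ i ∈ s, g i).ncard ≤ ∑ i ∈ s, (g i).ncard := by
  classical
  induction s using Finset.induction_on with
  | empty => simp
  | @insert a s ha ih =>
    rw [Finset.sum_insert ha]
    have : (⋃ i ∈ insert a s, g i) = g a ∪ ⋃ i ∈ s, g i := by
      simp [Set.biUnion_insert]
    rw [this]
    exact (Set.ncard_union_le _ _).trans (add_le_add_right ih _)

end StmtAux

/-- For `|X| > 1` and a nontrivial word `w ∈ F_X`, there is `f : ℕ → ℕ` such that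
`T_f = ⋃_{n ≥ 1} w^{f(n)} B_n` is Upper Banach generic and negligible. -/
theorem stmt_9 (X : Type) [Fintype X] [DecidableEq X] (hX : 1 < Fintype.card X)
    (w : FreeGroup X) (hw : w ≠ 1) :
    ∃ f : ℕ → ℕ,
      UBGeneric X (⋃ n ∈ Set.Ici 1, (w ^ f n) • ball X n) ∧
        Tendsto
          (fun n =>
            (((⋃ m ∈ Set.Ici 1, (w ^ f m) • ball X m) ∩ ball X n).ncard : ℝ) /
              ((ball X n).ncard : ℝ))
          atTop (nhds 0) := by
  have hex : ∀ m : ℕ, ∃ k, 2 * m + (ball X m).ncard < FreeGroup.norm (w ^ k) :=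
    fun m => StmtAux.exists_pow_norm_gt w hw _
  choose f hf using hex
  have hnormle : ∀ (m n : ℕ) (x : FreeGroup X), x ∈ (w ^ f m) • ball X m →
      x ∈ ball X n → FreeGroup.norm (w ^ f m) ≤ n + m := by
    intro m n x hx1 hx2
    rw [Set.mem_smul_set] at hx1
    obtain ⟨u, hu, hxu⟩ := hx1
    have hxw : w ^ f m = x * u⁻¹ := by
      rw [← hxu, smul_eq_mul, mul_inv_cancel_right]
    rw [hxw]
    calc FreeGroup.norm (x * u⁻¹) ≤ FreeGroup.norm x + FreeGroup.norm u⁻¹ :=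
          FreeGroup.norm_mul_le _ _
      _ ≤ n + m := add_le_add hx2 (by rw [FreeGroup.norm_inv_eq]; exact hu)
  refine ⟨f, ?_, ?_⟩
  · -- UB generic
    set T := ⋃ n ∈ Set.Ici 1, (w ^ f n) • ball X n with hT
    have hub : ∀ n : ℕ, 1 ≤ n → ubSeq X T n = 1 := by
      intro n hn
      have hfin : (ball X n).Finite := StmtAux.ball_finite n
      have hone : ∀ ω : FreeGroup X, (T ∩ ω • ball X n).ncard ≤ (ball X n).ncard := by
        intro ω
        calc (T ∩ ω • ball X n).ncard ≤ (ω • ball X n).ncard :=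
              Set.ncard_le_ncard Set.inter_subset_right hfin.smul_set
          _ = (ball X n).ncard := Set.ncard_smul_set ω _
      have hbdd : BddAbove (Set.range fun ω : FreeGroup X => (T ∩ ω • ball X n).ncard) :=
        ⟨(ball X n).ncard, by rintro x ⟨ω, rfl⟩; exact hone ω⟩
      have hsubT : (w ^ f n) • ball X n ⊆ T := by
        rw [hT]
        exact Set.subset_biUnion_of_mem (u := fun k => (w ^ f k) • ball X k)
          (Set.mem_Ici.mpr hn)
      have heq : T ∩ (w ^ f n) • ball X n = (w ^ f n) • ball X n :=
        Set.inter_eq_self_of_subset_right hsubT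
      have hsup : (⨆ ω : FreeGroup X, (T ∩ ω • ball X n).ncard) = (ball X n).ncard := by
        apply le_antisymm (ciSup_le hone)
        have h1 := le_ciSup hbdd (w ^ f n)
        rwa [heq, Set.ncard_smul_set] at h1
      have hpos : (0:ℝ) < ((ball X n).ncard : ℝ) := by
        have h0 : 0 < (ball X n).ncard :=
          (Set.ncard_pos hfin).mpr ⟨1, by simp [ball]⟩
        exact_mod_cast h0
      rw [ubSeq, hsup, div_self (ne_of_gt hpos)]
    have hev : ubSeq X T =ᶠ[atTop] (fun _ => (1:ℝ)) := by
      filter_upwards [eventually_ge_atTop 1] with n hn using hub n hn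
    show limsup (ubSeq X T) atTop = 1
    rw [limsup_congr hev, limsup_const]
  · -- negligible
    set T := ⋃ m ∈ Set.Ici 1, (w ^ f m) • ball X m with hT
    have key : ∀ n : ℕ, ((T ∩ ball X n).ncard : ℝ) ≤ (n:ℝ) ^ 2 := by
      intro n
      have hfinpiece : ∀ m : ℕ, ((w ^ f m) • ball X m ∩ ball X n).Finite :=
        fun m => (StmtAux.ball_finite n).subset Set.inter_subset_right
      have hpiece : ∀ m : ℕ, ((w ^ f m) • ball X m ∩ ball X n).ncard ≤ n := by
        intro m
        rcases Set.eq_empty_or_nonempty ((w ^ f m) • ball X m ∩ ball X n) with he | hne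
        · simp [he]
        · obtain ⟨x, hx1, hx2⟩ := hne
          have h1 := hnormle m n x hx1 hx2
          have h2 := hf m
          calc ((w ^ f m) • ball X m ∩ ball X n).ncard
              ≤ ((w ^ f m) • ball X m).ncard :=
                Set.ncard_le_ncard Set.inter_subset_left ((StmtAux.ball_finite m).smul_set)
            _ = (ball X m).ncard := Set.ncard_smul_set _ _
            _ ≤ n := by omega
      have hsub : T ∩ ball X n ⊆ ⋃ m ∈ Finset.range n, ((w ^ f m) • ball X m ∩ ball X n) := by
        rintro x ⟨hxT, hxB⟩
        rw [hT] at hxT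
        simp only [Set.mem_iUnion, exists_prop] at hxT
        obtain ⟨m, hm1, hxm⟩ := hxT
        have h1 := hnormle m n x hxm hxB
        have h2 := hf m
        have hmn : m < n := by omega
        exact Set.mem_iUnion₂.mpr ⟨m, by simpa using hmn, ⟨hxm, hxB⟩⟩
      have h1 : (T ∩ ball X n).ncard
          ≤ ∑ m ∈ Finset.range n, ((w ^ f m) • ball X m ∩ ball X n).ncard := by
        refine le_trans (Set.ncard_le_ncard hsub ?_) (StmtAux.ncard_biUnion_le _ _)
        exact (Finset.range n).finite_toSet.biUnion (fun m _ => hfinpiece m)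
      have h2 : ∑ m ∈ Finset.range n, ((w ^ f m) • ball X m ∩ ball X n).ncard
          ≤ ∑ _m ∈ Finset.range n, n := Finset.sum_le_sum (fun m _ => hpiece m)
      have h3 : (T ∩ ball X n).ncard ≤ n * n := by
        have h4 := h1.trans h2
        simpa [Finset.sum_const, Finset.card_range, smul_eq_mul] using h4
      calc ((T ∩ ball X n).ncard : ℝ) ≤ ((n * n : ℕ) : ℝ) := by exact_mod_cast h3
        _ = (n:ℝ) ^ 2 := by push_cast; ring
    refine squeeze_zero (fun n => div_nonneg (Nat.cast_nonneg _) (Nat.cast_nonneg _))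
      (fun n => ?_) (tendsto_pow_const_div_const_pow_of_one_lt 2 (by norm_num : (1:ℝ) < 2))
    have hb : (0:ℝ) < 2 ^ n := by positivity
    have h2pow : (2:ℝ) ^ n ≤ ((ball X n).ncard : ℝ) := by
      exact_mod_cast StmtAux.ncard_ball_lower hX n
    exact div_le_div₀ (by positivity) (key n) hb h2pow
end

section
/- Let s = s_k s_{k−1} ⋯ s_1 be a reduced word in the free group F_X (|X| > 1) with letters s_i ∈ X ∪ X^{−1}. Define P(s⁻¹, n) := {ω ∈ F_X : |ω| + |ω s⁻¹| ≤ n}. Then P(s⁻¹, n) = ⋃_{i=0}^{k} B_{⌊(n−k)/2⌋} · (s_i ⋯ s_1), i.e., ω ∈ P(s⁻¹,n) if and only if ω = v · s_i⋯s_1 for some 0 ≤ i ≤ k and some v with 2|v| + k ≤ n. -/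
open Filter Pointwise

namespace FG12Aux
open FreeGroup List

set_option linter.unusedSectionVars false

variable {α : Type} [DecidableEq α]

/-- No cancellation between adjacent letters. -/
def Cond (x y : α × Bool) : Prop := ¬(x.1 = y.1 ∧ x.2 = !y.2)

lemma reduce_eq_self_of_chain {l : List (α × Bool)} (h : List.Chain' Cond l) :
    FreeGroup.reduce l = l := by
  induction l with
  | nil => rfl
  | cons x tl ih =>
    have htl : FreeGroup.reduce tl = tl := ih h.tail
    rw [FreeGroup.reduce.cons, htl]
    cases tl with
    | nil => rfl
    | cons y tl2 =>
      have hc : Cond x y := (List.isChain_cons_cons.1 h).1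
      simp only [Cond] at hc
      show (if x.1 = y.1 ∧ x.2 = !y.2 then tl2 else x :: y :: tl2) = x :: y :: tl2
      rw [if_neg hc]

lemma chain_of_reduce_eq_self {l : List (α × Bool)} (h : FreeGroup.reduce l = l) :
    List.Chain' Cond l := by
  induction l with
  | nil => exact List.isChain_nil
  | cons x tl ih =>
    rw [FreeGroup.reduce.cons] at h
    rcases htl : FreeGroup.reduce tl with _ | ⟨y, tl2⟩
    · rw [htl] at h
      have h' : [x] = x :: tl := h
      injection h' with h1 h2
      rw [← h2]; exact List.isChain_singleton _
    · rw [htl] at h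
      replace h : (if x.1 = y.1 ∧ x.2 = !y.2 then tl2 else x :: y :: tl2) = x :: tl := h
      have hlen : (FreeGroup.reduce tl).length ≤ tl.length :=
        (FreeGroup.reduce.red (L := tl)).sublist.length_le
      rw [htl] at hlen
      by_cases hc : x.1 = y.1 ∧ x.2 = !y.2
      · rw [if_pos hc] at h
        have := congrArg List.length h
        simp at this hlen
        omega
      · rw [if_neg hc] at h
        have h2 : tl = y :: tl2 := by
          injection h with h1 h2
          exact h2.symm
        subst h2
        have : FreeGroup.reduce (y :: tl2) = y :: tl2 := htl
        exact List.isChain_cons_cons.2 ⟨hc, ih this⟩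

lemma chain_toWord (x : FreeGroup α) : List.Chain' Cond x.toWord :=
  chain_of_reduce_eq_self (FreeGroup.reduce_toWord x)

lemma norm_mk_of_chain {l : List (α × Bool)} (h : List.Chain' Cond l) :
    FreeGroup.norm (FreeGroup.mk l) = l.length := by
  simp [FreeGroup.norm, FreeGroup.toWord_mk, reduce_eq_self_of_chain h]

lemma chain_invRev {l : List (α × Bool)} (h : List.Chain' Cond l) :
    List.Chain' Cond (FreeGroup.invRev l) := by
  rw [FreeGroup.invRev, List.Chain', List.isChain_reverse, List.isChain_map]
  refine h.imp ?_
  intro a b hab hc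
  apply hab
  obtain ⟨h1, h2⟩ := hc
  refine ⟨h1.symm, ?_⟩
  simp only [flip] at *
  cases ha : a.2 <;> cases hb : b.2 <;> simp_all

end FG12Aux

open FG12Aux List in
/-- For a reduced word `s = s_k⋯s_1` in `F_X` (`|X| > 1`), the set
`P(s⁻¹,n) = {ω : |ω| + |ωs⁻¹| ≤ n}` equals `⋃_{i=0}^k B_{⌊(n−k)/2⌋}·(s_i⋯s_1)`:
`ω ∈ P(s⁻¹,n)` iff `ω = v·(s_i⋯s_1)` for some `0 ≤ i ≤ k` and `v` with `2|v| + k ≤ n`,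
where `s_i⋯s_1` is the suffix of `s` of length `i`. -/


theorem stmt_12 (X : Type) [Fintype X] [DecidableEq X] (hX : 1 < Fintype.card X)
    (s : FreeGroup X) (n : ℕ) (ω : FreeGroup X) :
    FreeGroup.norm ω + FreeGroup.norm (ω * s⁻¹) ≤ n ↔
      ∃ i ≤ s.toWord.length, ∃ v : FreeGroup X,
        2 * FreeGroup.norm v + s.toWord.length ≤ n ∧
          ω = v * FreeGroup.mk (s.toWord.drop (s.toWord.length - i)) := by
  classical
  set a := ω.toWord with ha
  set b := s.toWord with hb
  set m := a.length with hm
  set k := b.length with hk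
  have hnω : FreeGroup.norm ω = m := rfl
  have hchain_a : List.Chain' Cond a := chain_toWord ω
  have hchain_b : List.Chain' Cond b := chain_toWord s
  have hsplit : ∀ j ≤ k, s = FreeGroup.mk (b.take (k - j)) * FreeGroup.mk (b.drop (k - j)) := by
    intro j _
    rw [FreeGroup.mul_mk, List.take_append_drop, hb, FreeGroup.mk_toWord]
  have hdropnorm : ∀ j ≤ k, FreeGroup.norm (FreeGroup.mk (b.drop (k - j))) = j := by
    intro j hj
    rw [norm_mk_of_chain (hchain_b.drop _), List.length_drop]
    omega
  have htakenorm : ∀ j ≤ k, FreeGroup.norm (FreeGroup.mk (b.take (k - j))) = k - j := by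
    intro j hj
    rw [norm_mk_of_chain (hchain_b.take _), List.length_take]
    omega
  constructor
  · intro h
    set P : ℕ → Prop := fun i => a.drop (m - i) = b.drop (k - i) with hP
    have hP0 : P 0 := by
      show List.drop (m - 0) a = List.drop (k - 0) b
      rw [Nat.sub_zero, Nat.sub_zero, hm, hk, List.drop_length, List.drop_length]
    set i := Nat.findGreatest P (min m k) with hi
    have hPi : P i := Nat.findGreatest_spec (Nat.zero_le _) hP0
    have hile : i ≤ min m k := Nat.findGreatest_le _
    have him : i ≤ m := le_trans hile (min_le_left _ _)
    have hik : i ≤ k := le_trans hile (min_le_right _ _)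
    have h1 : ω = FreeGroup.mk (a.take (m - i)) * FreeGroup.mk (b.drop (k - i)) := by
      rw [FreeGroup.mul_mk, ← hPi, List.take_append_drop, ha, FreeGroup.mk_toWord]
    have h2 : ω * s⁻¹ = FreeGroup.mk (a.take (m - i)) * (FreeGroup.mk (b.take (k - i)))⁻¹ := by
      rw [h1, hsplit i hik]; group
    have h3 : ω * s⁻¹ = FreeGroup.mk (a.take (m - i) ++ FreeGroup.invRev (b.take (k - i))) := by
      rw [h2, FreeGroup.inv_mk, FreeGroup.mul_mk]
    have hjun : List.Chain' Cond (a.take (m - i) ++ FreeGroup.invRev (b.take (k - i))) := by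
      rw [List.Chain', List.isChain_append]
      refine ⟨hchain_a.take _, chain_invRev (hchain_b.take _), ?_⟩
      intro x hx y hy
      have hmi : 0 < m - i := by
        by_contra hmi
        simp only [Nat.not_lt, Nat.le_zero] at hmi
        rw [hmi, List.take_zero] at hx
        simp at hx
      have hki : 0 < k - i := by
        by_contra hki
        simp only [Nat.not_lt, Nat.le_zero] at hki
        rw [hki, List.take_zero] at hy
        simp [FreeGroup.invRev] at hy
      -- identify x and y
      have hxa : x = a[m - i - 1]'(by omega) := by
        rw [List.getLast?_eq_getElem?] at hx
        rw [List.length_take] at hx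
        have : min (m - i) m - 1 = m - i - 1 := by omega
        rw [this] at hx
        rw [List.getElem?_take_of_lt (by omega)] at hx
        rw [List.getElem?_eq_getElem (by omega)] at hx
        exact (Option.mem_some_iff.1 hx).symm
      have hyb : y = (fun g : X × Bool => (g.1, !g.2)) (b[k - i - 1]'(by omega)) := by
        rw [FreeGroup.invRev, List.head?_reverse, List.getLast?_eq_getElem?,
          List.length_map, List.length_take] at hy
        have : min (k - i) k - 1 = k - i - 1 := by omega
        rw [this, List.getElem?_map, List.getElem?_take_of_lt (by omega),
          List.getElem?_eq_getElem (by omega)] at hy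
        exact (Option.mem_some_iff.1 hy).symm
      intro hc
      obtain ⟨hc1, hc2⟩ := hc
      subst hxa
      subst hyb
      simp only [Bool.not_not] at hc2
      have hxy : a[m - i - 1]'(by omega) = b[k - i - 1]'(by omega) :=
        Prod.ext (by simpa using hc1) (by simpa using hc2)
      have hPsucc : P (i + 1) := by
        show a.drop (m - (i + 1)) = b.drop (k - (i + 1))
        have e1 : m - (i + 1) = m - i - 1 := by omega
        have e2 : k - (i + 1) = k - i - 1 := by omega
        have p1 : m - i - 1 < a.length := by rw [← hm]; omega
        have p2 : k - i - 1 < b.length := by rw [← hk]; omega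
        rw [e1, e2, List.drop_eq_getElem_cons p1, List.drop_eq_getElem_cons p2]
        have e3 : m - i - 1 + 1 = m - i := by omega
        have e4 : k - i - 1 + 1 = k - i := by omega
        rw [e3, e4]
        exact congrArg₂ (· :: ·) hxy hPi
      exact Nat.findGreatest_is_greatest (Nat.lt_succ_self _) (by omega) hPsucc
    have hnorm2 : FreeGroup.norm (ω * s⁻¹) = (m - i) + (k - i) := by
      rw [h3, norm_mk_of_chain hjun, List.length_append, List.length_take,
        FreeGroup.invRev_length, List.length_take]
      omega
    refine ⟨i, hik, FreeGroup.mk (a.take (m - i)), ?_, ?_⟩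
    · rw [norm_mk_of_chain (hchain_a.take _), List.length_take]
      rw [hnω, hnorm2] at h
      omega
    · exact h1
  · rintro ⟨i, hik, v, hvn, rfl⟩
    have hω1 : FreeGroup.norm (v * FreeGroup.mk (b.drop (k - i))) ≤ FreeGroup.norm v + i := by
      calc FreeGroup.norm (v * FreeGroup.mk (b.drop (k - i)))
          ≤ FreeGroup.norm v + FreeGroup.norm (FreeGroup.mk (b.drop (k - i))) :=
            FreeGroup.norm_mul_le _ _
        _ = FreeGroup.norm v + i := by rw [hdropnorm i hik]
    have hω2 : FreeGroup.norm (v * FreeGroup.mk (b.drop (k - i)) * s⁻¹) ≤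
        FreeGroup.norm v + (k - i) := by
      have he : v * FreeGroup.mk (b.drop (k - i)) * s⁻¹ =
          v * (FreeGroup.mk (b.take (k - i)))⁻¹ := by
        rw [hsplit i hik]; group
      rw [he]
      calc FreeGroup.norm (v * (FreeGroup.mk (b.take (k - i)))⁻¹)
          ≤ FreeGroup.norm v + FreeGroup.norm (FreeGroup.mk (b.take (k - i)))⁻¹ :=
            FreeGroup.norm_mul_le _ _
        _ = FreeGroup.norm v + (k - i) := by rw [FreeGroup.norm_inv_eq, htakenorm i hik]
    omega
end

section
/- Let s ∈ F_X be a reduced word of length n in the free group on a finite set X with |X| > 1. Then |{ω ∈ F_X : |ω| + |ωs| ≤ n}| = n + 1. -/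
open Filter Pointwise

namespace FreeGroupAux

open FreeGroup

variable {α : Type*} [DecidableEq α]

lemma red_eq_of_length_eq {L₁ L₂ : List (α × Bool)} (h : FreeGroup.Red L₁ L₂)
    (hl : L₁.length = L₂.length) : L₁ = L₂ := by
  rcases Relation.ReflTransGen.cases_head h with rfl | ⟨L', hstep, hred⟩
  · rfl
  · have h1 := hstep.length
    have h2 := FreeGroup.Red.length_le hred
    omega

lemma toWord_mul_of_norm (a b : FreeGroup α) (h : norm (a * b) = norm a + norm b) :
    (a * b).toWord = a.toWord ++ b.toWord := by
  have hmk : a * b = mk (a.toWord ++ b.toWord) := by rw [← mul_mk, mk_toWord, mk_toWord]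
  have hred : FreeGroup.Red (a.toWord ++ b.toWord) ((a*b).toWord) := by
    rw [hmk, toWord_mk]; exact reduce.red
  have hlen : (a.toWord ++ b.toWord).length = (a*b).toWord.length := by
    simp only [List.length_append]
    exact (h.symm : norm a + norm b = norm (a*b))
  exact (red_eq_of_length_eq hred hlen).symm

lemma norm_take {s : FreeGroup α} {n : ℕ} (hs : norm s = n) {k : ℕ} (hk : k ≤ n) :
    norm (mk (s.toWord.take k)) = k ∧ norm (mk (s.toWord.drop k)) = n - k := by
  have hlen : s.toWord.length = n := hs
  have hsplit : s = mk (s.toWord.take k) * mk (s.toWord.drop k) := by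
    rw [mul_mk, List.take_append_drop, mk_toWord]
  have h1 : norm (mk (s.toWord.take k)) ≤ k := by
    calc norm (mk (s.toWord.take k)) ≤ (s.toWord.take k).length := norm_mk_le
    _ ≤ k := by simp [List.length_take]
  have h2 : norm (mk (s.toWord.drop k)) ≤ n - k := by
    calc norm (mk (s.toWord.drop k)) ≤ (s.toWord.drop k).length := norm_mk_le
    _ ≤ n - k := by simp [List.length_drop, hlen]
  have h3 : n ≤ norm (mk (s.toWord.take k)) + norm (mk (s.toWord.drop k)) := by
    rw [← hs]
    calc norm s = norm (mk (s.toWord.take k) * mk (s.toWord.drop k)) := by rw [← hsplit]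
    _ ≤ _ := norm_mul_le _ _
  omega

end FreeGroupAux

open FreeGroup FreeGroupAux in
/-- For a reduced word `s` of length `n` in `F_X` (`|X| > 1`),
`|{ω : |ω| + |ωs| ≤ n}| = n + 1`. -/
theorem stmt_13 (X : Type) [Fintype X] [DecidableEq X] (hX : 1 < Fintype.card X)
    (s : FreeGroup X) (n : ℕ) (hs : FreeGroup.norm s = n) :
    {ω : FreeGroup X | FreeGroup.norm ω + FreeGroup.norm (ω * s) ≤ n}.ncard = n + 1 := by
  have hseteq : {ω : FreeGroup X | FreeGroup.norm ω + FreeGroup.norm (ω * s) ≤ n}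
      = (fun k => (mk (s.toWord.take k))⁻¹) '' Set.Iic n := by
    ext ω
    simp only [Set.mem_setOf_eq, Set.mem_image, Set.mem_Iic]
    constructor
    · intro hω
      have htri : n ≤ norm ω + norm (ω * s) := by
        calc n = norm s := hs.symm
        _ = norm (ω⁻¹ * (ω * s)) := by rw [inv_mul_cancel_left]
        _ ≤ norm ω⁻¹ + norm (ω * s) := norm_mul_le _ _
        _ = norm ω + norm (ω * s) := by rw [norm_inv_eq]
      have heq : norm ω + norm (ω * s) = n := le_antisymm hω htri
      refine ⟨norm ω, by omega, ?_⟩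
      have hmul : norm (ω⁻¹ * (ω * s)) = norm ω⁻¹ + norm (ω * s) := by
        rw [inv_mul_cancel_left, hs, norm_inv_eq]; omega
      have hW := toWord_mul_of_norm ω⁻¹ (ω * s) hmul
      rw [inv_mul_cancel_left] at hW
      have htake : s.toWord.take (norm ω) = ω⁻¹.toWord := by
        rw [hW]
        have : (ω⁻¹.toWord).length = norm ω := norm_inv_eq
        rw [← this, List.take_left]
      rw [htake, mk_toWord, inv_inv]
    · rintro ⟨k, hk, rfl⟩
      obtain ⟨h1, h2⟩ := norm_take hs hk
      have hmul : (mk (s.toWord.take k))⁻¹ * s = mk (s.toWord.drop k) := by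
        rw [inv_mul_eq_iff_eq_mul, mul_mk, List.take_append_drop, mk_toWord]
      rw [norm_inv_eq, hmul, h1, h2]
      omega
  rw [hseteq]
  rw [Set.ncard_image_of_injOn, ← Finset.coe_Iic, Set.ncard_coe_finset, Nat.card_Iic]
  intro k1 hk1 k2 hk2 h
  have e1 := (norm_take hs hk1).1
  have e2 := (norm_take hs hk2).1
  have h' : FreeGroup.norm (mk (s.toWord.take k1))⁻¹ = FreeGroup.norm (mk (s.toWord.take k2))⁻¹ :=
    congrArg FreeGroup.norm h
  rwa [norm_inv_eq, norm_inv_eq, e1, e2] at h'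
end

section
/- Let s ∈ F_X be a reduced word of length k in the free group on a finite set X with |X| > 1. Then for every n ≥ k, |P(s,n)| ≤ (k+1)·|B_{⌊(n−k)/2⌋}|, where P(s,n) = {ω ∈ F_X : |ω| + |ωs| ≤ n}. -/
open Filter Pointwise

section helpers
variable {α : Type*} [DecidableEq α]

/-- adjacent non-cancellation predicate -/
def NCP {α : Type*} (a b : α × Bool) : Prop := ¬(a.1 = b.1 ∧ a.2 = !b.2)

lemma chain'_of_reduce_eq {L : List (α × Bool)} (h : FreeGroup.reduce L = L) :
    List.Chain' NCP L := by
  induction L with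
  | nil => exact List.isChain_nil
  | cons x L ih =>
    rw [FreeGroup.reduce.cons] at h
    cases hr : FreeGroup.reduce L with
    | nil =>
      rw [hr] at h
      change [x] = x :: L at h
      injection h with _ h2
      rw [← h2]; exact List.isChain_singleton x
    | cons hd tl =>
      rw [hr] at h
      change (if x.1 = hd.1 ∧ x.2 = !hd.2 then tl else x :: hd :: tl) = x :: L at h
      by_cases hc : x.1 = hd.1 ∧ x.2 = !hd.2
      · rw [if_pos hc] at h
        have h1 : tl.length = L.length + 1 := by rw [h]; rfl
        have h2 : (hd :: tl).length ≤ L.length := by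
          rw [← hr]; exact FreeGroup.reduce.red.length_le
        simp at h2; omega
      · rw [if_neg hc] at h
        injection h with _ h2
        have hred : FreeGroup.reduce L = L := by rw [hr, ← h2]
        rw [← h2]
        exact List.IsChain.cons_cons (fun hcc => hc hcc) (h2 ▸ ih hred)

lemma reduce_eq_of_chain' {L : List (α × Bool)} (h : List.Chain' NCP L) :
    FreeGroup.reduce L = L := by
  induction L with
  | nil => rfl
  | cons x L ih =>
    have ht := ih h.tail
    rw [FreeGroup.reduce.cons, ht]
    cases L with
    | nil => rfl
    | cons hd tl =>
      have hx : NCP x hd := (List.isChain_cons_cons.1 h).1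
      change (if x.1 = hd.1 ∧ x.2 = !hd.2 then tl else x :: hd :: tl) = x :: hd :: tl
      rw [if_neg hx]

lemma norm_mk_of_reduced {L : List (α × Bool)} (h : FreeGroup.reduce L = L) :
    FreeGroup.norm (FreeGroup.mk L) = L.length := by
  rw [FreeGroup.norm, FreeGroup.toWord_mk, h]

omit [DecidableEq α] in
lemma mk_cancel (L : List (α × Bool)) (x : α × Bool) :
    FreeGroup.mk (L ++ [(x.1, !x.2)]) * FreeGroup.mk [x] = FreeGroup.mk L := by
  rw [FreeGroup.mul_mk]
  have : L ++ [(x.1, !x.2)] ++ [x] = L ++ (x.1, !x.2) :: (x.1, !(!x.2)) :: [] := by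
    simp
  rw [this, ← FreeGroup.quot_mk_eq_mk, ← FreeGroup.quot_mk_eq_mk]
  have : (L ++ [] : List (α × Bool)) = L := by simp
  conv_rhs => rw [← this]
  exact Quot.sound (FreeGroup.Red.Step.not)

lemma key' (M : List (α × Bool)) (hM : FreeGroup.reduce M = M) (ω : FreeGroup α) :
    ∃ j ≤ M.length, 2 * FreeGroup.norm (ω * FreeGroup.mk (M.take j)) + M.length ≤
      FreeGroup.norm ω + FreeGroup.norm (ω * FreeGroup.mk M) := by
  induction M generalizing ω with
  | nil =>
    refine ⟨0, le_refl _, ?_⟩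
    simp [← FreeGroup.one_eq_mk]
    omega
  | cons x M' ih =>
    have hchain : List.Chain' NCP (x :: M') := chain'_of_reduce_eq hM
    have hM' : FreeGroup.reduce M' = M' := reduce_eq_of_chain' hchain.tail
    have hωred : FreeGroup.reduce ω.toWord = ω.toWord := FreeGroup.reduce_toWord ω
    have hωchain : List.Chain' NCP ω.toWord := chain'_of_reduce_eq hωred
    -- no-cancellation case, used twice
    have caseA : (∀ a ∈ ω.toWord.getLast?, NCP a x) →
        ∃ j ≤ (x :: M').length,
          2 * FreeGroup.norm (ω * FreeGroup.mk ((x :: M').take j)) + (x :: M').length ≤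
            FreeGroup.norm ω + FreeGroup.norm (ω * FreeGroup.mk (x :: M')) := by
      intro hj
      have hcat : List.Chain' NCP (ω.toWord ++ (x :: M')) := by
        apply List.isChain_append.2
        refine ⟨hωchain, hchain, ?_⟩
        intro a ha b hb
        simp only [List.head?_cons, Option.mem_some_iff] at hb
        rw [← hb]
        exact hj a ha
      have hmul : ω * FreeGroup.mk (x :: M') = FreeGroup.mk (ω.toWord ++ (x :: M')) := by
        conv_lhs => rw [← FreeGroup.mk_toWord (x := ω)]
        rw [FreeGroup.mul_mk]
      have hnorm : FreeGroup.norm (ω * FreeGroup.mk (x :: M')) =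
          FreeGroup.norm ω + (x :: M').length := by
        rw [hmul, norm_mk_of_reduced (reduce_eq_of_chain' hcat), List.length_append]
        rfl
      refine ⟨0, Nat.zero_le _, ?_⟩
      simp only [List.take_zero, ← FreeGroup.one_eq_mk, mul_one]
      omega
    rcases List.eq_nil_or_concat ω.toWord with hnil | ⟨L', a, hconcat'⟩
    · exact caseA (by simp [hnil])
    have hconcat : ω.toWord = L' ++ [a] := by simpa using hconcat'
    by_cases hcanc : NCP a x
    · refine caseA ?_
      intro a' ha'
      rw [hconcat] at ha'
      rw [List.getLast?_concat] at ha'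
      simp only [Option.mem_some_iff] at ha'
      rwa [← ha']
    · -- cancellation case
      have hax : a = (x.1, !x.2) := by
        simp only [NCP, not_not] at hcanc
        exact Prod.ext hcanc.1 hcanc.2
      have hω : ω = FreeGroup.mk (L' ++ [(x.1, !x.2)]) := by
        conv_lhs => rw [← FreeGroup.mk_toWord (x := ω)]
        rw [hconcat, hax]
      have hL' : FreeGroup.reduce L' = L' := by
        apply reduce_eq_of_chain'
        exact hωchain.prefix ⟨[a], hconcat.symm⟩
      have hω'' : ω * FreeGroup.mk [x] = FreeGroup.mk L' := by
        rw [hω]; exact mk_cancel L' x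
      have hnormω'' : FreeGroup.norm (ω * FreeGroup.mk [x]) = L'.length := by
        rw [hω'']; exact norm_mk_of_reduced hL'
      have hnormω : FreeGroup.norm ω = L'.length + 1 := by
        rw [FreeGroup.norm, hconcat, List.length_append, List.length_singleton]
      obtain ⟨j', hj'le, hIH⟩ := ih hM' (ω * FreeGroup.mk [x])
      refine ⟨j' + 1, by simpa using Nat.succ_le_succ hj'le, ?_⟩
      have htake : ω * FreeGroup.mk ((x :: M').take (j' + 1)) =
          (ω * FreeGroup.mk [x]) * FreeGroup.mk (M'.take j') := by
        rw [List.take_succ_cons, mul_assoc, FreeGroup.mul_mk]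
        rfl
      have hfull : ω * FreeGroup.mk (x :: M') = (ω * FreeGroup.mk [x]) * FreeGroup.mk M' := by
        rw [mul_assoc, FreeGroup.mul_mk]
        rfl
      rw [htake, hfull, List.length_cons]
      omega

lemma ball_finite_s14 (X : Type) [Fintype X] [DecidableEq X] (r : ℕ) : (ball X r).Finite := by
  have : ball X r = FreeGroup.toWord ⁻¹' {L : List (X × Bool) | L.length ≤ r} := rfl
  rw [this]
  exact Set.Finite.preimage (FreeGroup.toWord_injective.injOn) (List.finite_length_le _ r)

end helpers

/-- For a reduced word `s` of length `k` in `F_X` (`|X| > 1`) and `n ≥ k`,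
`|P(s,n)| ≤ (k+1)·|B_{⌊(n−k)/2⌋}|`. -/
theorem stmt_14 (X : Type) [Fintype X] [DecidableEq X] (hX : 1 < Fintype.card X)
    (s : FreeGroup X) (k : ℕ) (hs : FreeGroup.norm s = k) (n : ℕ) (hn : k ≤ n) :
    {ω : FreeGroup X | FreeGroup.norm ω + FreeGroup.norm (ω * s) ≤ n}.ncard ≤
      (k + 1) * (ball X ((n - k) / 2)).ncard := by
  classical
  set m := (n - k) / 2 with hm
  set M := s.toWord with hMdef
  have hMred : FreeGroup.reduce M = M := FreeGroup.reduce_toWord s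
  have hMlen : M.length = k := hs
  have hMk : FreeGroup.mk M = s := FreeGroup.mk_toWord
  set P := {ω : FreeGroup X | FreeGroup.norm ω + FreeGroup.norm (ω * s) ≤ n} with hP
  have hkey : ∀ ω : FreeGroup X, ∃ j ≤ M.length,
      2 * FreeGroup.norm (ω * FreeGroup.mk (M.take j)) + M.length ≤
        FreeGroup.norm ω + FreeGroup.norm (ω * FreeGroup.mk M) :=
    fun ω => key' M hMred ω
  set T : Set (FreeGroup X × Fin (k + 1)) := (ball X m) ×ˢ Set.univ with hT
  set f : FreeGroup X → FreeGroup X × Fin (k + 1) := fun ω =>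
    (ω * FreeGroup.mk (M.take (hkey ω).choose),
      ⟨(hkey ω).choose, Nat.lt_succ_of_le ((hkey ω).choose_spec.1.trans_eq hMlen)⟩) with hf
  have hmaps : ∀ ω ∈ P, f ω ∈ T := by
    intro ω hω
    have hspec := (hkey ω).choose_spec.2
    have h1 : FreeGroup.norm (ω * FreeGroup.mk M) = FreeGroup.norm (ω * s) := by rw [hMk]
    have hω' : FreeGroup.norm ω + FreeGroup.norm (ω * s) ≤ n := hω
    have hle : FreeGroup.norm (ω * FreeGroup.mk (M.take (hkey ω).choose)) ≤ m := by omega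
    exact ⟨hle, Set.mem_univ _⟩
  have hinj : Set.InjOn f P := by
    intro ω₁ _ ω₂ _ heq
    have h2 : (hkey ω₁).choose = (hkey ω₂).choose := congrArg (fun p => (p.2 : Fin (k+1)).val) heq
    have h1 := congrArg Prod.fst heq
    simp only [hf] at h1
    rw [h2] at h1
    exact mul_right_cancel h1
  have hTfin : T.Finite := (ball_finite_s14 X m).prod (Set.finite_univ)
  have hcard : P.ncard ≤ T.ncard := Set.ncard_le_ncard_of_injOn f hmaps hinj hTfin
  have hTcard : T.ncard = (ball X m).ncard * (k + 1) := by
    rw [hT, ← Nat.card_coe_set_eq, Nat.card_congr (Equiv.Set.prod _ _), Nat.card_prod,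
      Nat.card_coe_set_eq, Nat.card_coe_set_eq, Set.ncard_univ,
      Nat.card_eq_fintype_card, Fintype.card_fin]
  rw [hTcard, mul_comm] at hcard
  exact hcard
end

section
/- Define τ : F_X × F_X → F_X by τ(ω₁, ω₂) = ω₁⁻¹ω₂, where F_X is the free group on a finite set X with |X| > 1. For any S ⊆ F_X: S is negligible in F_X (i.e., |S ∩ B_n|/|B_n| → 0) if and only if τ⁻¹(S) is negligible in F_X × F_X (i.e., |τ⁻¹(S) ∩ B_n(F_X²)|/|B_n(F_X²)| → 0, where B_n(F_X²) is the ball for the length |(ω₁,ω₂)| = |ω₁| + |ω₂|). -/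
open Filter Pointwise

set_option linter.unusedSectionVars false

open FreeGroup List

namespace Stmt15

variable {X : Type} [DecidableEq X]

/-- `b` does not cancel `a` when written after it. -/
def nocc (a b : X × Bool) : Prop := b ≠ (a.1, !a.2)

instance : DecidableEq (X × Bool) := inferInstance

/-- A word is reduced. -/
def IsRed (L : List (X × Bool)) : Prop := List.Chain' nocc L

lemma nocc_iff {a b : X × Bool} : nocc a b ↔ ¬(a.1 = b.1 ∧ a.2 = !b.2) := by
  rcases a with ⟨a1, a2⟩; rcases b with ⟨b1, b2⟩
  simp only [nocc, Prod.ext_iff, not_and]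
  cases a2 <;> cases b2 <;> simp [eq_comm]

lemma reduce_eq_self {L : List (X × Bool)} (h : IsRed L) : reduce L = L := by
  induction L with
  | nil => rfl
  | cons x t ih =>
    have ht : IsRed t := h.tail
    rw [reduce.cons, ih ht]
    cases t with
    | nil => rfl
    | cons y t' =>
      have hx : nocc x y := (List.isChain_cons_cons.1 h).1
      simp only [if_neg (nocc_iff.1 hx)]

lemma isRed_reduce (L : List (X × Bool)) : IsRed (reduce L) := by
  induction L with
  | nil => exact List.isChain_nil
  | cons x t ih =>
    rw [reduce.cons]
    rcases hr : reduce t with _ | ⟨y, t'⟩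
    · simp [IsRed, List.Chain']
    · rw [hr] at ih
      by_cases hc : x.1 = y.1 ∧ x.2 = !y.2
      · simp only [if_pos hc]
        exact ih.tail
      · simp only [if_neg hc]
        exact List.isChain_cons_cons.2 ⟨nocc_iff.2 hc, ih⟩

lemma isRed_toWord (w : FreeGroup X) : IsRed w.toWord := by
  rw [← reduce_toWord]; exact isRed_reduce _

lemma isRed_iff {L : List (X × Bool)} : IsRed L ↔ reduce L = L :=
  ⟨reduce_eq_self, fun h => h ▸ isRed_reduce L⟩

lemma IsRed.take {L : List (X × Bool)} (h : IsRed L) (n : ℕ) : IsRed (L.take n) :=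
  (List.isChain_append.1 (by rwa [List.take_append_drop])).1

lemma IsRed.drop {L : List (X × Bool)} (h : IsRed L) (n : ℕ) : IsRed (L.drop n) :=
  (List.isChain_append.1 (by rwa [List.take_append_drop])).2.1

lemma norm_def (w : FreeGroup X) : w.norm = w.toWord.length := rfl

lemma norm_mk {L : List (X × Bool)} (h : IsRed L) : (FreeGroup.mk L).norm = L.length := by
  rw [norm_def, toWord_mk, reduce_eq_self h]

lemma invRev_concat (r : List (X × Bool)) (a : X × Bool) :
    invRev (r ++ [a]) = (a.1, !a.2) :: invRev r := by
  simp [invRev]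

/-- Main cancellation lemma for products of reduced words. -/
lemma red_append_aux : ∀ (n : ℕ) (L₁ L₂ : List (X × Bool)), L₁.length ≤ n → IsRed L₁ → IsRed L₂ →
    ∃ p r q, L₁ = p ++ r ∧ L₂ = invRev r ++ q ∧ reduce (L₁ ++ L₂) = p ++ q := by
  intro n
  induction n with
  | zero =>
    intro L₁ L₂ hl h1 h2
    refine ⟨[], [], L₂, ?_, by simp [invRev], ?_⟩
    · simpa using List.length_eq_zero_iff.1 (Nat.le_zero.1 hl)
    · have : L₁ = [] := List.length_eq_zero_iff.1 (Nat.le_zero.1 hl)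
      subst this
      simpa using reduce_eq_self h2
  | succ n ih =>
    intro L₁ L₂ hl h1 h2
    rcases L₁.eq_nil_or_concat with rfl | ⟨M, a, rfl⟩
    · exact ⟨[], [], L₂, by simp, by simp [invRev], by simpa using reduce_eq_self h2⟩
    rw [List.concat_eq_append] at *
    cases L₂ with
    | nil =>
      exact ⟨M ++ [a], [], [], by simp, by simp [invRev], by simpa using reduce_eq_self h1⟩
    | cons b N =>
      by_cases hb : b = (a.1, !a.2)
      · subst hb
        have hM : IsRed M := (List.isChain_append.1 h1).1
        have hN : IsRed N := h2.tail
        obtain ⟨p, r, q, e1, e2, e3⟩ := ih M N (by simp at hl; omega) hM hN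
        refine ⟨p, r ++ [a], q, by rw [e1]; simp, ?_, ?_⟩
        · simp [invRev_concat, e2, invRev]
        · have hstep : Red.Step (M ++ (a.1, a.2) :: (a.1, !a.2) :: N) (M ++ N) := by
            have := @FreeGroup.Red.Step.not_rev X M N a.1 (!a.2)
            simpa [Bool.not_not] using this
          have : reduce ((M ++ [a]) ++ (a.1, !a.2) :: N) = reduce (M ++ N) := by
            have ha : (M ++ [a]) ++ (a.1, !a.2) :: N = M ++ (a.1, a.2) :: (a.1, !a.2) :: N := by
              simp
            rw [ha]
            exact reduce.Step.eq hstep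
          rw [this, e3]
      · refine ⟨M ++ [a], [], b :: N, by simp, by simp [invRev], ?_⟩
        apply reduce_eq_self
        refine List.isChain_append.2 ⟨h1, h2, ?_⟩
        intro x hx y hy
        simp [List.getLast?_append, List.getLast?_concat] at hx
        simp at hy
        subst hx; subst hy
        exact hb

end Stmt15

namespace Stmt15
open FreeGroup List
variable {X : Type} [DecidableEq X]

lemma norm_mk_le_iff (w : FreeGroup X) : w = FreeGroup.mk w.toWord := (mk_toWord).symm

/-- Group-level cancellation: structure of the product of two elements. -/
lemma cancel (w s : FreeGroup X) :
    ∃ c : ℕ, c ≤ w.norm ∧ c ≤ s.norm ∧ (w * s).norm + 2 * c = w.norm + s.norm ∧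
      w * FreeGroup.mk (s.toWord.take c) = FreeGroup.mk (w.toWord.take (w.norm - c)) := by
  obtain ⟨p, r, q, e1, e2, e3⟩ :=
    red_append_aux (w.toWord.length) w.toWord s.toWord le_rfl (isRed_toWord w) (isRed_toWord s)
  refine ⟨r.length, ?_, ?_, ?_, ?_⟩
  · rw [norm_def, e1]; simp
  · rw [norm_def, e2]; simp [invRev_length]
  · have hw : w.norm = p.length + r.length := by rw [norm_def, e1]; simp
    have hs : s.norm = r.length + q.length := by
      rw [norm_def, e2]; simp [invRev_length]
    have hws : (w * s).norm = p.length + q.length := by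
      have : w * s = FreeGroup.mk (w.toWord ++ s.toWord) := by
        conv_lhs => rw [← mk_toWord (x := w), ← mk_toWord (x := s)]
        rw [mul_mk]
      rw [norm_def, this, toWord_mk, e3]; simp
    omega
  · have htake : s.toWord.take r.length = invRev r := by
      rw [e2]
      exact List.take_left' (by simp [invRev_length])
    have htakew : w.toWord.take (w.norm - r.length) = p := by
      have hw : w.norm = p.length + r.length := by rw [norm_def, e1]; simp
      rw [e1, hw]
      exact List.take_left' (by omega)
    rw [htake, htakew]
    conv_lhs => rw [← mk_toWord (x := w), e1]
    rw [← mul_mk, mul_assoc, ← inv_mk, mul_inv_cancel, mul_one]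

/-- The canonical cancellation amount. -/
def cOf (w s : FreeGroup X) : ℕ := (w.norm + s.norm - (w * s).norm) / 2

lemma cOf_spec (w s : FreeGroup X) :
    cOf w s ≤ w.norm ∧ cOf w s ≤ s.norm ∧
    (w * s).norm + 2 * cOf w s = w.norm + s.norm ∧
      w * FreeGroup.mk (s.toWord.take (cOf w s)) =
        FreeGroup.mk (w.toWord.take (w.norm - cOf w s)) := by
  obtain ⟨c, h1, h2, h3, h4⟩ := cancel w s
  have : cOf w s = c := by unfold cOf; omega
  rw [this]
  exact ⟨h1, h2, h3, h4⟩

lemma norm_mk_take (w : FreeGroup X) (c : ℕ) :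
    (FreeGroup.mk (w.toWord.take c)).norm = min c w.norm := by
  rw [norm_mk ((isRed_toWord w).take c), List.length_take, norm_def]

lemma mk_take_mul_mk_drop (w : FreeGroup X) (c : ℕ) :
    FreeGroup.mk (w.toWord.take c) * FreeGroup.mk (w.toWord.drop c) = w := by
  rw [mul_mk, List.take_append_drop, mk_toWord]

lemma norm_mk_drop (w : FreeGroup X) (c : ℕ) :
    (FreeGroup.mk (w.toWord.drop c)).norm = w.norm - c := by
  rw [norm_mk ((isRed_toWord w).drop c), List.length_drop, norm_def]

end Stmt15

namespace Stmt15
open FreeGroup List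
variable {X : Type} [Fintype X] [DecidableEq X]

lemma finite_ball (n : ℕ) : (ball X n).Finite := by
  have : ball X n = FreeGroup.toWord ⁻¹' {L : List (X × Bool) | L.length ≤ n} := rfl
  rw [this]
  exact Set.Finite.preimage (toWord_injective.injOn) (List.finite_length_le _ n)

lemma sphere_subset_ball (n : ℕ) : sphere X n ⊆ ball X n := fun w hw => le_of_eq hw

lemma finite_sphere (n : ℕ) : (sphere X n).Finite :=
  (finite_ball n).subset (sphere_subset_ball n)

lemma finite_ball2 (n : ℕ) : (ball2 X n).Finite := by
  apply Set.Finite.subset ((finite_ball (X := X) n).prod (finite_ball (X := X) n))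
  rintro ⟨u, v⟩ h
  exact ⟨le_trans (Nat.le_add_right _ _) h, le_trans (Nat.le_add_left _ _) h⟩

/-- The number of allowed next letters. -/
noncomputable def nxtEquiv (a : X × Bool) :
    {b : X × Bool // b ≠ (a.1, !a.2)} ≃ Fin (2 * Fintype.card X - 1) :=
  Fintype.equivFinOfCardEq (by
    rw [Fintype.card_subtype_compl, Fintype.card_subtype_eq]
    simp [mul_comm])

noncomputable def genEquiv (X : Type) [Fintype X] [DecidableEq X] :
    (X × Bool) ≃ Fin (2 * Fintype.card X) :=
  Fintype.equivFinOfCardEq (by simp [mul_comm])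

noncomputable def gen (j : Fin (2 * Fintype.card X - 1)) : X × Bool :=
  (genEquiv X).symm (Fin.castLE (by omega) j)

lemma gen_inj : Function.Injective (gen (X := X)) := by
  intro a b h
  have := (genEquiv X).symm.injective h
  exact Fin.castLE_injective _ this

/-- The letter stream driven by `f`. -/
noncomputable def lt (f : ℕ → Fin (2 * Fintype.card X - 1)) : ℕ → X × Bool
  | 0 => gen (f 0)
  | (i + 1) => ((nxtEquiv (lt f i)).symm (f (i + 1))).val

lemma lt_nocc (f : ℕ → Fin (2 * Fintype.card X - 1)) (i : ℕ) :
    nocc (lt f i) (lt f (i + 1)) :=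
  ((nxtEquiv (lt f i)).symm (f (i + 1))).2

/-- The word of length `k` driven by `f`. -/
noncomputable def wrd (f : ℕ → Fin (2 * Fintype.card X - 1)) (k : ℕ) : List (X × Bool) :=
  (List.range k).map (lt f)

lemma isRed_wrd (f : ℕ → Fin (2 * Fintype.card X - 1)) (k : ℕ) : IsRed (wrd f k) := by
  rw [IsRed, List.Chain', List.isChain_iff_getElem]
  intro i h
  simp only [wrd, List.length_map, List.length_range] at h
  simp only [wrd, List.getElem_map, List.getElem_range]
  exact lt_nocc f i

lemma norm_mk_wrd (f : ℕ → Fin (2 * Fintype.card X - 1)) (k : ℕ) :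
    (FreeGroup.mk (wrd f k)).norm = k := by
  rw [norm_mk (isRed_wrd f k), wrd, List.length_map, List.length_range]

lemma lt_congr (f g : ℕ → Fin (2 * Fintype.card X - 1)) (i : ℕ)
    (h : ∀ j ≤ i, f j = g j) : lt f i = lt g i := by
  induction i with
  | zero => simp [lt, h 0 le_rfl]
  | succ i ih =>
    have h1 : lt f i = lt g i := ih (fun j hj => h j (le_trans hj (Nat.le_succ i)))
    show ((nxtEquiv (lt f i)).symm (f (i + 1))).val = ((nxtEquiv (lt g i)).symm (g (i + 1))).val
    rw [h1, h (i+1) le_rfl]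

lemma sphere_lower (k : ℕ) :
    (2 * Fintype.card X - 1) ^ k ≤ (sphere X k).ncard := by
  rcases Nat.eq_zero_or_pos k with rfl | hk
  · have : (1 : FreeGroup X) ∈ sphere X 0 := by
      simp [sphere, FreeGroup.norm_one]
    simpa [Nat.one_le_iff_ne_zero, Nat.pos_iff_ne_zero] using (Set.ncard_pos (finite_sphere 0)).2 ⟨1, this⟩
  · set α := 2 * Fintype.card X - 1
    -- injection from (Fin k → Fin α) into sphere X k
    have hmin : ∀ i : ℕ, min i (k - 1) < k := fun i => by omega
    set ext : (Fin k → Fin α) → (ℕ → Fin α) := fun F i => F ⟨min i (k-1), hmin i⟩ with hext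
    have hι : ∀ F : Fin k → Fin α, FreeGroup.mk (wrd (ext F) k) ∈ sphere X k :=
      fun F => norm_mk_wrd (ext F) k
    have hinj : Set.InjOn (fun F : Fin k → Fin α => FreeGroup.mk (wrd (ext F) k)) Set.univ := by
      intro F _ G _ hFG
      simp only at hFG
      have hww : wrd (ext F) k = wrd (ext G) k := by
        have := congrArg FreeGroup.toWord hFG
        rwa [toWord_mk, toWord_mk, reduce_eq_self (isRed_wrd _ _),
          reduce_eq_self (isRed_wrd _ _)] at this
      have he : ∀ i, i < k → lt (ext F) i = lt (ext G) i := by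
        intro i hi
        have h1 := List.getElem_of_eq hww (i := i) (by simp [wrd]; exact hi)
        simpa [wrd] using h1
      have key : ∀ i, i < k → ext F i = ext G i ∧ lt (ext F) i = lt (ext G) i := by
        intro i
        induction i with
        | zero =>
          intro hi
          have h0 := he 0 hi
          have : ext F 0 = ext G 0 := by
            have := h0
            simp only [lt] at this
            exact gen_inj this
          exact ⟨this, h0⟩
        | succ i ih =>
          intro hi
          have hii := ih (by omega)
          have h1 := he (i+1) hi
          simp only [lt] at h1
          rw [hii.2] at h1
          exact ⟨(nxtEquiv (lt (ext G) i)).symm.injective (Subtype.coe_injective h1),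
            he (i+1) hi⟩
      funext j
      have hkey := (key j j.isLt).1
      have hj : ext F j = F j := by
        simp only [hext]
        congr 1
        exact Fin.ext (by have := j.isLt; simp; omega)
      have hj' : ext G j = G j := by
        simp only [hext]
        congr 1
        exact Fin.ext (by have := j.isLt; simp; omega)
      rw [← hj, ← hj', hkey]
    calc α ^ k = (Set.univ : Set (Fin k → Fin α)).ncard := by
          rw [Set.ncard_univ, Nat.card_eq_fintype_card]
          simp [Fintype.card_fun]
      _ ≤ (sphere X k).ncard :=
          Set.ncard_le_ncard_of_injOn _ (fun F _ => hι F) hinj (finite_sphere k)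

/-- Encoding of the next letter. -/
noncomputable def code (a b : X × Bool) : Fin (2 * Fintype.card X - 1) :=
  if h : b ≠ (a.1, !a.2) then nxtEquiv a ⟨b, h⟩
  else nxtEquiv a ⟨(a.1, a.2), by
    intro hcon
    have := congrArg Prod.snd hcon
    simp at this⟩

lemma code_inj {a b b' : X × Bool} (hb : b ≠ (a.1, !a.2)) (hb' : b' ≠ (a.1, !a.2))
    (h : code a b = code a b') : b = b' := by
  rw [code, dif_pos hb, code, dif_pos hb'] at h
  exact congrArg Subtype.val ((nxtEquiv a).injective h)

lemma sphere_upper (z : X × Bool) (k : ℕ) :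
    (sphere X (k + 1)).ncard ≤ 2 * Fintype.card X * (2 * Fintype.card X - 1) ^ k := by
  set α := 2 * Fintype.card X - 1
  set enc : FreeGroup X → (X × Bool) × (Fin k → Fin α) := fun w =>
    (w.toWord.getD 0 z, fun i => code (w.toWord.getD i z) (w.toWord.getD (i+1) z)) with henc
  have hinj : Set.InjOn enc (sphere X (k+1)) := by
    intro w hw w' hw' hww
    have hlen : w.toWord.length = k + 1 := hw
    have hlen' : w'.toWord.length = k + 1 := hw'
    have hgetD : ∀ i, i ≤ k → w.toWord.getD i z = w'.toWord.getD i z := by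
      intro i
      induction i with
      | zero => intro _; exact congrArg Prod.fst hww
      | succ i ih =>
        intro hi
        have h1 : i ≤ k := by omega
        have hprev := ih h1
        have hcomp := congrArg (fun p => p.2 ⟨i, by omega⟩) hww
        simp only [henc] at hcomp
        rw [hprev] at hcomp
        have hvalid : ∀ (u : FreeGroup X), u.toWord.length = k + 1 →
            u.toWord.getD (i+1) z ≠ ((u.toWord.getD i z).1, !(u.toWord.getD i z).2) := by
          intro u hu
          have hred := isRed_toWord u
          rw [IsRed, List.Chain', List.isChain_iff_getElem] at hred
          have h2 := hred i (by omega)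
          have e1 : u.toWord.getD i z = u.toWord.get ⟨i, by omega⟩ := by
            rw [List.getD_eq_getElem _ z (by omega)]; simp
          have e2 : u.toWord.getD (i+1) z = u.toWord.get ⟨i+1, by omega⟩ := by
            rw [List.getD_eq_getElem _ z (by omega)]; simp
          rw [e1, e2]
          exact h2
        have hv1 : w.toWord.getD (i+1) z ≠
            ((w'.toWord.getD i z).1, !(w'.toWord.getD i z).2) := hprev ▸ hvalid w hlen
        exact code_inj hv1 (hvalid w' hlen') hcomp
    have : w.toWord = w'.toWord := by
      apply List.ext_getElem (by rw [hlen, hlen'])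
      intro i h1 h2
      have := hgetD i (by omega)
      rwa [List.getD_eq_getElem _ z (by omega), List.getD_eq_getElem _ z (by omega)] at this
    exact toWord_injective this
  calc (sphere X (k+1)).ncard ≤ (Set.univ : Set ((X × Bool) × (Fin k → Fin α))).ncard :=
        Set.ncard_le_ncard_of_injOn enc (fun w _ => Set.mem_univ _) hinj Set.finite_univ
    _ = 2 * Fintype.card X * α ^ k := by
        rw [Set.ncard_univ, Nat.card_eq_fintype_card]
        simp [Fintype.card_fun, mul_comm]


lemma ncard_ball_zero : (ball X 0).ncard = 1 := by
  have : ball X 0 = {1} := by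
    ext w
    simp [ball, FreeGroup.norm_eq_zero]
  rw [this, Set.ncard_singleton]

lemma bca_upper (hX : 1 < Fintype.card X) (n : ℕ) :
    (ball X n).ncard ≤ 4 * Fintype.card X * (2 * Fintype.card X - 1) ^ n := by
  set d := Fintype.card X
  set α := 2 * d - 1 with hα
  have hα3 : 3 ≤ α := by omega
  have hz : Nonempty X := Fintype.card_pos_iff.1 (by omega)
  obtain ⟨x0⟩ := hz
  induction n with
  | zero => rw [ncard_ball_zero]; simp; omega
  | succ n ih =>
    have hsub : ball X (n+1) ⊆ ball X n ∪ sphere X (n+1) := by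
      intro w hw
      rcases Nat.lt_or_ge w.norm (n+1) with h | h
      · exact Or.inl (by simpa [ball] using Nat.lt_succ_iff.1 h)
      · exact Or.inr (le_antisymm hw h)
    calc (ball X (n+1)).ncard ≤ (ball X n ∪ sphere X (n+1)).ncard :=
          Set.ncard_le_ncard hsub ((finite_ball n).union (finite_sphere (n+1)))
      _ ≤ (ball X n).ncard + (sphere X (n+1)).ncard := Set.ncard_union_le _ _
      _ ≤ 4 * d * α ^ n + 2 * d * α ^ n := Nat.add_le_add ih (sphere_upper (x0, true) n)
      _ = 6 * d * α ^ n := by ring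
      _ ≤ (4 * d * α) * α ^ n := Nat.mul_le_mul_right _ (by nlinarith)
      _ = 4 * d * α ^ (n+1) := by ring
    
lemma bca_lower (n : ℕ) : (2 * Fintype.card X - 1) ^ n ≤ (ball X n).ncard :=
  le_trans (sphere_lower n) (Set.ncard_le_ncard (sphere_subset_ball n) (finite_ball n))

lemma b2_lower (n : ℕ) :
    (n + 1) * (2 * Fintype.card X - 1) ^ n ≤ (ball2 X n).ncard := by
  classical
  set α := 2 * Fintype.card X - 1
  set T : Finset (FreeGroup X × FreeGroup X) :=
    (Finset.range (n+1)).biUnion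
      (fun k => (finite_sphere (X := X) k).toFinset ×ˢ (finite_sphere (X := X) (n - k)).toFinset)
    with hT
  have hsub : T ⊆ (finite_ball2 (X := X) n).toFinset := by
    intro p hp
    rw [hT, Finset.mem_biUnion] at hp
    obtain ⟨k, hk, hpk⟩ := hp
    rw [Finset.mem_product, Set.Finite.mem_toFinset, Set.Finite.mem_toFinset] at hpk
    rw [Set.Finite.mem_toFinset]
    have h1 : p.1.norm = k := hpk.1
    have h2 : p.2.norm = n - k := hpk.2
    have : k ≤ n := by simpa using Nat.lt_succ_iff.1 (Finset.mem_range.1 hk)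
    simp only [ball2, Set.mem_setOf_eq, h1, h2]
    omega
  have hdisj : ∀ k ∈ Finset.range (n+1), ∀ k' ∈ Finset.range (n+1), k ≠ k' →
      Disjoint ((finite_sphere (X := X) k).toFinset ×ˢ (finite_sphere (X := X) (n - k)).toFinset)
        ((finite_sphere (X := X) k').toFinset ×ˢ (finite_sphere (X := X) (n - k')).toFinset) := by
    intro k _ k' _ hkk'
    rw [Finset.disjoint_left]
    intro p hp hp'
    rw [Finset.mem_product, Set.Finite.mem_toFinset, Set.Finite.mem_toFinset] at hp hp'
    exact hkk' (hp.1.symm.trans hp'.1)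
  calc (n+1) * α ^ n = ∑ k ∈ Finset.range (n+1), α ^ k * α ^ (n - k) := by
        rw [Finset.sum_congr rfl (fun k hk => ?_), Finset.sum_const, Finset.card_range,
          smul_eq_mul]
        rw [← pow_add]
        congr 1
        have := Finset.mem_range.1 hk
        omega
    _ ≤ ∑ k ∈ Finset.range (n+1),
          ((finite_sphere (X := X) k).toFinset ×ˢ (finite_sphere (X := X) (n - k)).toFinset).card := by
        apply Finset.sum_le_sum
        intro k _
        rw [Finset.card_product]
        apply Nat.mul_le_mul
        · rw [← Set.ncard_eq_toFinset_card (sphere X k) (finite_sphere k)]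
          exact sphere_lower k
        · rw [← Set.ncard_eq_toFinset_card (sphere X (n-k)) (finite_sphere (n-k))]
          exact sphere_lower (n-k)
    _ = T.card := (Finset.card_biUnion hdisj).symm
    _ ≤ (finite_ball2 (X := X) n).toFinset.card := Finset.card_le_card hsub
    _ = (ball2 X n).ncard := (Set.ncard_eq_toFinset_card _ _).symm

lemma b2_upper (hX : 1 < Fintype.card X) (n : ℕ) :
    (ball2 X n).ncard ≤
      (n + 1) * (4 * Fintype.card X * (4 * Fintype.card X) * (2 * Fintype.card X - 1) ^ n) := by
  classical
  set d := Fintype.card X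
  set α := 2 * d - 1 with hα
  set T : Finset (FreeGroup X × FreeGroup X) :=
    (Finset.range (n+1)).biUnion
      (fun k => (finite_sphere (X := X) k).toFinset ×ˢ (finite_ball (X := X) (n - k)).toFinset)
    with hT
  have hsub : (finite_ball2 (X := X) n).toFinset ⊆ T := by
    intro p hp
    rw [Set.Finite.mem_toFinset] at hp
    have hp' : p.1.norm + p.2.norm ≤ n := hp
    rw [hT, Finset.mem_biUnion]
    refine ⟨p.1.norm, Finset.mem_range.2 (by omega), ?_⟩
    rw [Finset.mem_product, Set.Finite.mem_toFinset, Set.Finite.mem_toFinset]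
    exact ⟨rfl, by simp only [ball, Set.mem_setOf_eq]; omega⟩
  calc (ball2 X n).ncard = (finite_ball2 (X := X) n).toFinset.card :=
        Set.ncard_eq_toFinset_card _ _
    _ ≤ T.card := Finset.card_le_card hsub
    _ ≤ ∑ k ∈ Finset.range (n+1),
          ((finite_sphere (X := X) k).toFinset ×ˢ (finite_ball (X := X) (n - k)).toFinset).card :=
        Finset.card_biUnion_le
    _ ≤ ∑ k ∈ Finset.range (n+1), (4 * d * (4 * d) * α ^ n) := by
        apply Finset.sum_le_sum
        intro k hk
        rw [Finset.card_product]
        have h1 : (finite_sphere (X := X) k).toFinset.card ≤ 4 * d * α ^ k := by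
          rw [← Set.ncard_eq_toFinset_card _ (finite_sphere k)]
          exact le_trans (Set.ncard_le_ncard (sphere_subset_ball k) (finite_ball k))
            (bca_upper hX k)
        have h2 : (finite_ball (X := X) (n-k)).toFinset.card ≤ 4 * d * α ^ (n-k) := by
          rw [← Set.ncard_eq_toFinset_card _ (finite_ball (n-k))]
          exact bca_upper hX (n-k)
        calc ((finite_sphere (X := X) k).toFinset.card) *
              ((finite_ball (X := X) (n-k)).toFinset.card)
            ≤ (4 * d * α ^ k) * (4 * d * α ^ (n-k)) := Nat.mul_le_mul h1 h2
          _ = 4 * d * (4 * d) * (α ^ k * α ^ (n-k)) := by ring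
          _ = 4 * d * (4 * d) * α ^ n := by
              rw [← pow_add]
              congr 2
              have := Finset.mem_range.1 hk
              omega
    _ = (n + 1) * (4 * d * (4 * d) * α ^ n) := by
        rw [Finset.sum_const, Finset.card_range, smul_eq_mul]

variable (S : Set (FreeGroup X))

lemma finite_Sball (m : ℕ) : (S ∩ ball X m).Finite := (finite_ball m).inter_of_right S

lemma finite_Ssphere (m : ℕ) : (S ∩ sphere X m).Finite := (finite_sphere m).inter_of_right S

lemma finite_count (n : ℕ) :
    (((fun p : FreeGroup X × FreeGroup X => p.1⁻¹ * p.2) ⁻¹' S) ∩ ball2 X n).Finite :=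
  (finite_ball2 n).inter_of_right _

lemma nSb_le_sum (m : ℕ) :
    (S ∩ ball X m).ncard ≤ ∑ ℓ ∈ Finset.range (m+1), (S ∩ sphere X ℓ).ncard := by
  classical
  have hsub : (finite_Sball S m).toFinset ⊆
      (Finset.range (m+1)).biUnion (fun ℓ => (finite_Ssphere S ℓ).toFinset) := by
    intro w hw
    rw [Set.Finite.mem_toFinset] at hw
    rw [Finset.mem_biUnion]
    exact ⟨w.norm, Finset.mem_range.2 (Nat.lt_succ_of_le hw.2), by
      rw [Set.Finite.mem_toFinset]; exact ⟨hw.1, rfl⟩⟩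
  calc (S ∩ ball X m).ncard = (finite_Sball S m).toFinset.card :=
        Set.ncard_eq_toFinset_card _ _
    _ ≤ _ := Finset.card_le_card hsub
    _ ≤ ∑ ℓ ∈ Finset.range (m+1), (finite_Ssphere S ℓ).toFinset.card := Finset.card_biUnion_le
    _ = ∑ ℓ ∈ Finset.range (m+1), (S ∩ sphere X ℓ).ncard := by
        refine Finset.sum_congr rfl (fun ℓ _ => ?_)
        rw [Set.ncard_eq_toFinset_card _ (finite_Ssphere S ℓ)]

lemma count_lower (n : ℕ) :
    (n + 1) * (S ∩ sphere X n).ncard ≤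
      (((fun p : FreeGroup X × FreeGroup X => p.1⁻¹ * p.2) ⁻¹' S) ∩ ball2 X n).ncard := by
  classical
  set g : FreeGroup X × ℕ → FreeGroup X × FreeGroup X := fun p =>
    ((FreeGroup.mk ((FreeGroup.toWord p.1).take p.2))⁻¹,
      (FreeGroup.mk ((FreeGroup.toWord p.1).take p.2))⁻¹ * p.1) with hg
  set D : Finset (FreeGroup X × ℕ) :=
    (finite_Ssphere S n).toFinset ×ˢ Finset.range (n+1) with hD
  have hnorm : ∀ s : FreeGroup X, s.norm = n → ∀ c ≤ n,
      ((FreeGroup.mk ((FreeGroup.toWord s).take c))⁻¹).norm = c := by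
    intro s hs c hc
    rw [FreeGroup.norm_inv_eq, norm_mk_take, hs]
    omega
  have hmem : ∀ p ∈ D, g p ∈ (finite_count S n).toFinset := by
    rintro ⟨s, c⟩ hp
    rw [hD, Finset.mem_product, Set.Finite.mem_toFinset, Finset.mem_range] at hp
    obtain ⟨⟨hsS, hsn⟩, hc⟩ := hp
    have hc' : c ≤ n := Nat.lt_succ_iff.1 hc
    rw [Set.Finite.mem_toFinset]
    have hmul : (FreeGroup.mk ((FreeGroup.toWord s).take c))⁻¹ * s =
        FreeGroup.mk ((FreeGroup.toWord s).drop c) := by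
      calc (FreeGroup.mk ((FreeGroup.toWord s).take c))⁻¹ * s
          = (FreeGroup.mk ((FreeGroup.toWord s).take c))⁻¹ *
            (FreeGroup.mk ((FreeGroup.toWord s).take c) *
              FreeGroup.mk ((FreeGroup.toWord s).drop c)) := by
            rw [mk_take_mul_mk_drop s c]
        _ = FreeGroup.mk ((FreeGroup.toWord s).drop c) := inv_mul_cancel_left _ _
    refine ⟨?_, ?_⟩
    · show ((FreeGroup.mk ((FreeGroup.toWord s).take c))⁻¹)⁻¹ *
        ((FreeGroup.mk ((FreeGroup.toWord s).take c))⁻¹ * s) ∈ S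
      rw [inv_mul_cancel_left]
      exact hsS
    · show ((FreeGroup.mk ((FreeGroup.toWord s).take c))⁻¹).norm +
        ((FreeGroup.mk ((FreeGroup.toWord s).take c))⁻¹ * s).norm ≤ n
      rw [hnorm s hsn c hc', hmul, norm_mk_drop, hsn]
      omega
  have hinj : Set.InjOn g D := by
    rintro ⟨s, c⟩ hp ⟨s', c'⟩ hp' heq
    rw [hD, Finset.mem_coe, Finset.mem_product, Set.Finite.mem_toFinset, Finset.mem_range] at hp hp'
    have h1 := congrArg Prod.fst heq
    have h2 := congrArg Prod.snd heq
    simp only [hg] at h1 h2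
    rw [h1] at h2
    have hss : s = s' := mul_left_cancel h2
    have hcc : c = c' := by
      have e1 := hnorm s hp.1.2 c (Nat.lt_succ_iff.1 hp.2)
      have e2 := hnorm s' hp'.1.2 c' (Nat.lt_succ_iff.1 hp'.2)
      rw [← e1, ← e2, ← hss, h1, hss]
    rw [hss, hcc]
  calc (n + 1) * (S ∩ sphere X n).ncard = D.card := by
        rw [hD, Finset.card_product, Set.ncard_eq_toFinset_card _ (finite_Ssphere S n),
          Finset.card_range, mul_comm]
    _ ≤ (finite_count S n).toFinset.card := Finset.card_le_card_of_injOn g hmem hinj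
    _ = _ := (Set.ncard_eq_toFinset_card _ _).symm

lemma count_upper (n : ℕ) :
    (((fun p : FreeGroup X × FreeGroup X => p.1⁻¹ * p.2) ⁻¹' S) ∩ ball2 X n).ncard ≤
      ∑ ℓ ∈ Finset.range (n+1),
        (S ∩ sphere X ℓ).ncard * ((n+1) * (ball X ((n - ℓ)/2)).ncard) := by
  classical
  set f : FreeGroup X × FreeGroup X → FreeGroup X × (ℕ × FreeGroup X) := fun p =>
    (p.1⁻¹ * p.2, (cOf p.1 (p.1⁻¹ * p.2),
      p.1 * FreeGroup.mk ((FreeGroup.toWord (p.1⁻¹ * p.2)).take (cOf p.1 (p.1⁻¹ * p.2))))) with hf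
  set T : Finset (FreeGroup X × (ℕ × FreeGroup X)) :=
    (Finset.range (n+1)).biUnion (fun ℓ => (finite_Ssphere S ℓ).toFinset ×ˢ
      (Finset.range (n+1) ×ˢ (finite_ball (X := X) ((n - ℓ)/2)).toFinset)) with hT
  have key : ∀ p : FreeGroup X × FreeGroup X,
      p ∈ (finite_count S n).toFinset →
      (p.1⁻¹ * p.2).norm ≤ n ∧ cOf p.1 (p.1⁻¹ * p.2) ≤ n ∧
        (p.1 * FreeGroup.mk ((FreeGroup.toWord (p.1⁻¹ * p.2)).take
          (cOf p.1 (p.1⁻¹ * p.2)))).norm ≤ (n - (p.1⁻¹ * p.2).norm)/2 := by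
    rintro ⟨w₁, w₂⟩ hp
    rw [Set.Finite.mem_toFinset] at hp
    obtain ⟨hS, hb⟩ := hp
    have hb' : w₁.norm + w₂.norm ≤ n := hb
    set s := w₁⁻¹ * w₂ with hs
    have hw2 : w₁ * s = w₂ := by rw [hs, mul_inv_cancel_left]
    obtain ⟨hc1, hc2, hc3, hc4⟩ := cOf_spec w₁ s
    have hsn : s.norm ≤ n := by
      calc s.norm ≤ w₁⁻¹.norm + w₂.norm := FreeGroup.norm_mul_le _ _
        _ = w₁.norm + w₂.norm := by rw [FreeGroup.norm_inv_eq]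
        _ ≤ n := hb'
    refine ⟨hsn, le_trans hc1 (by omega), ?_⟩
    rw [hc4, norm_mk_take]
    have hnorm2 : (w₁ * s).norm = w₂.norm := by rw [hw2]
    rw [Nat.le_div_iff_mul_le (by norm_num)]
    omega
  have hmem : ∀ p ∈ (finite_count S n).toFinset, f p ∈ T := by
    rintro ⟨w₁, w₂⟩ hp
    obtain ⟨h1, h2, h3⟩ := key _ hp
    dsimp only at h1 h2 h3
    rw [Set.Finite.mem_toFinset] at hp
    rw [hT, Finset.mem_biUnion]
    simp only [hf]
    refine ⟨(w₁⁻¹ * w₂).norm, Finset.mem_range.2 (by omega), ?_⟩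
    rw [Finset.mem_product]
    dsimp only
    refine ⟨?_, ?_⟩
    · rw [Set.Finite.mem_toFinset]
      exact ⟨hp.1, rfl⟩
    · rw [Finset.mem_product]
      refine ⟨Finset.mem_range.2 (by omega), ?_⟩
      rw [Set.Finite.mem_toFinset]
      exact h3
  have hinj : Set.InjOn f ((finite_count S n).toFinset : Set (FreeGroup X × FreeGroup X)) := by
    rintro ⟨w₁, w₂⟩ hp ⟨v₁, v₂⟩ hq heq
    have e1 := congrArg Prod.fst heq
    have e2 := congrArg (fun q : FreeGroup X × ℕ × FreeGroup X => q.2.1) heq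
    have e3 := congrArg (fun q : FreeGroup X × ℕ × FreeGroup X => q.2.2) heq
    simp only [hf] at e1 e2 e3
    rw [e2, e1] at e3
    have hw1 : w₁ = v₁ := mul_right_cancel e3
    have hw2 : w₂ = v₂ := by
      have := e1
      rw [hw1] at this
      exact mul_left_cancel (a := v₁⁻¹) this
    rw [hw1, hw2]
  calc (((fun p : FreeGroup X × FreeGroup X => p.1⁻¹ * p.2) ⁻¹' S) ∩ ball2 X n).ncard
      = (finite_count S n).toFinset.card := Set.ncard_eq_toFinset_card _ _
    _ ≤ T.card := Finset.card_le_card_of_injOn f hmem hinj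
    _ ≤ ∑ ℓ ∈ Finset.range (n+1), ((finite_Ssphere S ℓ).toFinset ×ˢ
        (Finset.range (n+1) ×ˢ (finite_ball (X := X) ((n - ℓ)/2)).toFinset)).card :=
        Finset.card_biUnion_le
    _ = ∑ ℓ ∈ Finset.range (n+1),
        (S ∩ sphere X ℓ).ncard * ((n+1) * (ball X ((n - ℓ)/2)).ncard) := by
        refine Finset.sum_congr rfl (fun ℓ _ => ?_)
        rw [Finset.card_product, Finset.card_product, Finset.card_range,
          Set.ncard_eq_toFinset_card _ (finite_Ssphere S ℓ),
          Set.ncard_eq_toFinset_card _ (finite_ball ((n - ℓ)/2))]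

open Filter in
lemma geom_smooth (u : ℕ → ℝ) (C : ℝ) (h0 : ∀ n, 0 ≤ u n) (hb : ∀ n, u n ≤ C)
    (hu : Tendsto u atTop (nhds 0)) {β : ℝ} (hβ0 : 0 ≤ β) (hβ1 : β < 1) :
    Tendsto (fun n => ∑ ℓ ∈ Finset.range (n+1), u ℓ * β ^ (n - ℓ)) atTop (nhds 0) := by
  have hC : 0 ≤ C := le_trans (h0 0) (hb 0)
  have h1β : 0 < 1 - β := by linarith
  rw [Metric.tendsto_atTop]
  intro ε hε
  set ε' := ε * (1 - β) / 2 with hε'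
  have hε'pos : 0 < ε' := by positivity
  obtain ⟨N, hN⟩ := (Metric.tendsto_atTop.1 hu) ε' hε'pos
  have hhead : Tendsto (fun n : ℕ => C * N * β ^ (n + 1 - N)) atTop (nhds 0) := by
    have h := tendsto_pow_atTop_nhds_zero_of_lt_one hβ0 hβ1
    have h2 : Tendsto (fun n : ℕ => n + 1 - N) atTop atTop :=
      Filter.tendsto_atTop_atTop.2 (fun b => ⟨b + N, fun a ha => by omega⟩)
    simpa using (h.comp h2).const_mul (C * N)
  obtain ⟨N₂, hN₂⟩ := (Metric.tendsto_atTop.1 hhead) (ε/2) (by positivity)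
  refine ⟨max N N₂, fun n hn => ?_⟩
  have hnN : N ≤ n := le_trans (le_max_left _ _) hn
  have hnN₂ : N₂ ≤ n := le_trans (le_max_right _ _) hn
  have hsum_nonneg : 0 ≤ ∑ ℓ ∈ Finset.range (n+1), u ℓ * β ^ (n - ℓ) :=
    Finset.sum_nonneg (fun ℓ _ => mul_nonneg (h0 ℓ) (pow_nonneg hβ0 _))
  rw [Real.dist_eq, sub_zero, abs_of_nonneg hsum_nonneg]
  have hsplit : ∑ ℓ ∈ Finset.range (n+1), u ℓ * β ^ (n - ℓ) =
      (∑ ℓ ∈ Finset.range N, u ℓ * β ^ (n - ℓ)) +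
        ∑ ℓ ∈ Finset.Ico N (n+1), u ℓ * β ^ (n - ℓ) :=
    (Finset.sum_range_add_sum_Ico _ (by omega)).symm
  have hheadle : (∑ ℓ ∈ Finset.range N, u ℓ * β ^ (n - ℓ)) ≤ C * N * β ^ (n + 1 - N) := by
    calc (∑ ℓ ∈ Finset.range N, u ℓ * β ^ (n - ℓ))
        ≤ ∑ ℓ ∈ Finset.range N, C * β ^ (n + 1 - N) := by
          apply Finset.sum_le_sum
          intro ℓ hℓ
          have hℓN : ℓ < N := Finset.mem_range.1 hℓ
          exact mul_le_mul (hb ℓ) (pow_le_pow_of_le_one hβ0 hβ1.le (by omega))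
            (pow_nonneg hβ0 _) hC
      _ = C * N * β ^ (n + 1 - N) := by
          rw [Finset.sum_const, Finset.card_range, nsmul_eq_mul]
          ring
  have htail : (∑ ℓ ∈ Finset.Ico N (n+1), u ℓ * β ^ (n - ℓ)) ≤ ε' * (1 / (1 - β)) := by
    calc (∑ ℓ ∈ Finset.Ico N (n+1), u ℓ * β ^ (n - ℓ))
        ≤ ∑ ℓ ∈ Finset.Ico N (n+1), ε' * β ^ (n - ℓ) := by
          apply Finset.sum_le_sum
          intro ℓ hℓ
          have hℓN : N ≤ ℓ := (Finset.mem_Ico.1 hℓ).1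
          have := hN ℓ hℓN
          rw [Real.dist_eq, sub_zero, abs_of_nonneg (h0 ℓ)] at this
          exact mul_le_mul_of_nonneg_right this.le (pow_nonneg hβ0 _)
      _ = ε' * ∑ ℓ ∈ Finset.Ico N (n+1), β ^ (n - ℓ) := by rw [Finset.mul_sum]
      _ ≤ ε' * ∑ ℓ ∈ Finset.range (n+1), β ^ (n - ℓ) := by
          apply mul_le_mul_of_nonneg_left _ hε'pos.le
          apply Finset.sum_le_sum_of_subset_of_nonneg
          · intro x hx
            have := Finset.mem_Ico.1 hx
            exact Finset.mem_range.2 (by omega)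
          · intro x _ _
            exact pow_nonneg hβ0 _
      _ = ε' * ∑ j ∈ Finset.range (n+1), β ^ j := by
          congr 1
          have h := Finset.sum_range_reflect (fun j => β ^ j) (n+1)
          simpa using h
      _ ≤ ε' * (1 / (1 - β)) := by
          apply mul_le_mul_of_nonneg_left _ hε'pos.le
          rw [geom_sum_eq (by linarith : β ≠ 1)]
          have e : (β ^ (n+1) - 1)/(β - 1) = (1 - β ^ (n+1))/(1 - β) := by
            rw [← neg_div_neg_eq]
            ring_nf
          rw [e, div_le_div_iff₀ h1β h1β]
          have : 0 ≤ β ^ (n+1) := pow_nonneg hβ0 _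
          nlinarith
  have hhead2 : C * N * β ^ (n + 1 - N) < ε / 2 := by
    have := hN₂ n hnN₂
    rw [Real.dist_eq, sub_zero, abs_of_nonneg (by positivity)] at this
    exact this
  have hε'eq : ε' * (1 / (1 - β)) = ε / 2 := by
    rw [hε']
    field_simp
  rw [hsplit]
  linarith

open Filter in
lemma driver (u v : ℕ → ℝ) (K β : ℝ) (hβ0 : 0 ≤ β) (hβ1 : β < 1)
    (hu0 : ∀ n, 0 ≤ u n) (hv0 : ∀ n, 0 ≤ v n) (hv1 : ∀ n, v n ≤ 1)
    (hR : ∀ n, u n ≤ ∑ ℓ ∈ Finset.range (n+1), K * (v ℓ * β ^ (n - ℓ)))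
    (hv : Tendsto v atTop (nhds 0)) : Tendsto u atTop (nhds 0) := by
  have h := (geom_smooth v 1 hv0 hv1 hv hβ0 hβ1).const_mul K
  rw [mul_zero] at h
  apply squeeze_zero hu0 (fun n => ?_) h
  calc u n ≤ ∑ ℓ ∈ Finset.range (n+1), K * (v ℓ * β ^ (n - ℓ)) := hR n
    _ = K * ∑ ℓ ∈ Finset.range (n+1), v ℓ * β ^ (n - ℓ) := by rw [Finset.mul_sum]

lemma pow_div_pow_eq (A : ℝ) (hA : 0 < A) {ℓ m : ℕ} (h : ℓ ≤ m) :
    A ^ ℓ / A ^ m = (A⁻¹) ^ (m - ℓ) := by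
  have e : A ^ m = A ^ ℓ * A ^ (m - ℓ) := by
    rw [← pow_add, Nat.add_sub_cancel' h]
  rw [e, inv_pow]
  rw [div_eq_iff (by positivity), inv_mul_eq_div, eq_div_iff (by positivity)]

lemma pow_nat_div2_le (A : ℝ) (hA : 1 ≤ A) (j : ℕ) : A ^ (j / 2) ≤ Real.sqrt A ^ j := by
  have h0 : (0:ℝ) ≤ A := by linarith
  have h1 : 1 ≤ Real.sqrt A := by
    rw [show (1:ℝ) = Real.sqrt 1 by simp]
    exact Real.sqrt_le_sqrt hA
  calc A ^ (j / 2) = (Real.sqrt A ^ 2) ^ (j / 2) := by rw [Real.sq_sqrt h0]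
    _ = Real.sqrt A ^ (2 * (j / 2)) := by rw [pow_mul]
    _ ≤ Real.sqrt A ^ j := pow_le_pow_right₀ h1 (by omega)

lemma sqrt_ratio (A : ℝ) (hA : 1 ≤ A) {ℓ n : ℕ} (h : ℓ ≤ n) :
    A ^ ℓ * Real.sqrt A ^ (n - ℓ) / A ^ n = ((Real.sqrt A)⁻¹) ^ (n - ℓ) := by
  have h0 : (0:ℝ) < A := by linarith
  have hs : 0 < Real.sqrt A := Real.sqrt_pos.2 h0
  have e1 : A ^ n = A ^ ℓ * (Real.sqrt A ^ (n - ℓ) * Real.sqrt A ^ (n - ℓ)) := by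
    rw [← pow_add (Real.sqrt A), ← two_mul, pow_mul, Real.sq_sqrt h0.le, ← pow_add,
      Nat.add_sub_cancel' h]
  rw [e1, inv_pow]
  rw [div_eq_iff (by positivity), inv_mul_eq_div, eq_div_iff (by positivity)]
  ring

lemma bca_pos_real (n : ℕ) : (0:ℝ) < ((ball X n).ncard : ℝ) := by
  have : 0 < (ball X n).ncard :=
    (Set.ncard_pos (finite_ball n)).2 ⟨1, by simp [ball, FreeGroup.norm_one]⟩
  exact_mod_cast this

lemma b2_pos_real (n : ℕ) : (0:ℝ) < ((ball2 X n).ncard : ℝ) := by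
  have : 0 < (ball2 X n).ncard :=
    (Set.ncard_pos (finite_ball2 n)).2 ⟨(1,1), by simp [ball2, FreeGroup.norm_one]⟩
  exact_mod_cast this

lemma R2 (hX : 1 < Fintype.card X) (S : Set (FreeGroup X)) (m : ℕ) :
    ((S ∩ ball X m).ncard : ℝ) / ((ball X m).ncard : ℝ) ≤
      ∑ ℓ ∈ Finset.range (m+1), (16 * (Fintype.card X : ℝ)^2) *
        (((((fun p : FreeGroup X × FreeGroup X => p.1⁻¹ * p.2) ⁻¹' S) ∩ ball2 X ℓ).ncard : ℝ) /
          ((ball2 X ℓ).ncard : ℝ) * ((((2 * Fintype.card X - 1 : ℕ) : ℝ))⁻¹) ^ (m - ℓ)) := by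
  set d := Fintype.card X with hd
  set A : ℝ := ((2 * d - 1 : ℕ) : ℝ) with hA
  have hA3 : (3:ℝ) ≤ A := by
    rw [hA]
    exact_mod_cast (by omega : (3:ℕ) ≤ 2*d-1)
  have hA0 : (0:ℝ) < A := by linarith
  have hApow : ∀ k : ℕ, (0:ℝ) < A ^ k := fun k => pow_pos hA0 k
  have hbcaA : ∀ k : ℕ, A ^ k ≤ ((ball X k).ncard : ℝ) := by
    intro k
    rw [hA, ← Nat.cast_pow]
    exact_mod_cast bca_lower k
  set useq : ℕ → ℝ := fun ℓ =>
    ((((fun p : FreeGroup X × FreeGroup X => p.1⁻¹ * p.2) ⁻¹' S) ∩ ball2 X ℓ).ncard : ℝ) /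
      ((ball2 X ℓ).ncard : ℝ) with huseq
  have hterm : ∀ ℓ, ((S ∩ sphere X ℓ).ncard : ℝ) ≤ (16 * (d:ℝ)^2) * useq ℓ * A ^ ℓ := by
    intro ℓ
    have hb2pos := b2_pos_real (X := X) ℓ
    have hu0 : 0 ≤ useq ℓ := by rw [huseq]; positivity
    have hcnt : ((((fun p : FreeGroup X × FreeGroup X => p.1⁻¹ * p.2) ⁻¹' S) ∩
        ball2 X ℓ).ncard : ℝ) = useq ℓ * ((ball2 X ℓ).ncard : ℝ) := by
      rw [huseq, div_mul_cancel₀ _ (ne_of_gt hb2pos)]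
    have h1 : ((ℓ:ℝ)+1) * ((S ∩ sphere X ℓ).ncard : ℝ) ≤
        ((((fun p : FreeGroup X × FreeGroup X => p.1⁻¹ * p.2) ⁻¹' S) ∩ ball2 X ℓ).ncard : ℝ) := by
      have := count_lower S ℓ
      push_cast [← Nat.cast_le (α := ℝ)] at this ⊢
      convert this using 2 <;> push_cast <;> ring
    have h3 : ((ball2 X ℓ).ncard : ℝ) ≤ ((ℓ:ℝ)+1) * (16 * (d:ℝ)^2 * A ^ ℓ) := by
      have h := b2_upper hX ℓ
      have hcast : ((ball2 X ℓ).ncard : ℝ) ≤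
          (((ℓ+1) * (4*d*(4*d) * (2*d-1)^ℓ) : ℕ) : ℝ) := Nat.cast_le.2 h
      calc ((ball2 X ℓ).ncard : ℝ) ≤ _ := hcast
        _ = ((ℓ:ℝ)+1) * (16 * (d:ℝ)^2 * A ^ ℓ) := by
            rw [hA]
            push_cast
            ring
    have h4 : ((ℓ:ℝ)+1) * ((S ∩ sphere X ℓ).ncard : ℝ) ≤
        ((ℓ:ℝ)+1) * ((16 * (d:ℝ)^2) * useq ℓ * A ^ ℓ) := by
      calc ((ℓ:ℝ)+1) * ((S ∩ sphere X ℓ).ncard : ℝ) ≤ _ := h1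
        _ = useq ℓ * ((ball2 X ℓ).ncard : ℝ) := hcnt
        _ ≤ useq ℓ * (((ℓ:ℝ)+1) * (16 * (d:ℝ)^2 * A ^ ℓ)) := mul_le_mul_of_nonneg_left h3 hu0
        _ = ((ℓ:ℝ)+1) * ((16 * (d:ℝ)^2) * useq ℓ * A ^ ℓ) := by ring
    exact le_of_mul_le_mul_left h4 (by positivity)
  calc ((S ∩ ball X m).ncard : ℝ) / ((ball X m).ncard : ℝ)
      ≤ (∑ ℓ ∈ Finset.range (m+1), ((S ∩ sphere X ℓ).ncard : ℝ)) / A ^ m := by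
        apply div_le_div₀ (by positivity) ?_ (hApow m) (hbcaA m)
        rw [← Nat.cast_sum]
        exact_mod_cast nSb_le_sum S m
    _ = ∑ ℓ ∈ Finset.range (m+1), ((S ∩ sphere X ℓ).ncard : ℝ) / A ^ m :=
        Finset.sum_div _ _ _
    _ ≤ ∑ ℓ ∈ Finset.range (m+1), (16 * (d:ℝ)^2) * (useq ℓ * (A⁻¹) ^ (m - ℓ)) := by
        apply Finset.sum_le_sum
        intro ℓ hℓ
        have hm := Finset.mem_range.1 hℓ
        calc ((S ∩ sphere X ℓ).ncard : ℝ) / A ^ m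
            ≤ ((16 * (d:ℝ)^2) * useq ℓ * A ^ ℓ) / A ^ m :=
              (div_le_div_iff_of_pos_right (hApow m)).2 (hterm ℓ)
          _ = (16 * (d:ℝ)^2) * useq ℓ * (A ^ ℓ / A ^ m) := by ring
          _ = (16 * (d:ℝ)^2) * (useq ℓ * (A⁻¹) ^ (m - ℓ)) := by
              rw [pow_div_pow_eq A hA0 (by omega)]
              ring

lemma R1 (hX : 1 < Fintype.card X) (S : Set (FreeGroup X)) (n : ℕ) :
    ((((fun p : FreeGroup X × FreeGroup X => p.1⁻¹ * p.2) ⁻¹' S) ∩ ball2 X n).ncard : ℝ) /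
        ((ball2 X n).ncard : ℝ) ≤
      ∑ ℓ ∈ Finset.range (n+1), (16 * (Fintype.card X : ℝ)^2) *
        (((S ∩ ball X ℓ).ncard : ℝ) / ((ball X ℓ).ncard : ℝ) *
          ((Real.sqrt ((2 * Fintype.card X - 1 : ℕ) : ℝ))⁻¹) ^ (n - ℓ)) := by
  set d := Fintype.card X with hd
  set A : ℝ := ((2 * d - 1 : ℕ) : ℝ) with hA
  have hA3 : (3:ℝ) ≤ A := by
    rw [hA]
    exact_mod_cast (by omega : (3:ℕ) ≤ 2*d-1)
  have hA0 : (0:ℝ) < A := by linarith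
  have hApow : ∀ k : ℕ, (0:ℝ) < A ^ k := fun k => pow_pos hA0 k
  have hbcaA : ∀ k : ℕ, A ^ k ≤ ((ball X k).ncard : ℝ) := by
    intro k
    rw [hA, ← Nat.cast_pow]
    exact_mod_cast bca_lower k
  set dsq : ℕ → ℝ := fun ℓ => ((S ∩ ball X ℓ).ncard : ℝ) / ((ball X ℓ).ncard : ℝ) with hdsq
  have hdsq0 : ∀ ℓ, 0 ≤ dsq ℓ := fun ℓ => by rw [hdsq]; positivity
  have hb2low : ((n:ℝ)+1) * A ^ n ≤ ((ball2 X n).ncard : ℝ) := by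
    have := b2_lower (X := X) n
    have hcast : (((n+1) * (2*d-1)^n : ℕ) : ℝ) ≤ ((ball2 X n).ncard : ℝ) := Nat.cast_le.2 this
    calc ((n:ℝ)+1) * A ^ n = (((n+1) * (2*d-1)^n : ℕ) : ℝ) := by rw [hA]; push_cast; ring
      _ ≤ _ := hcast
  have hbcup : ∀ k, ((ball X k).ncard : ℝ) ≤ 4*(d:ℝ)*A^k := by
    intro k
    have := bca_upper hX k
    have hcast : ((ball X k).ncard : ℝ) ≤ ((4*d*(2*d-1)^k : ℕ) : ℝ) := Nat.cast_le.2 this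
    calc ((ball X k).ncard : ℝ) ≤ _ := hcast
      _ = 4*(d:ℝ)*A^k := by rw [hA]; push_cast; ring
  have hnss : ∀ ℓ, ((S ∩ sphere X ℓ).ncard : ℝ) ≤ dsq ℓ * (4*(d:ℝ)*A^ℓ) := by
    intro ℓ
    have h1 : (S ∩ sphere X ℓ).ncard ≤ (S ∩ ball X ℓ).ncard :=
      Set.ncard_le_ncard (Set.inter_subset_inter_right S (sphere_subset_ball ℓ))
        (finite_Sball S ℓ)
    have h2 : ((S ∩ ball X ℓ).ncard : ℝ) = dsq ℓ * ((ball X ℓ).ncard : ℝ) := by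
      rw [hdsq, div_mul_cancel₀ _ (ne_of_gt (bca_pos_real ℓ))]
    calc ((S ∩ sphere X ℓ).ncard : ℝ) ≤ ((S ∩ ball X ℓ).ncard : ℝ) := Nat.cast_le.2 h1
      _ = dsq ℓ * ((ball X ℓ).ncard : ℝ) := h2
      _ ≤ dsq ℓ * (4*(d:ℝ)*A^ℓ) := mul_le_mul_of_nonneg_left (hbcup ℓ) (hdsq0 ℓ)
  have hsq : ∀ j : ℕ, ((ball X (j/2)).ncard : ℝ) ≤ 4*(d:ℝ)*(Real.sqrt A)^j := by
    intro j
    calc ((ball X (j/2)).ncard : ℝ) ≤ 4*(d:ℝ)*A^(j/2) := hbcup (j/2)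
      _ ≤ 4*(d:ℝ)*(Real.sqrt A)^j := by
          apply mul_le_mul_of_nonneg_left (pow_nat_div2_le A (by linarith) j) (by positivity)
  have hcount : ((((fun p : FreeGroup X × FreeGroup X => p.1⁻¹ * p.2) ⁻¹' S) ∩
      ball2 X n).ncard : ℝ) ≤
      ∑ ℓ ∈ Finset.range (n+1),
        ((S ∩ sphere X ℓ).ncard : ℝ) * (((n:ℝ)+1) * ((ball X ((n-ℓ)/2)).ncard : ℝ)) := by
    have := count_upper S n
    have hcast := Nat.cast_le (α := ℝ) |>.2 this
    refine le_trans hcast (le_of_eq ?_)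
    push_cast
    rfl
  calc ((((fun p : FreeGroup X × FreeGroup X => p.1⁻¹ * p.2) ⁻¹' S) ∩ ball2 X n).ncard : ℝ) /
        ((ball2 X n).ncard : ℝ)
      ≤ ((((fun p : FreeGroup X × FreeGroup X => p.1⁻¹ * p.2) ⁻¹' S) ∩ ball2 X n).ncard : ℝ) /
        (((n:ℝ)+1) * A ^ n) :=
        div_le_div_of_nonneg_left (by positivity) (by positivity) hb2low
    _ ≤ (∑ ℓ ∈ Finset.range (n+1),
          ((S ∩ sphere X ℓ).ncard : ℝ) * (((n:ℝ)+1) * ((ball X ((n-ℓ)/2)).ncard : ℝ))) /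
        (((n:ℝ)+1) * A ^ n) := (div_le_div_iff_of_pos_right (by positivity)).2 hcount
    _ = ∑ ℓ ∈ Finset.range (n+1),
          ((S ∩ sphere X ℓ).ncard : ℝ) * (((n:ℝ)+1) * ((ball X ((n-ℓ)/2)).ncard : ℝ)) /
            (((n:ℝ)+1) * A ^ n) := Finset.sum_div _ _ _
    _ ≤ ∑ ℓ ∈ Finset.range (n+1), (16 * (d:ℝ)^2) *
          (dsq ℓ * ((Real.sqrt A)⁻¹) ^ (n - ℓ)) := by
        apply Finset.sum_le_sum
        intro ℓ hℓ
        have hm : ℓ ≤ n := by have := Finset.mem_range.1 hℓ; omega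
        have hne1 : ((n:ℝ)+1) ≠ 0 := by positivity
        have hne2 : A ^ n ≠ 0 := ne_of_gt (hApow n)
        calc ((S ∩ sphere X ℓ).ncard : ℝ) * (((n:ℝ)+1) * ((ball X ((n-ℓ)/2)).ncard : ℝ)) /
              (((n:ℝ)+1) * A ^ n)
            ≤ (dsq ℓ * (4*(d:ℝ)*A^ℓ)) * (((n:ℝ)+1) * (4*(d:ℝ)*(Real.sqrt A)^(n-ℓ))) /
              (((n:ℝ)+1) * A ^ n) := by
              apply (div_le_div_iff_of_pos_right (by positivity)).2
              apply mul_le_mul (hnss ℓ) (mul_le_mul_of_nonneg_left (hsq (n-ℓ)) (by positivity))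
                (by positivity) (by positivity)
          _ = (16 * (d:ℝ)^2) * (dsq ℓ * (A^ℓ * (Real.sqrt A)^(n-ℓ) / A^n)) := by
              field_simp
              ring
          _ = (16 * (d:ℝ)^2) * (dsq ℓ * ((Real.sqrt A)⁻¹) ^ (n - ℓ)) := by
              rw [sqrt_ratio A (by linarith) hm]
end Stmt15

/-- With `τ(ω₁,ω₂) = ω₁⁻¹ω₂` (`|X| > 1`): `S ⊆ F_X` is negligible iff `τ⁻¹(S)` is
negligible in `F_X × F_X`. -/
theorem stmt_15 (X : Type) [Fintype X] [DecidableEq X] (hX : 1 < Fintype.card X)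
    (S : Set (FreeGroup X)) :
    Tendsto (fun n => ((S ∩ ball X n).ncard : ℝ) / ((ball X n).ncard : ℝ))
        atTop (nhds 0) ↔
      Tendsto
        (fun n =>
          ((((fun p : FreeGroup X × FreeGroup X => p.1⁻¹ * p.2) ⁻¹' S) ∩ ball2 X n).ncard : ℝ) /
            ((ball2 X n).ncard : ℝ))
        atTop (nhds 0) := by
  classical
  have hd3 : (3:ℕ) ≤ 2 * Fintype.card X - 1 := by omega
  have hA3 : (3:ℝ) ≤ ((2 * Fintype.card X - 1 : ℕ) : ℝ) := by exact_mod_cast hd3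
  have hA1 : (1:ℝ) < ((2 * Fintype.card X - 1 : ℕ) : ℝ) := by linarith
  have hsq1 : 1 < Real.sqrt ((2 * Fintype.card X - 1 : ℕ) : ℝ) :=
    (Real.lt_sqrt (by norm_num)).2 (by nlinarith)
  have hβf0 : 0 ≤ (Real.sqrt ((2 * Fintype.card X - 1 : ℕ) : ℝ))⁻¹ := by positivity
  have hβf1 : (Real.sqrt ((2 * Fintype.card X - 1 : ℕ) : ℝ))⁻¹ < 1 := inv_lt_one_of_one_lt₀ hsq1
  have hβc0 : 0 ≤ (((2 * Fintype.card X - 1 : ℕ) : ℝ))⁻¹ := by positivity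
  have hβc1 : (((2 * Fintype.card X - 1 : ℕ) : ℝ))⁻¹ < 1 := inv_lt_one_of_one_lt₀ hA1
  have hd0 : ∀ m : ℕ, 0 ≤ ((S ∩ ball X m).ncard : ℝ) / ((ball X m).ncard : ℝ) := by
    intro m; positivity
  have hd1 : ∀ m : ℕ, ((S ∩ ball X m).ncard : ℝ) / ((ball X m).ncard : ℝ) ≤ 1 := by
    intro m
    rw [div_le_one (Stmt15.bca_pos_real m)]
    exact_mod_cast Set.ncard_le_ncard Set.inter_subset_right (Stmt15.finite_ball m)
  have hu0 : ∀ m : ℕ, 0 ≤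
      ((((fun p : FreeGroup X × FreeGroup X => p.1⁻¹ * p.2) ⁻¹' S) ∩ ball2 X m).ncard : ℝ) /
        ((ball2 X m).ncard : ℝ) := by
    intro m; positivity
  have hu1 : ∀ m : ℕ,
      ((((fun p : FreeGroup X × FreeGroup X => p.1⁻¹ * p.2) ⁻¹' S) ∩ ball2 X m).ncard : ℝ) /
        ((ball2 X m).ncard : ℝ) ≤ 1 := by
    intro m
    rw [div_le_one (Stmt15.b2_pos_real m)]
    exact_mod_cast Set.ncard_le_ncard Set.inter_subset_right (Stmt15.finite_ball2 m)
  constructor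
  · intro h
    exact Stmt15.driver _ _ (16 * (Fintype.card X : ℝ)^2)
      ((Real.sqrt ((2 * Fintype.card X - 1 : ℕ) : ℝ))⁻¹) hβf0 hβf1 hu0 hd0 hd1
      (Stmt15.R1 hX S) h
  · intro h
    exact Stmt15.driver _ _ (16 * (Fintype.card X : ℝ)^2)
      ((((2 * Fintype.card X - 1 : ℕ) : ℝ))⁻¹) hβc0 hβc1 hd0 hu0 hu1
      (Stmt15.R2 hX S) h
end

section
/- Define τ : F_X × F_X → F_X by τ(ω₁, ω₂) = ω₁⁻¹ω₂, with |X| > 1. If T ⊆ F_X × F_X is generic (its complement has density tending to 0 in the balls B_n(F_X²) for the length |(ω₁,ω₂)| = |ω₁|+|ω₂|), then τ(T) ⊆ F_X is generic. -/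
open Filter Pointwise

namespace Stmt16Aux

open FreeGroup List

variable {α : Type*} [DecidableEq α]

/-- Two adjacent letters do not cancel. -/
def RR (a b : α × Bool) : Prop := ¬(a.1 = b.1 ∧ a.2 = !b.2)

lemma red_length_le {l : List (α × Bool)} : (reduce l).length ≤ l.length :=
  FreeGroup.Red.length_le FreeGroup.reduce.red

lemma reduce_eq_self_of_chain : ∀ {l : List (α × Bool)}, l.Chain' RR → reduce l = l := by
  intro l
  induction l with
  | nil => intro _; rfl
  | cons a l ih =>
    intro h
    have hl : l.Chain' RR := h.tail
    have hred : reduce l = l := ih hl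
    rw [reduce.cons, hred]
    cases l with
    | nil => rfl
    | cons hd tl =>
      have hR : RR a hd := (List.isChain_cons_cons.1 h).1
      simp only [RR] at hR
      simp [hR]

lemma chain_of_reduce_eq_self : ∀ {l : List (α × Bool)}, reduce l = l → l.Chain' RR := by
  intro l
  induction l with
  | nil => intro _; exact List.isChain_nil
  | cons a l ih =>
    intro h
    rw [reduce.cons] at h
    rcases hr : reduce l with _ | ⟨hd, tl⟩
    · rw [hr] at h
      cases l with
      | nil => exact List.isChain_singleton a
      | cons b l' => simp at h
    · rw [hr] at h
      by_cases hc : a.1 = hd.1 ∧ a.2 = !hd.2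
      · simp only [hc, if_true] at h
        exfalso
        have := congr_arg List.length h
        simp at this
        have h2 : (reduce l).length ≤ l.length := red_length_le
        rw [hr] at h2
        simp at h2
        omega
      · simp only [hc, if_false] at h
        have hl : l = hd :: tl := by
          have := congr_arg List.tail h
          simpa using this.symm
        subst hl
        exact List.isChain_cons_cons.2 ⟨hc, ih hr⟩

lemma chain'_toWord (w : FreeGroup α) : w.toWord.Chain' RR :=
  chain_of_reduce_eq_self (reduce_toWord w)

lemma toWord_mk_of_chain {l : List (α × Bool)} (h : l.Chain' RR) : (mk l).toWord = l := by
  rw [toWord_mk, reduce_eq_self_of_chain h]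

lemma norm_mk_of_chain {l : List (α × Bool)} (h : l.Chain' RR) : norm (mk l) = l.length := by
  rw [FreeGroup.norm, toWord_mk_of_chain h]

lemma chain_take (w : FreeGroup α) (k : ℕ) : (w.toWord.take k).Chain' RR :=
  (chain'_toWord w).prefix (List.take_prefix k _)

lemma chain_drop (w : FreeGroup α) (k : ℕ) : (w.toWord.drop k).Chain' RR :=
  (chain'_toWord w).suffix (List.drop_suffix k _)

lemma norm_mk_take (w : FreeGroup α) (k : ℕ) (hk : k ≤ norm w) :
    norm (mk (w.toWord.take k)) = k := by
  rw [norm_mk_of_chain (chain_take w k), List.length_take]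
  exact min_eq_left hk

lemma norm_mk_drop (w : FreeGroup α) (k : ℕ) :
    norm (mk (w.toWord.drop k)) = norm w - k := by
  rw [norm_mk_of_chain (chain_drop w k), List.length_drop]; rfl

lemma mk_take_mul_mk_drop (w : FreeGroup α) (k : ℕ) :
    mk (w.toWord.take k) * mk (w.toWord.drop k) = w := by
  rw [mul_mk, List.take_append_drop, mk_toWord]

lemma ncard_sprod {β γ : Type*} (s : Set β) (t : Set γ) :
    (s ×ˢ t).ncard = s.ncard * t.ncard := by
  rw [← Nat.card_coe_set_eq, ← Nat.card_coe_set_eq, ← Nat.card_coe_set_eq,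
    ← Nat.card_prod]
  exact Nat.card_congr (Equiv.Set.prod s t)

variable (X : Type) [DecidableEq X] [Fintype X]

lemma ball_fin (n : ℕ) : (ball X n).Finite := by
  have : ball X n ⊆ FreeGroup.toWord ⁻¹' {l : List (X × Bool) | l.length ≤ n} := fun w hw => hw
  exact ((List.finite_length_le (X × Bool) n).preimage toWord_injective.injOn).subset this

lemma ball_nonempty (n : ℕ) : (ball X n).Nonempty :=
  ⟨1, by simp [ball]⟩

lemma ball2_fin (n : ℕ) : (ball2 X n).Finite := by
  have : ball2 X n ⊆ (ball X n) ×ˢ (ball X n) := by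
    rintro ⟨u, v⟩ h
    exact ⟨by simpa [ball] using le_trans (Nat.le_add_right _ _) h,
      by simpa [ball] using le_trans (Nat.le_add_left _ _) h⟩
  exact ((ball_fin X n).prod (ball_fin X n)).subset this

lemma ball2_nonempty (n : ℕ) : (ball2 X n).Nonempty :=
  ⟨(1, 1), by simp [ball2]⟩

variable {X}
variable (x₀ x₁ : X)

/-- A generator distinct from the (optional) last letter's base. -/
def pick (w : FreeGroup X) : X :=
  if (w.toWord.getLast?.map Prod.fst) = some x₀ then x₁ else x₀

lemma pick_spec (hne : x₀ ≠ x₁) (w : FreeGroup X) : ∀ a ∈ w.toWord.getLast?, a.1 ≠ pick x₀ x₁ w := by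
  intro a ha
  unfold pick
  split_ifs with h
  · intro hax
    rw [ha] at h
    simp at h
    rw [hax] at h
    exact hne h.symm
  · intro hax
    rw [ha] at h
    simp at h
    exact h hax

lemma chain_concat (hne : x₀ ≠ x₁) (w : FreeGroup X) (i : Bool) :
    (w.toWord ++ [(pick x₀ x₁ w, i)]).Chain' RR := by
  refine List.isChain_append.2 ⟨chain'_toWord w, List.isChain_singleton _, ?_⟩
  intro a ha b hb
  simp only [List.head?_cons, Option.mem_def, Option.some.injEq] at hb
  subst hb
  intro hcontra
  exact pick_spec x₀ x₁ hne w a ha hcontra.1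

lemma two_mul_ncard_ball_le (hne : x₀ ≠ x₁) (m : ℕ) :
    2 * (ball X m).ncard ≤ (ball X (m + 1)).ncard := by
  classical
  have key : ((ball X m) ×ˢ (Set.univ : Set Bool)).ncard ≤ (ball X (m + 1)).ncard := by
    refine Set.ncard_le_ncard_of_injOn
      (fun p : FreeGroup X × Bool => FreeGroup.mk (p.1.toWord ++ [(pick x₀ x₁ p.1, p.2)]))
      ?_ ?_ (ball_fin X (m + 1))
    · rintro ⟨w, i⟩ ⟨hw, -⟩
      have : FreeGroup.norm (FreeGroup.mk (w.toWord ++ [(pick x₀ x₁ w, i)]))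
          = w.toWord.length + 1 := by
        rw [norm_mk_of_chain (chain_concat x₀ x₁ hne w i)]; simp
      simp only [ball, Set.mem_setOf_eq] at hw ⊢
      rw [this]
      exact Nat.add_le_add_right hw 1
    · rintro ⟨w, i⟩ - ⟨w', i'⟩ - h
      have hw : (FreeGroup.mk (w.toWord ++ [(pick x₀ x₁ w, i)])).toWord
          = w.toWord ++ [(pick x₀ x₁ w, i)] := toWord_mk_of_chain (chain_concat x₀ x₁ hne w i)
      have hw' : (FreeGroup.mk (w'.toWord ++ [(pick x₀ x₁ w', i')])).toWord
          = w'.toWord ++ [(pick x₀ x₁ w', i')] := toWord_mk_of_chain (chain_concat x₀ x₁ hne w' i')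
      have h0 : FreeGroup.mk (w.toWord ++ [(pick x₀ x₁ w, i)])
          = FreeGroup.mk (w'.toWord ++ [(pick x₀ x₁ w', i')]) := h
      have hl : w.toWord ++ [(pick x₀ x₁ w, i)] = w'.toWord ++ [(pick x₀ x₁ w', i')] := by
        rw [← hw, ← hw', h0]
      have h1 : w.toWord = w'.toWord := by
        have := congr_arg List.dropLast hl
        simpa using this
      have hww' : w = w' := toWord_injective h1
      subst hww'
      have h2 : (pick x₀ x₁ w, i) = (pick x₀ x₁ w, i') := by
        have := congr_arg List.getLast? hl
        simpa using this
      simp only [Prod.mk.injEq, true_and] at h2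
      exact Prod.ext rfl h2
  calc 2 * (ball X m).ncard = (ball X m).ncard * (Set.univ : Set Bool).ncard := by
        rw [Set.ncard_univ, Nat.card_eq_fintype_card]; simp [mul_comm]
    _ = ((ball X m) ×ˢ (Set.univ : Set Bool)).ncard := (ncard_sprod _ _).symm
    _ ≤ _ := key

lemma pow_mul_ncard_ball_le (hne : x₀ ≠ x₁) (j : ℕ) :
    ∀ m, 2 ^ j * (ball X m).ncard ≤ (ball X (m + j)).ncard := by
  induction j with
  | zero => intro m; simp
  | succ j ih =>
    intro m
    have h1 : 2 ^ (j + 1) * (ball X m).ncard = 2 ^ j * (2 * (ball X m).ncard) := by ring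
    have h2 : 2 ^ j * (2 * (ball X m).ncard) ≤ 2 ^ j * (ball X (m + 1)).ncard :=
      Nat.mul_le_mul_left _ (two_mul_ncard_ball_le x₀ x₁ hne m)
    have h3 : 2 ^ j * (ball X (m + 1)).ncard ≤ (ball X (m + 1 + j)).ncard := ih (m + 1)
    have heq : m + 1 + j = m + (j + 1) := by omega
    rw [heq] at h3
    rw [h1]
    exact le_trans h2 h3

lemma ball_succ_le (n : ℕ) :
    (ball X (n + 1)).ncard ≤ (2 * Fintype.card X + 1) * (ball X n).ncard := by
  classical
  have key : (ball X (n + 1)).ncard ≤ ((ball X n) ×ˢ (Set.univ : Set (Option (X × Bool)))).ncard := by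
    refine Set.ncard_le_ncard_of_injOn
      (fun w : FreeGroup X => if FreeGroup.norm w ≤ n then (w, (none : Option (X × Bool)))
        else (FreeGroup.mk w.toWord.dropLast, w.toWord.getLast?))
      ?_ ?_ (((ball_fin X n).prod (Set.finite_univ)))
    · intro w hw
      by_cases hn : FreeGroup.norm w ≤ n
      · simp only [hn, if_true]
        exact ⟨hn, trivial⟩
      · simp only [hn, if_false]
        refine ⟨?_, trivial⟩
        have hchain : w.toWord.dropLast.Chain' RR :=
          (chain'_toWord w).prefix (List.dropLast_prefix _)
        have : FreeGroup.norm (FreeGroup.mk w.toWord.dropLast) = w.toWord.length - 1 := by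
          rw [norm_mk_of_chain hchain, List.length_dropLast]
        simp only [ball, Set.mem_setOf_eq] at hw ⊢
        rw [this]
        have : w.toWord.length = FreeGroup.norm w := rfl
        omega
    · intro w hw w' hw' h
      by_cases hn : FreeGroup.norm w ≤ n <;> by_cases hn' : FreeGroup.norm w' ≤ n
      · simp only [hn, hn', if_true] at h
        exact (Prod.ext_iff.1 h).1
      · simp only [hn, hn', if_true, if_false] at h
        exfalso
        have h2 := (Prod.ext_iff.1 h).2
        have hne' : w'.toWord ≠ [] := by
          intro hnil
          rw [FreeGroup.norm, hnil] at hn'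
          simp at hn'
        rw [List.getLast?_eq_getLast hne'] at h2
        simp at h2
      · simp only [hn, hn', if_true, if_false] at h
        exfalso
        have h2 := (Prod.ext_iff.1 h).2
        have hne' : w.toWord ≠ [] := by
          intro hnil
          rw [FreeGroup.norm, hnil] at hn
          simp at hn
        rw [List.getLast?_eq_getLast hne'] at h2
        simp at h2
      · simp only [hn, hn', if_false] at h
        have h1 := (Prod.ext_iff.1 h).1
        have h2 := (Prod.ext_iff.1 h).2
        have hnew : w.toWord ≠ [] := by
          intro hnil; rw [FreeGroup.norm, hnil] at hn; simp at hn
        have hnew' : w'.toWord ≠ [] := by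
          intro hnil; rw [FreeGroup.norm, hnil] at hn'; simp at hn'
        have hc : w.toWord.dropLast.Chain' RR :=
          (chain'_toWord w).prefix (List.dropLast_prefix _)
        have hc' : w'.toWord.dropLast.Chain' RR :=
          (chain'_toWord w').prefix (List.dropLast_prefix _)
        have hdl : w.toWord.dropLast = w'.toWord.dropLast := by
          have := congr_arg FreeGroup.toWord h1
          rwa [toWord_mk_of_chain hc, toWord_mk_of_chain hc'] at this
        have hgl : w.toWord.getLast hnew = w'.toWord.getLast hnew' := by
          rw [List.getLast?_eq_getLast hnew, List.getLast?_eq_getLast hnew']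
            at h2
          exact Option.some_injective _ h2
        have : w.toWord = w'.toWord := by
          rw [← List.dropLast_append_getLast hnew, ← List.dropLast_append_getLast hnew',
            hdl, hgl]
        exact toWord_injective this
  rw [ncard_sprod] at key
  have : (Set.univ : Set (Option (X × Bool))).ncard = 2 * Fintype.card X + 1 := by
    rw [Set.ncard_univ, Nat.card_eq_fintype_card]
    simp [Fintype.card_option, Fintype.card_prod, mul_comm]
  rw [this] at key
  calc (ball X (n + 1)).ncard ≤ (ball X n).ncard * (2 * Fintype.card X + 1) := key
    _ = (2 * Fintype.card X + 1) * (ball X n).ncard := mul_comm _ _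

/-- Pick a letter among `(x₀,true), (x₀,false), (x₁,true)` avoiding two forbidden letters. -/
def pick3 (f₁ f₂ : X × Bool) : X × Bool :=
  if (x₀, true) ≠ f₁ ∧ (x₀, true) ≠ f₂ then (x₀, true)
  else if (x₀, false) ≠ f₁ ∧ (x₀, false) ≠ f₂ then (x₀, false)
  else (x₁, true)

lemma pick3_ne (hne : x₀ ≠ x₁) (f₁ f₂ : X × Bool) :
    pick3 x₀ x₁ f₁ f₂ ≠ f₁ ∧ pick3 x₀ x₁ f₁ f₂ ≠ f₂ := by
  unfold pick3
  split_ifs with h1 h2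
  · exact h1
  · exact h2
  · push_neg at h1 h2
    have hA : (x₀, true) = f₁ ∨ (x₀, true) = f₂ := by
      by_cases hx : (x₀, true) = f₁
      · exact Or.inl hx
      · exact Or.inr (h1 hx)
    have hB : (x₀, false) = f₁ ∨ (x₀, false) = f₂ := by
      by_cases hx : (x₀, false) = f₁
      · exact Or.inl hx
      · exact Or.inr (h2 hx)
    constructor <;> rintro rfl
    · rcases hA with h | h
      · exact hne (congrArg Prod.fst h)
      · rcases hB with h' | h'
        · exact hne (congrArg Prod.fst h')
        · rw [← h'] at h
          simp at h
    · rcases hA with h | h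
      · rcases hB with h' | h'
        · rw [← h'] at h
          simp at h
        · exact hne (congrArg Prod.fst h')
      · exact hne (congrArg Prod.fst h)

/-- The letter that would cancel with the last letter of `u.toWord`. -/
def lastForb (u : FreeGroup X) : X × Bool :=
  match u.toWord.getLast? with
  | some a => (a.1, !a.2)
  | none => (x₀, true)

/-- The letter that would cancel with the first letter of `v.toWord`. -/
def headForb (v : FreeGroup X) : X × Bool :=
  match v.toWord.head? with
  | some a => (a.1, !a.2)
  | none => (x₀, true)

/-- A separator letter that cancels with neither the end of `u` nor the start of `v`. -/
def sep (u v : FreeGroup X) : X × Bool :=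
  pick3 x₀ x₁ (lastForb x₀ u) (headForb x₀ v)

lemma chain_sep (hne : x₀ ≠ x₁) (u v : FreeGroup X) :
    (u.toWord ++ sep x₀ x₁ u v :: v.toWord).Chain' RR := by
  refine List.isChain_append.2 ⟨chain'_toWord u, ?_, ?_⟩
  · refine List.isChain_cons.2 ⟨?_, chain'_toWord v⟩
    intro y hy
    intro hcon
    have hy' : v.toWord.head? = some y := hy
    have hhf : headForb x₀ v = (y.1, !y.2) := by
      rw [headForb, hy']
    rcases hcon with ⟨h1, h2⟩
    have hgoal : sep x₀ x₁ u v = headForb x₀ v := by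
      rw [hhf]
      exact Prod.ext h1 h2
    exact (pick3_ne x₀ x₁ hne (lastForb x₀ u) (headForb x₀ v)).2 hgoal
  · intro a ha b hb
    simp only [List.head?_cons, Option.mem_def, Option.some.injEq] at hb
    subst hb
    intro hcon
    have ha' : u.toWord.getLast? = some a := ha
    have hlf : lastForb x₀ u = (a.1, !a.2) := by
      rw [lastForb, ha']
    rcases hcon with ⟨h1, h2⟩
    have hgoal : sep x₀ x₁ u v = lastForb x₀ u := by
      rw [hlf]
      refine Prod.ext h1.symm ?_
      rw [h2]
      simp
    exact (pick3_ne x₀ x₁ hne (lastForb x₀ u) (headForb x₀ v)).1 hgoal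

lemma toWord_sep (hne : x₀ ≠ x₁) (u v : FreeGroup X) :
    (u * FreeGroup.mk [sep x₀ x₁ u v] * v).toWord = u.toWord ++ sep x₀ x₁ u v :: v.toWord := by
  have : u * FreeGroup.mk [sep x₀ x₁ u v] * v
      = FreeGroup.mk (u.toWord ++ sep x₀ x₁ u v :: v.toWord) := by
    set s := sep x₀ x₁ u v with hs
    conv_lhs => rw [← FreeGroup.mk_toWord (x := u), ← FreeGroup.mk_toWord (x := v)]
    rw [FreeGroup.mul_mk, FreeGroup.mul_mk]
    congr 1
    simp
  rw [this, toWord_mk_of_chain (chain_sep x₀ x₁ hne u v)]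

lemma ball2_ncard_le (hne : x₀ ≠ x₁) (n : ℕ) :
    (ball2 X n).ncard ≤ (n + 1) * (ball X (n + 1)).ncard := by
  classical
  have key : (ball2 X n).ncard ≤ ((ball X (n + 1)) ×ˢ (Set.Iio (n + 1))).ncard := by
    refine Set.ncard_le_ncard_of_injOn
      (fun p : FreeGroup X × FreeGroup X =>
        (p.1 * FreeGroup.mk [sep x₀ x₁ p.1 p.2] * p.2, FreeGroup.norm p.1))
      ?_ ?_ ((ball_fin X (n + 1)).prod (Set.finite_Iio _))
    · rintro ⟨u, v⟩ hp
      simp only [ball2, Set.mem_setOf_eq] at hp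
      constructor
      · have : FreeGroup.norm (u * FreeGroup.mk [sep x₀ x₁ u v] * v)
            = u.toWord.length + (v.toWord.length + 1) := by
          rw [FreeGroup.norm, toWord_sep x₀ x₁ hne u v]
          simp
        simp only [ball, Set.mem_setOf_eq]
        rw [this]
        have h1 : u.toWord.length = FreeGroup.norm u := rfl
        have h2 : v.toWord.length = FreeGroup.norm v := rfl
        omega
      · simp only [Set.mem_Iio]
        omega
    · rintro ⟨u, v⟩ hp ⟨u', v'⟩ hp' h
      have h0 : (u * FreeGroup.mk [sep x₀ x₁ u v] * v, FreeGroup.norm u)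
          = (u' * FreeGroup.mk [sep x₀ x₁ u' v'] * v', FreeGroup.norm u') := h
      have hk : FreeGroup.norm u = FreeGroup.norm u' := (Prod.ext_iff.1 h0).2
      have hw := congr_arg FreeGroup.toWord (Prod.ext_iff.1 h0).1
      rw [toWord_sep x₀ x₁ hne u v, toWord_sep x₀ x₁ hne u' v'] at hw
      have hu : u.toWord = u'.toWord := by
        have t1 : (u.toWord ++ sep x₀ x₁ u v :: v.toWord).take (FreeGroup.norm u)
            = u.toWord := List.take_left' rfl
        have t2 : (u'.toWord ++ sep x₀ x₁ u' v' :: v'.toWord).take (FreeGroup.norm u)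
            = u'.toWord := by
          rw [hk]; exact List.take_left' rfl
        rw [← t1, ← t2, hw]
      have huu : u = u' := toWord_injective hu
      have hv : v.toWord = v'.toWord := by
        have e1 : u.toWord ++ sep x₀ x₁ u v :: v.toWord
            = (u.toWord ++ [sep x₀ x₁ u v]) ++ v.toWord := by simp
        have e2 : u'.toWord ++ sep x₀ x₁ u' v' :: v'.toWord
            = (u'.toWord ++ [sep x₀ x₁ u' v']) ++ v'.toWord := by simp
        have t1 : ((u.toWord ++ [sep x₀ x₁ u v]) ++ v.toWord).drop (FreeGroup.norm u + 1)
            = v.toWord := List.drop_left' (by simp; rfl)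
        have t2 : ((u'.toWord ++ [sep x₀ x₁ u' v']) ++ v'.toWord).drop (FreeGroup.norm u + 1)
            = v'.toWord := List.drop_left' (by rw [hk]; simp; rfl)
        rw [← t1, ← t2, ← e1, ← e2, hw]
      exact Prod.ext huu (toWord_injective hv)
  rw [ncard_sprod] at key
  have : (Set.Iio (n + 1)).ncard = n + 1 := by
    rw [← Finset.coe_range, Set.ncard_coe_finset, Finset.card_range]
  rw [this] at key
  calc (ball2 X n).ncard ≤ (ball X (n + 1)).ncard * (n + 1) := key
    _ = (n + 1) * (ball X (n + 1)).ncard := mul_comm _ _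

lemma main_injection (T : Set (FreeGroup X × FreeGroup X)) (n : ℕ) :
    (((fun p : FreeGroup X × FreeGroup X => p.1⁻¹ * p.2) '' T)ᶜ
        ∩ {w : FreeGroup X | n / 2 < FreeGroup.norm w ∧ FreeGroup.norm w ≤ n}).ncard
      * (n / 2 + 1)
      ≤ (Tᶜ ∩ ball2 X n).ncard := by
  classical
  set τ := fun p : FreeGroup X × FreeGroup X => p.1⁻¹ * p.2 with hτ
  set S : Set (FreeGroup X) :=
    (τ '' T)ᶜ ∩ {w : FreeGroup X | n / 2 < FreeGroup.norm w ∧ FreeGroup.norm w ≤ n} with hS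
  have key : (S ×ˢ (Set.Iio (n / 2 + 1))).ncard ≤ (Tᶜ ∩ ball2 X n).ncard := by
    refine Set.ncard_le_ncard_of_injOn
      (fun p : FreeGroup X × ℕ =>
        ((FreeGroup.mk (p.1.toWord.take p.2))⁻¹, FreeGroup.mk (p.1.toWord.drop p.2)))
      ?_ ?_ ((ball2_fin X n).subset Set.inter_subset_right)
    · rintro ⟨w, k⟩ ⟨⟨hw1, hw2, hw3⟩, hk⟩
      simp only [Set.mem_Iio] at hk
      have hw2' : n / 2 < FreeGroup.norm w := hw2
      have hw3' : FreeGroup.norm w ≤ n := hw3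
      have hkn : k ≤ FreeGroup.norm w := by omega
      have hτp : (FreeGroup.mk (w.toWord.take k))⁻¹⁻¹ * FreeGroup.mk (w.toWord.drop k) = w := by
        rw [inv_inv]
        exact mk_take_mul_mk_drop w k
      constructor
      · intro hmem
        apply hw1
        exact ⟨_, hmem, hτp⟩
      · simp only [ball2, Set.mem_setOf_eq]
        rw [FreeGroup.norm_inv_eq, norm_mk_take w k hkn, norm_mk_drop w k]
        omega

    · rintro ⟨w, k⟩ ⟨⟨hw1, hw2, hw3⟩, hk⟩ ⟨w', k'⟩ ⟨⟨hw1', hw2', hw3'⟩, hk'⟩ h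
      simp only [Set.mem_Iio] at hk hk'
      have ha : n / 2 < FreeGroup.norm w := hw2
      have ha' : n / 2 < FreeGroup.norm w' := hw2'
      have hkn : k ≤ FreeGroup.norm w := by omega
      have hkn' : k' ≤ FreeGroup.norm w' := by omega
      have h0 : ((FreeGroup.mk (w.toWord.take k))⁻¹, FreeGroup.mk (w.toWord.drop k))
          = ((FreeGroup.mk (w'.toWord.take k'))⁻¹, FreeGroup.mk (w'.toWord.drop k')) := h
      have h1 := (Prod.ext_iff.1 h0).1
      have h2 := (Prod.ext_iff.1 h0).2
      have hkk : k = k' := by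
        have := congr_arg FreeGroup.norm h1
        rwa [FreeGroup.norm_inv_eq, FreeGroup.norm_inv_eq, norm_mk_take w k hkn,
          norm_mk_take w' k' hkn'] at this
      have hww : w = w' := by
        have := congr_arg₂ (fun a b => a⁻¹ * b) h1 h2
        simpa only [inv_inv, mk_take_mul_mk_drop] using this
      rw [hkk, hww]
  rw [ncard_sprod] at key
  have : (Set.Iio (n / 2 + 1)).ncard = n / 2 + 1 := by
    rw [← Finset.coe_range, Set.ncard_coe_finset, Finset.card_range]
  rwa [this] at key

end Stmt16Aux

/-- With `τ(ω₁,ω₂) = ω₁⁻¹ω₂` (`|X| > 1`): if `T ⊆ F_X × F_X` is generic then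
`τ(T) ⊆ F_X` is generic. -/
theorem stmt_16 (X : Type) [Fintype X] [DecidableEq X] (hX : 1 < Fintype.card X)
    (T : Set (FreeGroup X × FreeGroup X))
    (hT : Tendsto (fun n => ((Tᶜ ∩ ball2 X n).ncard : ℝ) / ((ball2 X n).ncard : ℝ))
      atTop (nhds 0)) :
    Tendsto
      (fun n =>
        ((((fun p : FreeGroup X × FreeGroup X => p.1⁻¹ * p.2) '' T)ᶜ ∩ ball X n).ncard : ℝ) /
          ((ball X n).ncard : ℝ))
      atTop (nhds 0) := by
  classical
  obtain ⟨x₀, x₁, hne⟩ := Fintype.exists_pair_of_one_lt_card hX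
  set q := Fintype.card X with hq
  have hb_pos : ∀ n, (0:ℝ) < ((ball X n).ncard : ℝ) := by
    intro n
    exact_mod_cast (Set.ncard_pos (Stmt16Aux.ball_fin X n)).2 (Stmt16Aux.ball_nonempty X n)
  have hc_pos : ∀ n, (0:ℝ) < ((ball2 X n).ncard : ℝ) := by
    intro n
    exact_mod_cast (Set.ncard_pos (Stmt16Aux.ball2_fin X n)).2 (Stmt16Aux.ball2_nonempty X n)
  set δ : ℕ → ℝ := fun n => ((Tᶜ ∩ ball2 X n).ncard : ℝ) / ((ball2 X n).ncard : ℝ) with hδ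
  have hδ0 : ∀ n, 0 ≤ δ n := fun n => div_nonneg (Nat.cast_nonneg _) (Nat.cast_nonneg _)
  set g : ℕ → ℝ := fun n => (1/2:ℝ)^(n - n/2) + (2*(2*(q:ℝ)+1)) * δ n with hg
  have hgtend : Tendsto g atTop (nhds 0) := by
    have t1 : Tendsto (fun n : ℕ => (1/2:ℝ)^(n - n/2)) atTop (nhds 0) := by
      have hnat : Tendsto (fun n : ℕ => n - n/2) atTop atTop := by
        refine tendsto_atTop_atTop.2 (fun b => ⟨2*b, fun a ha => by omega⟩)
      exact (tendsto_pow_atTop_nhds_zero_of_lt_one (by norm_num) (by norm_num)).comp hnat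
    have t2 : Tendsto (fun n => (2*(2*(q:ℝ)+1)) * δ n) atTop (nhds 0) := by
      have := hT.const_mul (2*(2*(q:ℝ)+1))
      simpa using this
    have := t1.add t2
    simp only [add_zero] at this
    exact this
  refine squeeze_zero (fun n => div_nonneg (Nat.cast_nonneg _) (Nat.cast_nonneg _)) ?_ hgtend
  intro n
  set τ := fun p : FreeGroup X × FreeGroup X => p.1⁻¹ * p.2 with hτ
  set K := n / 2 with hK
  set A := ((τ '' T)ᶜ ∩ ball X n).ncard with hA
  set L := ((τ '' T)ᶜ ∩ {w : FreeGroup X | K < FreeGroup.norm w ∧ FreeGroup.norm w ≤ n}).ncard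
    with hL
  set D := (Tᶜ ∩ ball2 X n).ncard with hD
  -- natural number inequalities
  have h1 : A ≤ (ball X K).ncard + L := by
    have hsub : (τ '' T)ᶜ ∩ ball X n ⊆
        (ball X K) ∪ ((τ '' T)ᶜ ∩ {w : FreeGroup X | K < FreeGroup.norm w ∧ FreeGroup.norm w ≤ n}) := by
      rintro w ⟨hw1, hw2⟩
      by_cases hwK : FreeGroup.norm w ≤ K
      · exact Or.inl hwK
      · exact Or.inr ⟨hw1, by omega, hw2⟩
    calc A ≤ ((ball X K) ∪ ((τ '' T)ᶜ ∩ {w : FreeGroup X | K < FreeGroup.norm w ∧ FreeGroup.norm w ≤ n})).ncard := by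
          refine Set.ncard_le_ncard hsub ?_
          exact (Stmt16Aux.ball_fin X K).union (((Stmt16Aux.ball_fin X n)).subset
            (fun w hw => hw.2.2))
      _ ≤ (ball X K).ncard + L := Set.ncard_union_le _ _
  have h2 : L * (K + 1) ≤ D := Stmt16Aux.main_injection T n
  have h3 : 2 ^ (n - K) * (ball X K).ncard ≤ (ball X n).ncard := by
    have := Stmt16Aux.pow_mul_ncard_ball_le x₀ x₁ hne (n - K) K
    have heq : K + (n - K) = n := by omega
    rwa [heq] at this
  have h4 : (ball2 X n).ncard ≤ (n+1) * ((2*q+1) * (ball X n).ncard) :=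
    le_trans (Stmt16Aux.ball2_ncard_le x₀ x₁ hne n)
      (Nat.mul_le_mul_left _ (Stmt16Aux.ball_succ_le (X := X) n))
  have h5 : n + 1 ≤ 2 * (K + 1) := by omega
  -- real number arithmetic
  have hbn := hb_pos n
  have hcn := hc_pos n
  have hpow : (0:ℝ) < 2 ^ (n - K) := by positivity
  have hKpos : (0:ℝ) < (K:ℝ) + 1 := by positivity
  have h3R : (2:ℝ) ^ (n - K) * ((ball X K).ncard : ℝ) ≤ ((ball X n).ncard : ℝ) := by
    exact_mod_cast h3
  have hstep1 : ((ball X K).ncard : ℝ) / ((ball X n).ncard : ℝ) ≤ (1/2:ℝ)^(n - K) := by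
    rw [div_le_iff₀ hbn, one_div, inv_pow, inv_mul_eq_div, le_div_iff₀ hpow]
    linarith [h3R]
  have h2R : (L:ℝ) * ((K:ℝ) + 1) ≤ (D:ℝ) := by exact_mod_cast h2
  have h4R : ((ball2 X n).ncard : ℝ) ≤ ((n:ℝ)+1) * ((2*(q:ℝ)+1) * ((ball X n).ncard : ℝ)) := by
    exact_mod_cast h4
  have h5R : ((n:ℝ)+1) ≤ 2*((K:ℝ)+1) := by exact_mod_cast h5
  have hstep2 : (L:ℝ) / ((ball X n).ncard : ℝ) ≤ (2*(2*(q:ℝ)+1)) * δ n := by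
    have key : (L:ℝ) * ((ball2 X n).ncard : ℝ)
        ≤ (2*(2*(q:ℝ)+1)) * (D:ℝ) * ((ball X n).ncard : ℝ) := by
      have k1 : (L:ℝ) * ((ball2 X n).ncard : ℝ)
          ≤ (L:ℝ) * (((n:ℝ)+1) * ((2*(q:ℝ)+1) * ((ball X n).ncard : ℝ))) :=
        mul_le_mul_of_nonneg_left h4R (Nat.cast_nonneg L)
      have k2 : (L:ℝ) * (((n:ℝ)+1) * ((2*(q:ℝ)+1) * ((ball X n).ncard : ℝ)))
          ≤ (L:ℝ) * ((2*((K:ℝ)+1)) * ((2*(q:ℝ)+1) * ((ball X n).ncard : ℝ))) := by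
        refine mul_le_mul_of_nonneg_left (mul_le_mul_of_nonneg_right h5R ?_) (Nat.cast_nonneg L)
        positivity
      have k3 : (L:ℝ) * ((2*((K:ℝ)+1)) * ((2*(q:ℝ)+1) * ((ball X n).ncard : ℝ)))
          = ((L:ℝ) * ((K:ℝ)+1)) * (2*(2*(q:ℝ)+1) * ((ball X n).ncard : ℝ)) := by ring
      have k4 : ((L:ℝ) * ((K:ℝ)+1)) * (2*(2*(q:ℝ)+1) * ((ball X n).ncard : ℝ))
          ≤ (D:ℝ) * (2*(2*(q:ℝ)+1) * ((ball X n).ncard : ℝ)) := by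
        refine mul_le_mul_of_nonneg_right h2R ?_
        positivity
      nlinarith [k1, k2, k3, k4]
    have hδn : δ n = (D:ℝ) / ((ball2 X n).ncard : ℝ) := rfl
    rw [hδn, show (2*(2*(q:ℝ)+1)) * ((D:ℝ) / ((ball2 X n).ncard : ℝ))
        = (2*(2*(q:ℝ)+1) * (D:ℝ)) / ((ball2 X n).ncard : ℝ) from (mul_div_assoc _ _ _).symm,
      div_le_div_iff₀ hbn hcn]
    linarith [key]
  have h1R : (A:ℝ) ≤ ((ball X K).ncard : ℝ) + (L:ℝ) := by exact_mod_cast h1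
  calc (A:ℝ) / ((ball X n).ncard : ℝ)
      ≤ (((ball X K).ncard : ℝ) + (L:ℝ)) / ((ball X n).ncard : ℝ) := by
        gcongr
    _ = ((ball X K).ncard : ℝ) / ((ball X n).ncard : ℝ)
          + (L:ℝ) / ((ball X n).ncard : ℝ) := add_div _ _ _
    _ ≤ (1/2:ℝ)^(n - K) + (2*(2*(q:ℝ)+1)) * δ n := add_le_add hstep1 hstep2
    _ = g n := rfl
end
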